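/- arXiv:1506.08657 — 9 statements merged into one kernel-verified Lean document; each statement's English description precedes it below -/
import Mathlib

section
/- Let {X_k}_{k≥1} be a real-valued martingale-difference sequence with respect to a filtration {F_k}_{k≥0}, and suppose there are constants δ, C > 0 such that E[exp(δ|X_k|) | F_{k-1}] ≤ C almost surely for all k ≥ 1. For each n, let S_n = Σ_{k=1}^{n} α_{k,n} X_k, where each α_{k,n} is a real-valued F_{k-1}-measurable random variable with |α_{k,n}| ≤ A_{k,n} almost surely for deterministic finite A_{k,n} > 0. Suppose there exist constants γ₁, γ₂ > 0 (independent of n) and a positive sequence {β_n} such that Σ_{k=1}^{n} A_{k,n} ≤ γ₁ and max_{1≤k≤n} A_{k,n} ≤ γ₂ β_n for all n. Then there exists a constant c > 0, depending only on δ, C, γ₁, γ₂, such that for every ξ > 0 and every n: P(|S_n| > ξ) ≤ 2 exp(−c ξ² / β_n) if ξ ∈ (0, Cγ₁/δ], and P(|S_n| > ξ) ≤ 2 exp(−c ξ / β_n) otherwise. -/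
open MeasureTheory

universe u

open Filter in
lemma auxExp (u : ℝ) : Real.exp u ≤ 1 + u + u ^ 2 * Real.exp |u| := by
  rcases le_or_gt 0 u with hu | hu
  · rw [abs_of_nonneg hu]
    have h1 : (-u) + 1 ≤ Real.exp (-u) := Real.add_one_le_exp _
    have h2 : Real.exp u * Real.exp (-u) = 1 := by
      rw [← Real.exp_add]; simp
    nlinarith [Real.exp_pos u, Real.exp_pos (-u), sq_nonneg u, sq_nonneg (u - 1)]
  · rw [abs_of_neg hu]
    set v := Real.exp (-u) with hv
    have h1 : 1 - u ≤ v := by have := Real.add_one_le_exp (-u); linarith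
    have h3 : (1 : ℝ) ≤ v := Real.one_le_exp (by linarith)
    have hv0 : 0 < v := Real.exp_pos _
    have h2 : Real.exp u * v = 1 := by rw [hv, ← Real.exp_add]; simp
    have key : 1 ≤ (1 + u + u ^ 2 * v) * v := by
      rcases le_or_gt 0 (1 + u) with h4 | h4
      · have p1 : (1 + u) * (1 - u) ≤ (1 + u) * v := by nlinarith
        have p2 : u ^ 2 * 1 ≤ u ^ 2 * (v * v) := by
          have hvv : (1:ℝ) ≤ v * v := by nlinarith
          have := mul_le_mul_of_nonneg_left hvv (sq_nonneg u)
          linarith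
        nlinarith
      · have q1 : (-u) * (1 - u) ≤ u ^ 2 * v := by nlinarith
        have q2 : (1 : ℝ) + u ^ 2 ≤ u ^ 2 * v + 1 + u := by nlinarith
        nlinarith
    calc Real.exp u = 1 / v := eq_div_of_mul_eq hv0.ne' h2
    _ ≤ 1 + u + u ^ 2 * v := by rw [div_le_iff₀ hv0]; linarith [key]

lemma auxSq {δ x : ℝ} (hδ : 0 < δ) (hx : 0 ≤ x) :
    x ^ 2 ≤ 16 / δ ^ 2 * Real.exp (δ * x / 2) := by
  have h1 : δ * x / 4 + 1 ≤ Real.exp (δ * x / 4) := Real.add_one_le_exp _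
  have h2 : Real.exp (δ * x / 4) * Real.exp (δ * x / 4) = Real.exp (δ * x / 2) := by
    rw [← Real.exp_add]; ring_nf
  have h3 : 0 ≤ δ * x := mul_nonneg hδ.le hx
  have key : (δ * x / 4) ^ 2 ≤ Real.exp (δ * x / 2) := by
    nlinarith [Real.exp_pos (δ * x / 4)]
  have hd2 : 0 < δ ^ 2 := by positivity
  rw [div_mul_eq_mul_div, le_div_iff₀ hd2]
  nlinarith [key]
section Aux

open Filter

variable {Ω : Type u} {m0 : MeasurableSpace Ω} {μ : Measure Ω}

lemma mulIntLe [IsProbabilityMeasure μ] {m : MeasurableSpace Ω} (hm : m ≤ m0)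
    {f g : Ω → ℝ} (hf : StronglyMeasurable[m] f) (hf0 : ∀ ω, 0 ≤ f ω)
    (hfi : Integrable f μ) (hg0 : ∀ ω, 0 ≤ g ω) (hgi : Integrable g μ)
    {B : ℝ} (hB : 0 ≤ B) (hcond : μ[g|m] ≤ᵐ[μ] fun _ => B) :
    Integrable (fun ω => f ω * g ω) μ ∧
      ∫ ω, f ω * g ω ∂μ ≤ B * ∫ ω, f ω ∂μ := by
  set fN : ℕ → Ω → ℝ := fun N ω => min (f ω) N with hfN_def
  have hfNm : ∀ N, StronglyMeasurable[m] (fN N) := fun N => hf.inf stronglyMeasurable_const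
  have hfN0 : ∀ N ω, 0 ≤ fN N ω := fun N ω => le_min (hf0 ω) (Nat.cast_nonneg N)
  have hfNle : ∀ N ω, fN N ω ≤ f ω := fun N ω => min_le_left _ _
  have hfNi : ∀ N, Integrable (fN N) μ := by
    intro N
    refine hfi.mono ((hfNm N).mono hm).aestronglyMeasurable (Eventually.of_forall fun ω => ?_)
    rw [Real.norm_eq_abs, Real.norm_eq_abs, abs_of_nonneg (hfN0 N ω), abs_of_nonneg (hf0 ω)]
    exact hfNle N ω
  have hfNgi : ∀ N, Integrable (fN N * g) μ := by
    intro N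
    refine (hgi.const_mul (N : ℝ)).mono
      (((hfNm N).mono hm).aestronglyMeasurable.mul hgi.aestronglyMeasurable)
      (Eventually.of_forall fun ω => ?_)
    simp only [Pi.mul_apply, Real.norm_eq_abs]
    rw [abs_of_nonneg (mul_nonneg (hfN0 N ω) (hg0 ω)), abs_of_nonneg
      (mul_nonneg (Nat.cast_nonneg N) (hg0 ω))]
    exact mul_le_mul_of_nonneg_right (min_le_right _ _) (hg0 ω)
  have hstep : ∀ N, ∫ ω, (fN N * g) ω ∂μ ≤ B * ∫ ω, f ω ∂μ := by
    intro N
    have e1 : ∫ ω, (fN N * g) ω ∂μ = ∫ ω, (μ[fN N * g|m]) ω ∂μ :=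
      (integral_condExp hm).symm
    have e2 : μ[fN N * g|m] =ᵐ[μ] fN N * μ[g|m] :=
      condExp_mul_of_stronglyMeasurable_left (hfNm N) (hfNgi N) hgi
    have hcint : Integrable (fN N * μ[g|m]) μ := by
      refine Integrable.bdd_mul (c := N) integrable_condExp
        ((hfNm N).mono hm).aestronglyMeasurable (Eventually.of_forall fun ω => ?_)
      rw [Real.norm_eq_abs, abs_of_nonneg (hfN0 N ω)]
      exact min_le_right _ _
    have e3 : ∫ ω, (μ[fN N * g|m]) ω ∂μ = ∫ ω, (fN N * μ[g|m]) ω ∂μ :=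
      integral_congr_ae e2
    have e4 : ∫ ω, (fN N * μ[g|m]) ω ∂μ ≤ ∫ ω, B * fN N ω ∂μ := by
      refine integral_mono_ae hcint ((hfNi N).const_mul B) ?_
      filter_upwards [hcond] with ω hω
      simpa [mul_comm] using mul_le_mul_of_nonneg_left hω (hfN0 N ω)
    have e5 : ∫ ω, B * fN N ω ∂μ = B * ∫ ω, fN N ω ∂μ := integral_const_mul B _
    have e6 : ∫ ω, fN N ω ∂μ ≤ ∫ ω, f ω ∂μ :=
      integral_mono (hfNi N) hfi (fun ω => hfNle N ω)
    calc ∫ ω, (fN N * g) ω ∂μ = ∫ ω, (μ[fN N * g|m]) ω ∂μ := e1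
      _ = ∫ ω, (fN N * μ[g|m]) ω ∂μ := e3
      _ ≤ ∫ ω, B * fN N ω ∂μ := e4
      _ = B * ∫ ω, fN N ω ∂μ := e5
      _ ≤ B * ∫ ω, f ω ∂μ := mul_le_mul_of_nonneg_left e6 hB
  -- pass to lintegrals
  have hsup : ∀ ω, (⨆ N : ℕ, ENNReal.ofReal (fN N ω * g ω)) = ENNReal.ofReal (f ω * g ω) := by
    intro ω
    refine le_antisymm (iSup_le fun N => ENNReal.ofReal_le_ofReal
      (mul_le_mul_of_nonneg_right (hfNle N ω) (hg0 ω))) ?_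
    have : fN ⌈f ω⌉₊ ω = f ω := min_eq_left (Nat.le_ceil _)
    exact le_iSup_of_le ⌈f ω⌉₊ (by rw [this])
  have hlin : ∫⁻ ω, ENNReal.ofReal (f ω * g ω) ∂μ ≤ ENNReal.ofReal (B * ∫ ω, f ω ∂μ) := by
    have hmono : ∀ᵐ ω ∂μ, Monotone fun N : ℕ => ENNReal.ofReal (fN N ω * g ω) := by
      refine Eventually.of_forall fun ω N M hNM => ENNReal.ofReal_le_ofReal ?_
      exact mul_le_mul_of_nonneg_right (min_le_min le_rfl (Nat.cast_le.2 hNM)) (hg0 ω)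
    have hameas : ∀ N : ℕ, AEMeasurable (fun ω => ENNReal.ofReal (fN N ω * g ω)) μ :=
      fun N => ENNReal.measurable_ofReal.comp_aemeasurable
        (hfNgi N).aestronglyMeasurable.aemeasurable
    calc ∫⁻ ω, ENNReal.ofReal (f ω * g ω) ∂μ
        = ∫⁻ ω, ⨆ N : ℕ, ENNReal.ofReal (fN N ω * g ω) ∂μ := by
          refine lintegral_congr fun ω => (hsup ω).symm
      _ = ⨆ N : ℕ, ∫⁻ ω, ENNReal.ofReal (fN N ω * g ω) ∂μ := lintegral_iSup' hameas hmono
      _ ≤ ENNReal.ofReal (B * ∫ ω, f ω ∂μ) := by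
          refine iSup_le fun N => ?_
          have e := ofReal_integral_eq_lintegral_ofReal (hfNgi N)
            (Eventually.of_forall fun ω => mul_nonneg (hfN0 N ω) (hg0 ω))
          simp only [Pi.mul_apply] at e
          rw [← e]
          exact ENNReal.ofReal_le_ofReal (hstep N)
  have hint : Integrable (fun ω => f ω * g ω) μ := by
    refine ⟨hfi.aestronglyMeasurable.mul hgi.aestronglyMeasurable, ?_⟩
    rw [hasFiniteIntegral_iff_ofReal (Eventually.of_forall fun ω =>
      mul_nonneg (hf0 ω) (hg0 ω))]
    exact lt_of_le_of_lt hlin (ENNReal.ofReal_lt_top)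
  refine ⟨hint, ?_⟩
  have := ofReal_integral_eq_lintegral_ofReal hint
    (Eventually.of_forall fun ω => mul_nonneg (hf0 ω) (hg0 ω))
  rw [← ENNReal.ofReal_le_ofReal_iff (mul_nonneg hB (integral_nonneg hf0)), this]
  exact hlin

lemma stepBound [IsProbabilityMeasure μ] {m : MeasurableSpace Ω} (hm : m ≤ m0)
    {δ C : ℝ} (hδ : 0 < δ) (hC : 0 ≤ C) {X αf : Ω → ℝ}
    (hXsm : StronglyMeasurable[m0] X) (hXi : Integrable X μ)
    (hX0 : μ[X|m] =ᵐ[μ] 0)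
    (hXe : Integrable (fun ω => Real.exp (δ * |X ω|)) μ)
    (hXC : ∀ᵐ ω ∂μ, (μ[fun ω' => Real.exp (δ * |X ω'|)|m]) ω ≤ C)
    (hαm : StronglyMeasurable[m] αf) {A lam : ℝ} (hA : 0 ≤ A)
    (hαA : ∀ᵐ ω ∂μ, |αf ω| ≤ A) (hlam : 0 ≤ lam) (hlamA : lam * A ≤ δ / 2) :
    Integrable (fun ω => Real.exp (lam * (αf ω * X ω))) μ ∧
      μ[fun ω => Real.exp (lam * (αf ω * X ω))|m] ≤ᵐ[μ]
        fun _ => Real.exp (16 * C / δ ^ 2 * lam ^ 2 * A ^ 2) := by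
  have hαsm : AEStronglyMeasurable[m0] (fun ω => αf ω * X ω) μ :=
    ((hαm.mono hm).mul hXsm).aestronglyMeasurable
  have hesm : AEStronglyMeasurable[m0] (fun ω => Real.exp (lam * (αf ω * X ω))) μ :=
    (Real.continuous_exp.comp_aestronglyMeasurable (hαsm.const_mul lam))
  -- pointwise exponent bound a.e.
  have hub : ∀ᵐ ω ∂μ, lam * (αf ω * X ω) ≤ δ * |X ω| ∧
      |lam * (αf ω * X ω)| ≤ δ / 2 * |X ω| := by
    filter_upwards [hαA] with ω hω
    have h1 : |lam * (αf ω * X ω)| = lam * |αf ω| * |X ω| := by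
      rw [abs_mul, abs_mul, abs_of_nonneg hlam, mul_assoc]
    have h2 : lam * |αf ω| * |X ω| ≤ δ / 2 * |X ω| := by
      have : lam * |αf ω| ≤ δ / 2 := le_trans (by nlinarith [abs_nonneg (αf ω)]) hlamA
      exact mul_le_mul_of_nonneg_right this (abs_nonneg _)
    constructor
    · calc lam * (αf ω * X ω) ≤ |lam * (αf ω * X ω)| := le_abs_self _
        _ ≤ δ / 2 * |X ω| := by rw [h1]; exact h2
        _ ≤ δ * |X ω| := by nlinarith [abs_nonneg (X ω)]
    · rw [h1]; exact h2
  -- integrability of the exponential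
  have hInt : Integrable (fun ω => Real.exp (lam * (αf ω * X ω))) μ := by
    refine hXe.mono hesm ?_
    filter_upwards [hub] with ω hω
    rw [Real.norm_eq_abs, Real.norm_eq_abs, abs_of_nonneg (Real.exp_pos _).le,
      abs_of_nonneg (Real.exp_pos _).le]
    exact Real.exp_le_exp.2 hω.1
  refine ⟨hInt, ?_⟩
  set c : ℝ := 16 / δ ^ 2 * lam ^ 2 * A ^ 2 with hc_def
  have hc0 : 0 ≤ c := by positivity
  -- pointwise domination by an integrable function
  have hpt : ∀ᵐ ω ∂μ, Real.exp (lam * (αf ω * X ω)) ≤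
      1 + lam * (αf ω * X ω) + c * Real.exp (δ * |X ω|) := by
    filter_upwards [hub, hαA] with ω hω hα
    set u := lam * (αf ω * X ω) with hu
    have h0 := auxExp u
    have hE : Real.exp |u| ≤ Real.exp (δ / 2 * |X ω|) := Real.exp_le_exp.2 hω.2
    have hu2 : u ^ 2 ≤ lam ^ 2 * A ^ 2 * X ω ^ 2 := by
      have : u ^ 2 = (lam * |αf ω| * |X ω|) ^ 2 := by
        rw [← sq_abs u, abs_mul, abs_mul, abs_of_nonneg hlam, mul_assoc]
      rw [this, ← sq_abs (X ω)]
      have h3 : 0 ≤ lam * |αf ω| := mul_nonneg hlam (abs_nonneg _)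
      have h5 : (lam * |αf ω|) ^ 2 ≤ (lam * A) ^ 2 :=
        pow_le_pow_left₀ h3 (mul_le_mul_of_nonneg_left hα hlam) 2
      nlinarith [h5, sq_nonneg (|X ω|)]
    have hX2 : X ω ^ 2 ≤ 16 / δ ^ 2 * Real.exp (δ * |X ω| / 2) := by
      rw [← sq_abs (X ω)]; exact auxSq hδ (abs_nonneg _)
    have hprod : u ^ 2 * Real.exp |u| ≤ c * Real.exp (δ * |X ω|) := by
      have e1 : u ^ 2 * Real.exp |u| ≤ (lam ^ 2 * A ^ 2 * X ω ^ 2) * Real.exp (δ / 2 * |X ω|) :=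
        mul_le_mul hu2 hE (Real.exp_pos _).le (by nlinarith [sq_nonneg (X ω), sq_nonneg lam, sq_nonneg A, sq_nonneg (lam*A)])
      have e2 : (lam ^ 2 * A ^ 2 * X ω ^ 2) * Real.exp (δ / 2 * |X ω|) ≤
          (lam ^ 2 * A ^ 2 * (16 / δ ^ 2 * Real.exp (δ * |X ω| / 2))) * Real.exp (δ / 2 * |X ω|) := by
        have := mul_le_mul_of_nonneg_left hX2 (by positivity : (0:ℝ) ≤ lam ^ 2 * A ^ 2)
        exact mul_le_mul_of_nonneg_right this (Real.exp_pos _).le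
      have e3 : (lam ^ 2 * A ^ 2 * (16 / δ ^ 2 * Real.exp (δ * |X ω| / 2))) * Real.exp (δ / 2 * |X ω|)
          = c * Real.exp (δ * |X ω|) := by
        rw [hc_def, show δ * |X ω| = δ * |X ω| / 2 + δ / 2 * |X ω| by ring, Real.exp_add]
        ring
      calc u ^ 2 * Real.exp |u| ≤ _ := e1
        _ ≤ _ := e2
        _ = _ := e3
    calc Real.exp u ≤ 1 + u + u ^ 2 * Real.exp |u| := h0
      _ ≤ 1 + u + c * Real.exp (δ * |X ω|) := by linarith
  -- integrability of pieces
  have hαXi : Integrable (fun ω => αf ω * X ω) μ := by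
    refine (hXi.abs.const_mul A).mono hαsm ?_
    filter_upwards [hαA] with ω hω
    rw [Real.norm_eq_abs, Real.norm_eq_abs, abs_mul]
    exact (mul_le_mul_of_nonneg_right hω (abs_nonneg _)).trans (le_abs_self _)
  have hf2i : Integrable (fun ω => lam * (αf ω * X ω)) μ := hαXi.const_mul lam
  have hf3i : Integrable (fun ω => c * Real.exp (δ * |X ω|)) μ := hXe.const_mul c
  have hGi : Integrable (fun ω => 1 + lam * (αf ω * X ω) + c * Real.exp (δ * |X ω|)) μ :=
    ((integrable_const 1).add hf2i).add hf3i
  have hA1 : μ[fun ω => αf ω * X ω|m] =ᵐ[μ] fun _ => (0 : ℝ) := by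
    have h := condExp_mul_of_stronglyMeasurable_left hαm hαXi hXi
    filter_upwards [h, hX0] with ω h1 h2
    have : (αf * μ[X|m]) ω = αf ω * (μ[X|m]) ω := rfl
    rw [show (fun ω => αf ω * X ω) = αf * X from rfl] at *
    simp only [h1, this, h2, Pi.zero_apply, mul_zero]
  set f2 : Ω → ℝ := fun ω => lam * (αf ω * X ω) with hf2_def
  set f3 : Ω → ℝ := fun ω => c * Real.exp (δ * |X ω|) with hf3_def
  have key : μ[fun ω => Real.exp (lam * (αf ω * X ω))|m] ≤ᵐ[μ]
      μ[(fun _ => (1:ℝ)) + f2 + f3|m] := by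
    refine condExp_mono hInt (((integrable_const 1).add hf2i).add hf3i) ?_
    filter_upwards [hpt] with ω h
    exact h
  have d1 : μ[(fun _ => (1:ℝ)) + f2 + f3|m] =ᵐ[μ]
      μ[(fun _ => (1:ℝ)) + f2|m] + μ[f3|m] :=
    condExp_add ((integrable_const 1).add hf2i) hf3i m
  have d2 : μ[(fun _ => (1:ℝ)) + f2|m] =ᵐ[μ] μ[(fun _ => (1:ℝ))|m] + μ[f2|m] :=
    condExp_add (integrable_const 1) hf2i m
  have d3 : μ[f2|m] =ᵐ[μ] lam • μ[fun ω => αf ω * X ω|m] :=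
    condExp_smul (μ := μ) (m := m) (𝕜 := ℝ) lam (fun ω => αf ω * X ω)
  have d4 : μ[f3|m] =ᵐ[μ] c • μ[fun ω => Real.exp (δ * |X ω|)|m] :=
    condExp_smul (μ := μ) (m := m) (𝕜 := ℝ) c (fun ω => Real.exp (δ * |X ω|))
  have d5 : μ[(fun _ => (1:ℝ))|m] = fun _ => (1:ℝ) := condExp_const hm 1
  have harith : 16 * C / δ ^ 2 * lam ^ 2 * A ^ 2 = c * C := by rw [hc_def]; ring
  filter_upwards [key, d1, d2, d3, d4, hA1, hXC] with ω h1 h2 h3 h4 h5 h6 h7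
  have hce : (μ[fun ω' => Real.exp (δ * |X ω'|)|m]) ω ≤ C := h7
  have e : (μ[(fun _ => (1:ℝ)) + f2 + f3|m]) ω = 1 + lam * 0 + c * (μ[fun ω' => Real.exp (δ * |X ω'|)|m]) ω := by
    rw [h2, Pi.add_apply, h3, Pi.add_apply, d5, h4, h5]
    simp [h6]
  have : (μ[fun ω => Real.exp (lam * (αf ω * X ω))|m]) ω ≤ 1 + c * C := by
    rw [e] at h1
    have := mul_le_mul_of_nonneg_left hce hc0
    linarith
  refine this.trans ?_
  rw [harith]
  have := Real.add_one_le_exp (c * C)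
  linarith

lemma mgfBound {δ C : ℝ} (hδ : 0 < δ) (hC : 0 ≤ C) [IsProbabilityMeasure μ]
    (ℱ : Filtration ℕ m0) (X : ℕ → Ω → ℝ)
    (hXm : ∀ k, StronglyMeasurable[ℱ k] (X k))
    (hXi : ∀ k, Integrable (X k) μ)
    (hX0 : ∀ k : ℕ, 1 ≤ k → μ[X k|ℱ (k - 1)] =ᵐ[μ] 0)
    (hXe : ∀ k : ℕ, 1 ≤ k → Integrable (fun ω => Real.exp (δ * |X k ω|)) μ)
    (hXC : ∀ k : ℕ, 1 ≤ k → ∀ᵐ ω ∂μ,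
      (μ[fun ω' => Real.exp (δ * |X k ω'|)|ℱ (k - 1)]) ω ≤ C)
    (α : ℕ → Ω → ℝ) (A : ℕ → ℝ)
    (hαm : ∀ k, StronglyMeasurable[ℱ (k - 1)] (α k))
    (hA : ∀ k, 0 ≤ A k)
    (hαA : ∀ k, ∀ᵐ ω ∂μ, |α k ω| ≤ A k)
    {lam : ℝ} (hlam : 0 ≤ lam) (n : ℕ)
    (hlamA : ∀ k, 1 ≤ k → k ≤ n → lam * A k ≤ δ / 2) :
    Integrable (fun ω => Real.exp (lam * ∑ k ∈ Finset.Icc 1 n, α k ω * X k ω)) μ ∧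
      ∫ ω, Real.exp (lam * ∑ k ∈ Finset.Icc 1 n, α k ω * X k ω) ∂μ ≤
        Real.exp (16 * C / δ ^ 2 * lam ^ 2 * ∑ k ∈ Finset.Icc 1 n, A k ^ 2) := by
  induction n with
  | zero =>
      simp only [show Finset.Icc 1 0 = (∅ : Finset ℕ) by rfl, Finset.sum_empty, mul_zero,
        Real.exp_zero]
      refine ⟨integrable_const 1, ?_⟩
      simp
  | succ n ih =>
      obtain ⟨ih1, ih2⟩ := ih fun k hk1 hk2 => hlamA k hk1 (hk2.trans (Nat.le_succ n))
      -- strong measurability of the partial sum exponential w.r.t. ℱ n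
      have hSm : StronglyMeasurable[ℱ n] (fun ω => ∑ k ∈ Finset.Icc 1 n, α k ω * X k ω) := by
        refine Finset.stronglyMeasurable_fun_sum _ fun k hk => ?_
        obtain ⟨hk1, hk2⟩ := Finset.mem_Icc.1 hk
        exact ((hαm k).mono (ℱ.mono (by omega))).mul ((hXm k).mono (ℱ.mono hk2))
      have hfm : StronglyMeasurable[ℱ n]
          (fun ω => Real.exp (lam * ∑ k ∈ Finset.Icc 1 n, α k ω * X k ω)) :=
        Real.continuous_exp.comp_stronglyMeasurable (hSm.const_mul lam)
      have hstep := stepBound (μ := μ) (ℱ.le n) hδ hC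
        ((hXm (n+1)).mono (ℱ.le (n+1))) (hXi (n+1))
        (hX0 (n+1) (by omega)) (hXe (n+1) (by omega)) (hXC (n+1) (by omega))
        (hαm (n+1)) (hA (n+1)) (hαA (n+1)) hlam (hlamA (n+1) (by omega) le_rfl)
      have hmul := mulIntLe (μ := μ) (ℱ.le n) hfm
        (fun ω => (Real.exp_pos _).le) ih1 (fun ω => (Real.exp_pos _).le) hstep.1
        (Real.exp_pos _).le hstep.2
      have hfun : ∀ ω, Real.exp (lam * ∑ k ∈ Finset.Icc 1 n, α k ω * X k ω) *
          Real.exp (lam * (α (n+1) ω * X (n+1) ω)) =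
          Real.exp (lam * ∑ k ∈ Finset.Icc 1 (n+1), α k ω * X k ω) := by
        intro ω
        rw [← Real.exp_add, ← Finset.insert_Icc_right_eq_Icc_add_one (by omega : 1 ≤ n + 1),
          Finset.sum_insert (by simp)]
        rw [Real.exp_eq_exp]
        ring
      constructor
      · have := hmul.1
        refine this.congr (Eventually.of_forall fun ω => hfun ω)
      · have h2 := hmul.2
        calc ∫ ω, Real.exp (lam * ∑ k ∈ Finset.Icc 1 (n+1), α k ω * X k ω) ∂μ
            = ∫ ω, Real.exp (lam * ∑ k ∈ Finset.Icc 1 n, α k ω * X k ω) *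
                Real.exp (lam * (α (n+1) ω * X (n+1) ω)) ∂μ := by
              refine integral_congr_ae (Eventually.of_forall fun ω => (hfun ω).symm)
          _ ≤ Real.exp (16 * C / δ ^ 2 * lam ^ 2 * A (n+1) ^ 2) *
                ∫ ω, Real.exp (lam * ∑ k ∈ Finset.Icc 1 n, α k ω * X k ω) ∂μ := h2
          _ ≤ Real.exp (16 * C / δ ^ 2 * lam ^ 2 * A (n+1) ^ 2) *
                Real.exp (16 * C / δ ^ 2 * lam ^ 2 * ∑ k ∈ Finset.Icc 1 n, A k ^ 2) := by
              exact mul_le_mul_of_nonneg_left ih2 (Real.exp_pos _).le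
          _ = Real.exp (16 * C / δ ^ 2 * lam ^ 2 * ∑ k ∈ Finset.Icc 1 (n+1), A k ^ 2) := by
              rw [← Real.exp_add, ← Finset.insert_Icc_right_eq_Icc_add_one (by omega : 1 ≤ n + 1),
                Finset.sum_insert (by simp)]
              rw [Real.exp_eq_exp]
              ring

lemma tailBound {δ C : ℝ} (hδ : 0 < δ) (hC : 0 ≤ C) [IsProbabilityMeasure μ]
    (ℱ : Filtration ℕ m0) (X : ℕ → Ω → ℝ)
    (hXm : ∀ k, StronglyMeasurable[ℱ k] (X k))
    (hXi : ∀ k, Integrable (X k) μ)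
    (hX0 : ∀ k : ℕ, 1 ≤ k → μ[X k|ℱ (k - 1)] =ᵐ[μ] 0)
    (hXe : ∀ k : ℕ, 1 ≤ k → Integrable (fun ω => Real.exp (δ * |X k ω|)) μ)
    (hXC : ∀ k : ℕ, 1 ≤ k → ∀ᵐ ω ∂μ,
      (μ[fun ω' => Real.exp (δ * |X k ω'|)|ℱ (k - 1)]) ω ≤ C)
    (α : ℕ → Ω → ℝ) (A : ℕ → ℝ)
    (hαm : ∀ k, StronglyMeasurable[ℱ (k - 1)] (α k))
    (hA : ∀ k, 0 ≤ A k)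
    (hαA : ∀ k, ∀ᵐ ω ∂μ, |α k ω| ≤ A k)
    {lam : ℝ} (hlam : 0 ≤ lam) (n : ℕ)
    (hlamA : ∀ k, 1 ≤ k → k ≤ n → lam * A k ≤ δ / 2) (ξ : ℝ) :
    μ {ω | ξ ≤ ∑ k ∈ Finset.Icc 1 n, α k ω * X k ω} ≤
      ENNReal.ofReal (Real.exp (-lam * ξ +
        16 * C / δ ^ 2 * lam ^ 2 * ∑ k ∈ Finset.Icc 1 n, A k ^ 2)) := by
  obtain ⟨hint, hbound⟩ := mgfBound hδ hC ℱ X hXm hXi hX0 hXe hXC α A hαm hA hαA hlam n hlamA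
  have h := ProbabilityTheory.measure_ge_le_exp_mul_mgf
    (X := fun ω => ∑ k ∈ Finset.Icc 1 n, α k ω * X k ω) (μ := μ) ξ hlam hint
  have hmgf : ProbabilityTheory.mgf (fun ω => ∑ k ∈ Finset.Icc 1 n, α k ω * X k ω) μ lam
      = ∫ ω, Real.exp (lam * ∑ k ∈ Finset.Icc 1 n, α k ω * X k ω) ∂μ := rfl
  rw [hmgf] at h
  have h2 : (μ {ω | ξ ≤ ∑ k ∈ Finset.Icc 1 n, α k ω * X k ω}).toReal ≤
      Real.exp (-lam * ξ + 16 * C / δ ^ 2 * lam ^ 2 * ∑ k ∈ Finset.Icc 1 n, A k ^ 2) := by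
    rw [Real.exp_add]
    refine h.trans ?_
    exact mul_le_mul_of_nonneg_left hbound (Real.exp_pos _).le
  calc μ {ω | ξ ≤ ∑ k ∈ Finset.Icc 1 n, α k ω * X k ω}
      = ENNReal.ofReal (μ {ω | ξ ≤ ∑ k ∈ Finset.Icc 1 n, α k ω * X k ω}).toReal :=
        (ENNReal.ofReal_toReal (measure_ne_top μ _)).symm
    _ ≤ _ := ENNReal.ofReal_le_ofReal h2

end Aux

set_option maxHeartbeats 1000000 in
/-- Univariate concentration inequality for a sum of martingale-differences
(Theorem "ConcMartingales"). Given δ, C, γ₁, γ₂ > 0, there is a constant c > 0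
depending only on δ, C, γ₁, γ₂ such that: for any probability space, filtration {F_k},
martingale-difference sequence {X_k} with E[exp(δ|X_k|)|F_{k-1}] ≤ C a.s., and
S_n = Σ_{k=1}^n α_{k,n} X_k with α_{k,n} F_{k-1}-measurable, |α_{k,n}| ≤ A_{k,n} a.s.,
A_{k,n} > 0 deterministic, Σ_{k=1}^n A_{k,n} ≤ γ₁ and max_{1≤k≤n} A_{k,n} ≤ γ₂ β_n with
β_n > 0, one has for all ξ > 0 and all n:
P(|S_n| > ξ) ≤ 2 exp(−c ξ²/β_n) if ξ ≤ Cγ₁/δ, and P(|S_n| > ξ) ≤ 2 exp(−c ξ/β_n)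
otherwise. -/
theorem stmt0 (δ C γ₁ γ₂ : ℝ) (hδ : 0 < δ) (hC : 0 < C)
    (hγ₁ : 0 < γ₁) (hγ₂ : 0 < γ₂) :
    ∃ c : ℝ, 0 < c ∧
      ∀ (Ω : Type u) (m0 : MeasurableSpace Ω) (μ : Measure Ω),
        IsProbabilityMeasure μ →
        ∀ (ℱ : Filtration ℕ m0) (X : ℕ → Ω → ℝ) (α : ℕ → ℕ → Ω → ℝ)
          (A : ℕ → ℕ → ℝ) (β : ℕ → ℝ),
        (∀ k, StronglyMeasurable[ℱ k] (X k)) →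
        (∀ k, Integrable (X k) μ) →
        (∀ k : ℕ, 1 ≤ k → μ[X k|ℱ (k - 1)] =ᵐ[μ] 0) →
        (∀ k : ℕ, 1 ≤ k → Integrable (fun ω => Real.exp (δ * |X k ω|)) μ) →
        (∀ k : ℕ, 1 ≤ k → ∀ᵐ ω ∂μ,
          (μ[fun ω' => Real.exp (δ * |X k ω'|)|ℱ (k - 1)]) ω ≤ C) →
        (∀ k n : ℕ, StronglyMeasurable[ℱ (k - 1)] (α k n)) →
        (∀ k n : ℕ, 0 < A k n) →
        (∀ k n : ℕ, ∀ᵐ ω ∂μ, |α k n ω| ≤ A k n) →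
        (∀ n : ℕ, ∑ k ∈ Finset.Icc 1 n, A k n ≤ γ₁) →
        (∀ n : ℕ, 0 < β n) →
        (∀ n k : ℕ, 1 ≤ k → k ≤ n → A k n ≤ γ₂ * β n) →
        ∀ (n : ℕ) (ξ : ℝ), 0 < ξ →
          (ξ ≤ C * γ₁ / δ →
            μ {ω | ξ < |∑ k ∈ Finset.Icc 1 n, α k n ω * X k ω|} ≤
              ENNReal.ofReal (2 * Real.exp (-(c * ξ ^ 2) / β n))) ∧
          (C * γ₁ / δ < ξ →
            μ {ω | ξ < |∑ k ∈ Finset.Icc 1 n, α k n ω * X k ω|} ≤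
              ENNReal.ofReal (2 * Real.exp (-(c * ξ) / β n))) := by
  set D : ℝ := 16 * C / δ ^ 2 * γ₁ * γ₂ with hD_def
  have hD : 0 < D := by positivity
  refine ⟨min (1 / (4 * D)) (min (C * γ₁ / (4 * D * δ)) (δ / (4 * γ₂))), by positivity, ?_⟩
  set c : ℝ := min (1 / (4 * D)) (min (C * γ₁ / (4 * D * δ)) (δ / (4 * γ₂))) with hc_def
  have hc1 : c ≤ 1 / (4 * D) := min_le_left _ _
  have hc2 : c ≤ C * γ₁ / (4 * D * δ) := le_trans (min_le_right _ _) (min_le_left _ _)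
  have hc3 : c ≤ δ / (4 * γ₂) := le_trans (min_le_right _ _) (min_le_right _ _)
  intro Ω m0 μ hprob ℱ X α A β hXm hXi hX0 hXe hXC hαm hApos hαA hsum hβ hAβ n ξ hξ
  haveI := hprob
  set b : ℝ := β n with hb_def
  have hb : 0 < b := hβ n
  set S : Ω → ℝ := fun ω => ∑ k ∈ Finset.Icc 1 n, α k n ω * X k ω with hS_def
  -- sum of squares bound
  have hA2 : ∑ k ∈ Finset.Icc 1 n, A k n ^ 2 ≤ γ₁ * (γ₂ * b) := by
    calc ∑ k ∈ Finset.Icc 1 n, A k n ^ 2 ≤ ∑ k ∈ Finset.Icc 1 n, γ₂ * b * A k n := by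
          refine Finset.sum_le_sum fun k hk => ?_
          obtain ⟨hk1, hk2⟩ := Finset.mem_Icc.1 hk
          have := hAβ n k hk1 hk2
          nlinarith [(hApos k n).le]
      _ = γ₂ * b * ∑ k ∈ Finset.Icc 1 n, A k n := by rw [Finset.mul_sum]
      _ ≤ γ₂ * b * γ₁ := by
          refine mul_le_mul_of_nonneg_left (hsum n) (by positivity)
      _ = γ₁ * (γ₂ * b) := by ring
  -- the key two-sided bound for an admissible lam
  have key : ∀ lam : ℝ, 0 ≤ lam → (∀ k, 1 ≤ k → k ≤ n → lam * A k n ≤ δ / 2) →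
      μ {ω | ξ < |S ω|} ≤ ENNReal.ofReal (2 * Real.exp (-lam * ξ + D * b * lam ^ 2)) := by
    intro lam hlam hlamA
    have t1 := tailBound hδ hC.le ℱ X hXm hXi hX0 hXe hXC (fun k => α k n) (fun k => A k n)
      (fun k => hαm k n) (fun k => (hApos k n).le) (fun k => hαA k n) hlam n hlamA ξ
    have t2 := tailBound hδ hC.le ℱ X hXm hXi hX0 hXe hXC (fun k => (fun ω => -(α k n ω)))
      (fun k => A k n) (fun k => (hαm k n).neg) (fun k => (hApos k n).le)
      (fun k => by filter_upwards [hαA k n] with ω h; simpa using h) hlam n hlamA ξ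
    have hsetneg : {ω | ξ ≤ ∑ k ∈ Finset.Icc 1 n, -(α k n ω) * X k ω} = {ω | ξ ≤ -S ω} := by
      ext ω
      simp [hS_def, neg_mul, Finset.sum_neg_distrib]
    rw [hsetneg] at t2
    have hsub : {ω | ξ < |S ω|} ⊆ {ω | ξ ≤ S ω} ∪ {ω | ξ ≤ -S ω} := by
      intro ω hω
      simp only [Set.mem_setOf_eq] at hω ⊢
      rcases abs_cases (S ω) with ⟨h1, _⟩ | ⟨h1, _⟩
      · left; rw [h1] at hω; exact hω.le
      · right; rw [h1] at hω; exact hω.le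
    have hE : Real.exp (-lam * ξ + 16 * C / δ ^ 2 * lam ^ 2 * ∑ k ∈ Finset.Icc 1 n, A k n ^ 2)
        ≤ Real.exp (-lam * ξ + D * b * lam ^ 2) := by
      refine Real.exp_le_exp.2 ?_
      have h1 : 16 * C / δ ^ 2 * lam ^ 2 * ∑ k ∈ Finset.Icc 1 n, A k n ^ 2 ≤
          16 * C / δ ^ 2 * lam ^ 2 * (γ₁ * (γ₂ * b)) :=
        mul_le_mul_of_nonneg_left hA2 (by positivity)
      have h2 : 16 * C / δ ^ 2 * lam ^ 2 * (γ₁ * (γ₂ * b)) = D * b * lam ^ 2 := by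
        rw [hD_def]; ring
      linarith
    calc μ {ω | ξ < |S ω|} ≤ μ ({ω | ξ ≤ S ω} ∪ {ω | ξ ≤ -S ω}) := measure_mono hsub
      _ ≤ μ {ω | ξ ≤ S ω} + μ {ω | ξ ≤ -S ω} := measure_union_le _ _
      _ ≤ ENNReal.ofReal (Real.exp (-lam * ξ + D * b * lam ^ 2)) +
          ENNReal.ofReal (Real.exp (-lam * ξ + D * b * lam ^ 2)) := by
          exact add_le_add (t1.trans (ENNReal.ofReal_le_ofReal hE))
            (t2.trans (ENNReal.ofReal_le_ofReal hE))
      _ = ENNReal.ofReal (2 * Real.exp (-lam * ξ + D * b * lam ^ 2)) := by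
          rw [← ENNReal.ofReal_add (Real.exp_pos _).le (Real.exp_pos _).le]
          congr 1; ring
  have hδD : δ * D = 16 * C * γ₁ * γ₂ / δ := by rw [hD_def]; field_simp [hδ.ne']
  have hadm : ∀ lam : ℝ, 0 ≤ lam → lam * (γ₂ * b) ≤ δ / 2 →
      ∀ k, 1 ≤ k → k ≤ n → lam * A k n ≤ δ / 2 := by
    intro lam hlam h2 k hk1 hk2
    exact (mul_le_mul_of_nonneg_left (hAβ n k hk1 hk2) hlam).trans h2
  have case_quad : ∀ lam : ℝ, lam = ξ / (2 * D * b) → ξ ≤ 16 * C * γ₁ / δ →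
      μ {ω | ξ < |S ω|} ≤ ENNReal.ofReal (2 * Real.exp (-(ξ ^ 2 / (4 * D * b)))) := by
    intro lam hlam_def hξ16
    have hlam0 : 0 < lam := by rw [hlam_def]; positivity
    have hγb : lam * (γ₂ * b) ≤ δ / 2 := by
      have he : lam * (γ₂ * b) = ξ * γ₂ / (2 * D) := by
        rw [hlam_def]; field_simp [hD.ne', hb.ne']
      rw [he, div_le_div_iff₀ (by positivity) (by norm_num : (0:ℝ) < 2)]
      have h1 : ξ * γ₂ ≤ (16 * C * γ₁ / δ) * γ₂ := mul_le_mul_of_nonneg_right hξ16 hγ₂.le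
      have h2 : (16 * C * γ₁ / δ) * γ₂ = δ * D := by rw [hδD]; ring
      nlinarith
    have hexp : -lam * ξ + D * b * lam ^ 2 = -(ξ ^ 2 / (4 * D * b)) := by
      rw [hlam_def]; field_simp [hD.ne', hb.ne']; ring
    have := key lam hlam0.le (hadm lam hlam0.le hγb)
    rwa [hexp] at this
  constructor
  · -- small ξ : quadratic regime
    intro hξle
    have hξ16 : ξ ≤ 16 * C * γ₁ / δ := by
      refine hξle.trans ?_
      rw [div_le_div_iff₀ hδ hδ]
      nlinarith [mul_pos hC hγ₁]
    refine (case_quad _ rfl hξ16).trans (ENNReal.ofReal_le_ofReal ?_)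
    have hexp2 : -(ξ ^ 2 / (4 * D * b)) ≤ -(c * ξ ^ 2) / b := by
      rw [neg_div, neg_le_neg_iff, div_le_div_iff₀ hb (by positivity)]
      have hc1' : c * (4 * D) ≤ 1 := (le_div_iff₀ (by positivity)).1 hc1
      nlinarith [mul_le_mul_of_nonneg_right hc1' (mul_nonneg (sq_nonneg ξ) hb.le)]
    linarith [Real.exp_le_exp.2 hexp2]
  · -- large ξ : linear regime
    intro hξgt
    have hCγξ : C * γ₁ < ξ * δ := by
      have := (div_lt_iff₀ hδ).1 hξgt
      linarith
    rcases le_or_gt ξ (16 * C * γ₁ / δ) with hξ16 | hξ16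
    · refine (case_quad _ rfl hξ16).trans (ENNReal.ofReal_le_ofReal ?_)
      have hexp2 : -(ξ ^ 2 / (4 * D * b)) ≤ -(c * ξ) / b := by
        rw [neg_div, neg_le_neg_iff, div_le_div_iff₀ hb (by positivity)]
        have hc2' : c * (4 * D * δ) ≤ C * γ₁ := (le_div_iff₀ (by positivity)).1 hc2
        have h3 : c * (4 * D) ≤ ξ := by nlinarith
        nlinarith [mul_nonneg hξ.le hb.le, mul_pos hD hb]
      linarith [Real.exp_le_exp.2 hexp2]
    · -- boundary lam
      set lam : ℝ := δ / (2 * γ₂ * b) with hlam_def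
      have hlam0 : 0 < lam := by positivity
      have hγb : lam * (γ₂ * b) ≤ δ / 2 := by
        rw [hlam_def]
        rw [show δ / (2 * γ₂ * b) * (γ₂ * b) = δ / 2 by field_simp [hγ₂.ne', hb.ne']]
      have hDd : D * δ ^ 2 / (4 * γ₂) = 4 * C * γ₁ := by
        rw [hD_def]; field_simp [hδ.ne', hγ₂.ne']; ring
      have hexp : -lam * ξ + D * b * lam ^ 2 =
          (-(δ * ξ) / 2 + D * δ ^ 2 / (4 * γ₂)) / (γ₂ * b) := by
        rw [hlam_def]; field_simp [hγ₂.ne', hb.ne']; ring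
      have h16 : 16 * C * γ₁ < ξ * δ := by
        have := (div_lt_iff₀ hδ).1 hξ16
        linarith
      refine (key lam hlam0.le (hadm lam hlam0.le hγb)).trans (ENNReal.ofReal_le_ofReal ?_)
      have hexp2 : -lam * ξ + D * b * lam ^ 2 ≤ -(c * ξ) / b := by
        rw [hexp, hDd]
        have hnum : -(δ * ξ) / 2 + 4 * C * γ₁ ≤ -(δ * ξ) / 4 := by linarith
        calc (-(δ * ξ) / 2 + 4 * C * γ₁) / (γ₂ * b) ≤
            (-(δ * ξ) / 4) / (γ₂ * b) :=
              (div_le_div_iff_of_pos_right (by positivity)).2 hnum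
          _ ≤ -(c * ξ) / b := by
              rw [div_le_div_iff₀ (by positivity : (0:ℝ) < γ₂ * b) hb]
              have hc3' : c * (4 * γ₂) ≤ δ := (le_div_iff₀ (by positivity)).1 hc3
              nlinarith [mul_nonneg hξ.le hb.le]
      linarith [Real.exp_le_exp.2 hexp2]
end

section
/- Let α be a real-valued random variable with |α| ≤ A almost surely for some constant A > 0, and let X be a real-valued random variable such that αX is integrable with E[αX] = 0 and E[exp(δ|X|)] ≤ C for some constants δ, C > 0. Then for every ω with 0 < ω < 1/A: E[exp(ω α δ X)] ≤ exp(C A² ω² / (1 − A ω)). -/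
/-!
Put `u = A w < 1` and `Y = w α δ X`, so that `|Y| ≤ u δ |X|`. Comparing the exponential series
termwise gives `exp (u s) - 1 - u s ≤ u² (exp s - 1 - s)` for `s ≥ 0`, and since `exp t - t` only
grows with `|t|`, pointwise `exp Y ≤ 1 + Y + u² exp (δ |X|)`. Taking expectations kills the centred
term `Y`, leaving `E[exp Y] ≤ 1 + u² C ≤ 1 + C u² / (1 - u) ≤ exp (C u² / (1 - u))`.
-/

open Nat

namespace Real

lemma exp_mul_sub_one_sub_mul_le {u s : ℝ} (hu0 : 0 ≤ u) (hu1 : u ≤ 1) (hs : 0 ≤ s) :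
    exp (u * s) - 1 - u * s ≤ u ^ 2 * (exp s - 1 - s) := by
  have hexp (x : ℝ) : HasSum (fun n => x ^ n / n !) (exp x) := by
    rw [exp_eq_exp_ℝ]; exact NormedSpace.expSeries_div_hasSum_exp x
  have hus : HasSum (fun n => u ^ n * (s ^ n / n !)) (exp (u * s)) := by
    simpa only [mul_pow, mul_div_assoc] using hexp (u * s)
  have hdiff : HasSum (fun n => (u ^ 2 - u ^ n) * (s ^ n / n !)) (u ^ 2 * exp s - exp (u * s)) := by
    simpa only [← sub_mul] using ((hexp s).mul_left (u ^ 2)).sub hus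
  -- the terms of degree at least two are nonnegative since `u ^ n ≤ u ^ 2` there
  have hlow := sum_le_hasSum (Finset.range 2) (fun n hn => ?_) hdiff
  · simp only [Finset.sum_range_succ, Finset.range_one, Finset.sum_singleton, pow_zero,
      factorial_zero, cast_one, div_one, mul_one, pow_one, factorial_one] at hlow
    nlinarith
  · have hn2 : 2 ≤ n := not_lt.1 (Finset.mem_range.not.1 hn)
    exact mul_nonneg (sub_nonneg.2 (pow_le_pow_of_le_one hu0 hu1 hn2)) (by positivity)

lemma exp_sub_le_exp_abs_sub_abs (t : ℝ) : exp t - t ≤ exp |t| - |t| := by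
  rcases le_or_gt 0 t with ht | ht
  · rw [abs_of_nonneg ht]
  · rw [abs_of_neg ht]
    have := self_le_sinh_iff.2 (neg_nonneg.2 ht.le)
    rw [sinh_eq, neg_neg] at this
    linarith

lemma monotoneOn_exp_sub_self : MonotoneOn (fun x => exp x - x) (Set.Ici 0) := by
  intro a ha b _ hab
  have hb : exp b = exp a * exp (b - a) := by rw [← exp_add, add_sub_cancel]
  have := one_le_exp (Set.mem_Ici.1 ha)
  nlinarith [add_one_le_exp (b - a)]

lemma exp_le_one_add_add_sq_mul_exp {u s t : ℝ} (hu0 : 0 ≤ u) (hu1 : u ≤ 1) (hs : 0 ≤ s)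
    (ht : |t| ≤ u * s) : exp t ≤ 1 + t + u ^ 2 * exp s := by
  have hmono := monotoneOn_exp_sub_self (abs_nonneg t) (mul_nonneg hu0 hs) ht
  have := exp_mul_sub_one_sub_mul_le hu0 hu1 hs
  have := exp_sub_le_exp_abs_sub_abs t
  simp only at hmono
  nlinarith [sq_nonneg u]

end Real

open MeasureTheory

lemma integral_exp_le_one_add_sq_mul_integral_exp {Ω : Type*} {m : MeasurableSpace Ω}
    {μ : Measure Ω} [IsProbabilityMeasure μ] {Y S : Ω → ℝ} {u : ℝ} (hu0 : 0 ≤ u) (hu1 : u ≤ 1)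
    (hY : Integrable Y μ) (hY0 : ∫ ω, Y ω ∂μ = 0) (hS : Integrable (fun ω => Real.exp (S ω)) μ)
    (hS0 : ∀ᵐ ω ∂μ, 0 ≤ S ω) (hYS : ∀ᵐ ω ∂μ, |Y ω| ≤ u * S ω) :
    ∫ ω, Real.exp (Y ω) ∂μ ≤ 1 + u ^ 2 * ∫ ω, Real.exp (S ω) ∂μ := by
  have hg : Integrable (fun ω => 1 + Y ω + u ^ 2 * Real.exp (S ω)) μ :=
    ((integrable_const 1).add hY).add (hS.const_mul _)
  have hbound : ∀ᵐ ω ∂μ, Real.exp (Y ω) ≤ 1 + Y ω + u ^ 2 * Real.exp (S ω) := by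
    filter_upwards [hS0, hYS] with ω h0 h
    exact Real.exp_le_one_add_add_sq_mul_exp hu0 hu1 h0 h
  have hf : Integrable (fun ω => Real.exp (Y ω)) μ := by
    refine hg.mono' (Real.continuous_exp.comp_aestronglyMeasurable hY.aestronglyMeasurable) ?_
    filter_upwards [hbound] with ω h
    rwa [Real.norm_of_nonneg (Real.exp_pos _).le]
  calc ∫ ω, Real.exp (Y ω) ∂μ ≤ ∫ ω, 1 + Y ω + u ^ 2 * Real.exp (S ω) ∂μ :=
        integral_mono_ae hf hg hbound
    _ = 1 + u ^ 2 * ∫ ω, Real.exp (S ω) ∂μ := by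
        rw [integral_add (f := fun ω => 1 + Y ω) ((integrable_const 1).add hY) (hS.const_mul _),
          integral_add (integrable_const 1) hY, integral_const_mul, hY0]
        simp

theorem stmt2_general {Ω : Type*} {m : MeasurableSpace Ω} (μ : Measure Ω)
    [IsProbabilityMeasure μ]
    (α X : Ω → ℝ) (A δ C : ℝ) (hδ : 0 < δ) (hC : 0 < C)
    (hαA : ∀ᵐ ω ∂μ, |α ω| ≤ A)
    (hint : Integrable (fun ω => α ω * X ω) μ)
    (hmean : ∫ ω, α ω * X ω ∂μ = 0)
    (hexpint : Integrable (fun ω => Real.exp (δ * |X ω|)) μ)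
    (hexp : ∫ ω, Real.exp (δ * |X ω|) ∂μ ≤ C)
    (w : ℝ) (hw0 : 0 < w) (hw1 : w < 1 / A) :
    ∫ ω, Real.exp (w * α ω * δ * X ω) ∂μ ≤
      Real.exp (C * A ^ 2 * w ^ 2 / (1 - A * w)) := by
  have hA : 0 < A := one_div_pos.1 (hw0.trans hw1)
  have hu0 : 0 ≤ A * w := (mul_pos hA hw0).le
  have hu1 : A * w < 1 := by rwa [lt_div_iff₀ hA, mul_comm] at hw1
  have hY : (fun ω => w * α ω * δ * X ω) = fun ω => w * δ * (α ω * X ω) := by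
    funext ω; ring
  have hYS : ∀ᵐ ω ∂μ, |w * α ω * δ * X ω| ≤ A * w * (δ * |X ω|) := by
    filter_upwards [hαA] with ω hα
    rw [abs_mul, abs_mul, abs_mul, abs_of_pos hw0, abs_of_pos hδ]
    have := mul_le_mul_of_nonneg_right hα (by positivity : 0 ≤ w * δ * |X ω|)
    linarith
  have hmain := integral_exp_le_one_add_sq_mul_integral_exp hu0 hu1.le
    (hY ▸ hint.const_mul (w * δ)) (by rw [hY, integral_const_mul, hmean, mul_zero]) hexpint
    (ae_of_all _ fun ω => by positivity) hYS
  calc ∫ ω, Real.exp (w * α ω * δ * X ω) ∂μ ≤ 1 + (A * w) ^ 2 * C := hmain.trans (by gcongr)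
    _ = 1 + C * A ^ 2 * w ^ 2 := by ring
    _ ≤ 1 + C * A ^ 2 * w ^ 2 / (1 - A * w) := by
        gcongr
        exact le_div_self (by positivity) (by linarith) (by linarith)
    _ ≤ Real.exp (C * A ^ 2 * w ^ 2 / (1 - A * w)) := by
        linarith [Real.add_one_le_exp (C * A ^ 2 * w ^ 2 / (1 - A * w))]

/-- Let α be a real random variable with |α| ≤ A a.s. (A > 0), and X a real random
variable with αX integrable, E[αX] = 0, and E[exp(δ|X|)] ≤ C for constants δ, C > 0.
Then for every 0 < ω < 1/A: E[exp(ω α δ X)] ≤ exp(C A² ω² / (1 − A ω)). -/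
theorem stmt2 {Ω : Type*} {m : MeasurableSpace Ω} (μ : Measure Ω)
    [IsProbabilityMeasure μ]
    (α X : Ω → ℝ) (A δ C : ℝ) (hA : 0 < A) (hδ : 0 < δ) (hC : 0 < C)
    (hαA : ∀ᵐ ω ∂μ, |α ω| ≤ A)
    (hint : Integrable (fun ω => α ω * X ω) μ)
    (hmean : ∫ ω, α ω * X ω ∂μ = 0)
    (hexpint : Integrable (fun ω => Real.exp (δ * |X ω|)) μ)
    (hexp : ∫ ω, Real.exp (δ * |X ω|) ∂μ ≤ C)
    (w : ℝ) (hw0 : 0 < w) (hw1 : w < 1 / A) :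
    ∫ ω, Real.exp (w * α ω * δ * X ω) ∂μ ≤
      Real.exp (C * A ^ 2 * w ^ 2 / (1 - A * w)) :=
  stmt2_general (m := m) μ α X A δ C hδ hC hαA hint hmean hexpint hexp w hw0 hw1
end

section
/- Let {X_k}_{k≥1} be a real-valued martingale-difference sequence with respect to a filtration {F_k}_{k≥0} with E[exp(δ|X_k|) | F_{k-1}] ≤ C almost surely for all k, for constants δ, C > 0. Let S_n = Σ_{k=1}^{n} α_{k,n} X_k with α_{k,n} F_{k-1}-measurable and |α_{k,n}| ≤ A_{k,n} almost surely, where Σ_{k=1}^{n} A_{k,n} ≤ γ₁ and max_{1≤k≤n} A_{k,n} ≤ γ₂ β_n for constants γ₁, γ₂ > 0 and a positive sequence {β_n}. Then for every n and every ω with 0 < ω < 1/(γ₂ β_n): E[exp(ω δ S_n)] ≤ exp( C γ₁ γ₂ ω² β_n / (1 − γ₂ β_n ω) ). -/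
/-!
If `|u| ≤ a t` with `0 ≤ a < 1` and `t ≥ 0`, comparing the exponential series termwise gives
`e^u ≤ 1 + u + a²/(1-a) e^t`. Take `u = w δ α_{k,n} X_k`, `t = δ |X_k|`, `a = w A_{k,n}` and
integrate against the `F_{k-1}`-measurable weight `exp (w δ S_{k-1})`: the linear term vanishes
because `X_k` is a martingale difference, and the conditional bound `E[e^t | F_{k-1}] ≤ C` controls
the last term. So each step multiplies the exponential moment by at most
`1 + C a²/(1-a) ≤ exp (C a²/(1-a))`, and `a²/(1-a) ≤ a θ/(1-θ)` for `a ≤ θ = γ₂ β_n w` sums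
to the stated exponent.
-/

open MeasureTheory Filter Topology Finset

lemma Real.exp_sub_one_sub_le_of_abs_le {u t a : ℝ} (ht : 0 ≤ t) (ha : 0 ≤ a) (ha1 : a < 1)
    (hu : |u| ≤ a * t) : Real.exp u - 1 - u ≤ a ^ 2 / (1 - a) * Real.exp t := by
  have hs : Summable fun n : ℕ ↦ u ^ n / n.factorial := Real.summable_pow_div_factorial u
  have hgeom : Summable fun n : ℕ ↦ a ^ n * (a ^ 2 * Real.exp t) :=
    (summable_geometric_of_lt_one ha ha1).mul_right _
  have htail : Real.exp u - 1 - u = ∑' n : ℕ, u ^ (n + 2) / (n + 2).factorial := by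
    rw [Real.exp_eq_exp_ℝ, NormedSpace.exp_eq_tsum_div]
    dsimp only
    rw [hs.tsum_eq_zero_add, ((summable_nat_add_iff 1).2 hs).tsum_eq_zero_add]
    simp [Nat.factorial]
  have hterm (n : ℕ) : u ^ (n + 2) / (n + 2).factorial ≤ a ^ n * (a ^ 2 * Real.exp t) := by
    calc u ^ (n + 2) / (n + 2).factorial ≤ (a * t) ^ (n + 2) / (n + 2).factorial := by
          gcongr ?_ / _
          calc u ^ (n + 2) ≤ |u| ^ (n + 2) := abs_pow u (n + 2) ▸ le_abs_self _
            _ ≤ (a * t) ^ (n + 2) := by gcongr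
      _ = a ^ (n + 2) * (t ^ (n + 2) / (n + 2).factorial) := by ring
      _ ≤ a ^ (n + 2) * Real.exp t := by gcongr; exact Real.pow_div_factorial_le_exp _ ht _
      _ = a ^ n * (a ^ 2 * Real.exp t) := by ring
  rw [htail]
  calc ∑' n : ℕ, u ^ (n + 2) / (n + 2).factorial
      ≤ ∑' n : ℕ, a ^ n * (a ^ 2 * Real.exp t) :=
        ((summable_nat_add_iff 2).2 hs).tsum_le_tsum hterm hgeom
    _ = a ^ 2 / (1 - a) * Real.exp t := by
        rw [tsum_mul_right, tsum_geometric_of_lt_one ha ha1]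
        ring

lemma sum_sq_div_one_sub_le {ι : Type*} (s : Finset ι) {a : ι → ℝ} {θ : ℝ}
    (ha0 : ∀ k ∈ s, 0 ≤ a k) (haθ : ∀ k ∈ s, a k ≤ θ) (hθ : θ < 1) :
    ∑ k ∈ s, a k ^ 2 / (1 - a k) ≤ θ / (1 - θ) * ∑ k ∈ s, a k := by
  rw [mul_sum]
  refine sum_le_sum fun k hk ↦ ?_
  have h1 : 0 < 1 - a k := by linarith [haθ k hk]
  rw [div_le_iff₀ h1]
  calc a k ^ 2 = a k * a k := sq _
    _ ≤ a k * (θ / (1 - θ) * (1 - a k)) := by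
        gcongr
        · exact ha0 k hk
        · rw [div_mul_eq_mul_div, le_div_iff₀ (by linarith)]
          nlinarith [ha0 k hk, haθ k hk]
    _ = θ / (1 - θ) * a k * (1 - a k) := by ring

theorem integrable_and_integral_le_of_tendsto_of_monotone {α : Type*} [MeasurableSpace α]
    {μ : Measure α} {f : ℕ → α → ℝ} {F : α → ℝ} {K : ℝ} (hf : ∀ n, Integrable (f n) μ)
    (hf0 : ∀ n, 0 ≤ᵐ[μ] f n) (hmono : ∀ᵐ x ∂μ, Monotone fun n ↦ f n x)
    (htend : ∀ᵐ x ∂μ, Tendsto (fun n ↦ f n x) atTop (𝓝 (F x)))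
    (hK : ∀ n, ∫ x, f n x ∂μ ≤ K) :
    Integrable F μ ∧ ∫ x, F x ∂μ ≤ K := by
  have hF0 : 0 ≤ᵐ[μ] F := by
    filter_upwards [htend, ae_all_iff.2 hf0] with x hx h0
    exact ge_of_tendsto' hx h0
  have hlim : Tendsto (fun n ↦ ∫⁻ x, ENNReal.ofReal (f n x) ∂μ) atTop
      (𝓝 (∫⁻ x, ENNReal.ofReal (F x) ∂μ)) := by
    refine lintegral_tendsto_of_tendsto_of_monotone
      (fun n ↦ (hf n).aemeasurable.ennreal_ofReal) ?_ ?_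
    · filter_upwards [hmono] with x hx n k hnk using ENNReal.ofReal_le_ofReal (hx hnk)
    · filter_upwards [htend] with x hx using (ENNReal.continuous_ofReal.tendsto _).comp hx
  have hlint : ∫⁻ x, ENNReal.ofReal (F x) ∂μ ≤ ENNReal.ofReal K := by
    refine le_of_tendsto' hlim fun n ↦ ?_
    rw [← ofReal_integral_eq_lintegral_ofReal (hf n) (hf0 n)]
    exact ENNReal.ofReal_le_ofReal (hK n)
  have hFi : Integrable F μ :=
    ⟨aestronglyMeasurable_of_tendsto_ae _ (fun n ↦ (hf n).1) htend,
      (hasFiniteIntegral_iff_ofReal hF0).2 (hlint.trans_lt ENNReal.ofReal_lt_top)⟩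
  exact ⟨hFi, le_of_tendsto' (integral_tendsto_of_tendsto_of_monotone hf hFi hmono htend) hK⟩

section CondExp

variable {Ω : Type*} {m m0 : MeasurableSpace Ω} {μ : Measure[m0] Ω} [IsFiniteMeasure μ]

theorem integral_mul_eq_zero_of_condExp_eq_zero (hm : m ≤ m0) {f g : Ω → ℝ}
    (hf : StronglyMeasurable[m] f) (hg : Integrable g μ) (hfg : Integrable (f * g) μ)
    (hg0 : μ[g|m] =ᵐ[μ] 0) : ∫ ω, f ω * g ω ∂μ = 0 := by
  change ∫ ω, (f * g) ω ∂μ = 0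
  rw [← integral_condExp hm]
  refine integral_eq_zero_of_ae ?_
  filter_upwards [condExp_mul_of_stronglyMeasurable_left hf hfg hg, hg0] with ω h1 h2
  rw [h1, Pi.mul_apply, h2, Pi.zero_apply, mul_zero]

theorem integrable_mul_and_integral_mul_le_of_condExp_le_of_bdd (hm : m ≤ m0) {f h : Ω → ℝ}
    {C N : ℝ} (hf : StronglyMeasurable[m] f) (hf0 : 0 ≤ f) (hfN : ∀ ω, f ω ≤ N)
    (hh : Integrable h μ) (hhC : ∀ᵐ ω ∂μ, μ[h|m] ω ≤ C) :
    Integrable (f * h) μ ∧ ∫ ω, f ω * h ω ∂μ ≤ C * ∫ ω, f ω ∂μ := by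
  have hfb : ∀ ω, ‖f ω‖ ≤ N := fun ω ↦ by rw [Real.norm_of_nonneg (hf0 ω)]; exact hfN ω
  have hfi : Integrable f μ := (integrable_const N).mono' (hf.mono hm).aestronglyMeasurable
    (ae_of_all _ hfb)
  have hfh : Integrable (f * h) μ := hh.bdd_mul (hf.mono hm).aestronglyMeasurable (ae_of_all _ hfb)
  refine ⟨hfh, ?_⟩
  calc ∫ ω, f ω * h ω ∂μ = ∫ ω, μ[f * h|m] ω ∂μ := (integral_condExp hm).symm
    _ = ∫ ω, f ω * μ[h|m] ω ∂μ :=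
        integral_congr_ae (condExp_mul_of_stronglyMeasurable_left hf hfh hh)
    _ ≤ ∫ ω, C * f ω ∂μ := by
        refine integral_mono_ae (integrable_condExp.bdd_mul (hf.mono hm).aestronglyMeasurable
          (ae_of_all _ hfb)) (hfi.const_mul C) ?_
        filter_upwards [hhC] with ω hω
        rw [mul_comm C]
        exact mul_le_mul_of_nonneg_left hω (hf0 ω)
    _ = C * ∫ ω, f ω ∂μ := integral_const_mul C _

theorem integrable_mul_and_integral_mul_le_of_condExp_le (hm : m ≤ m0) {f h : Ω → ℝ} {C : ℝ}
    (hC : 0 ≤ C) (hf : StronglyMeasurable[m] f) (hf0 : 0 ≤ f) (hfi : Integrable f μ)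
    (hh0 : 0 ≤ h) (hh : Integrable h μ) (hhC : ∀ᵐ ω ∂μ, μ[h|m] ω ≤ C) :
    Integrable (f * h) μ ∧ ∫ ω, f ω * h ω ∂μ ≤ C * ∫ ω, f ω ∂μ := by
  -- `f * h` is not yet known to be integrable: truncate `f` at level `N` and let `N → ∞`
  let fN (N : ℕ) (ω : Ω) : ℝ := min (f ω) N
  have hfN0 (N : ℕ) : 0 ≤ fN N := fun ω ↦ le_min (hf0 ω) N.cast_nonneg
  have hfNm (N : ℕ) : StronglyMeasurable[m] (fN N) :=
    (continuous_id.min continuous_const).comp_stronglyMeasurable hf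
  have hbdd (N : ℕ) := integrable_mul_and_integral_mul_le_of_condExp_le_of_bdd hm (hfNm N)
    (hfN0 N) (fun ω ↦ min_le_right _ _) hh hhC
  refine integrable_and_integral_le_of_tendsto_of_monotone (fun N ↦ (hbdd N).1)
    (fun N ↦ ae_of_all _ fun ω ↦ mul_nonneg (hfN0 N ω) (hh0 ω))
    (ae_of_all _ fun ω N M hNM ↦ ?_) (ae_of_all _ fun ω ↦ ?_) fun N ↦ ?_
  · exact mul_le_mul_of_nonneg_right (min_le_min_left _ (Nat.cast_le.2 hNM)) (hh0 ω)
  · refine tendsto_atTop_of_eventually_const (i₀ := ⌈f ω⌉₊) fun N hN ↦ ?_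
    simp only [Pi.mul_apply, fN, min_eq_left ((Nat.le_ceil _).trans (Nat.cast_le.2 hN))]
  · refine (hbdd N).2.trans (mul_le_mul_of_nonneg_left ?_ hC)
    exact integral_mono_of_nonneg (ae_of_all _ (hfN0 N)) hfi
      (ae_of_all _ fun ω ↦ min_le_left _ _)

theorem integrable_and_integral_mul_exp_mul_le (hm : m ≤ m0) {f g X t : Ω → ℝ} {a C : ℝ}
    (hC : 0 ≤ C) (ha0 : 0 ≤ a) (ha1 : a < 1) (hf : StronglyMeasurable[m] f) (hf0 : 0 ≤ f)
    (hfi : Integrable f μ) (hg : StronglyMeasurable[m] g) (hX : Integrable X μ)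
    (hX0 : μ[X|m] =ᵐ[μ] 0) (ht0 : 0 ≤ t) (hti : Integrable (fun ω ↦ Real.exp (t ω)) μ)
    (htC : ∀ᵐ ω ∂μ, μ[fun ω ↦ Real.exp (t ω)|m] ω ≤ C)
    (hgX : ∀ᵐ ω ∂μ, |g ω * X ω| ≤ a * t ω) :
    Integrable (fun ω ↦ f ω * Real.exp (g ω * X ω)) μ ∧
      ∫ ω, f ω * Real.exp (g ω * X ω) ∂μ ≤ Real.exp (C * (a ^ 2 / (1 - a))) * ∫ ω, f ω ∂μ := by
  set c := a ^ 2 / (1 - a)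
  have hc : 0 ≤ c := div_nonneg (sq_nonneg a) (by linarith)
  obtain ⟨hfe, hfeC⟩ : Integrable (fun ω ↦ f ω * Real.exp (t ω)) μ ∧ _ :=
    integrable_mul_and_integral_mul_le_of_condExp_le hm hC hf hf0 hfi
      (fun ω ↦ (Real.exp_pos (t ω)).le) hti htC
  have hfm : AEStronglyMeasurable f μ := (hf.mono hm).aestronglyMeasurable
  have hfgX_meas : AEStronglyMeasurable (fun ω ↦ f ω * g ω * X ω) μ :=
    (hfm.mul (hg.mono hm).aestronglyMeasurable).mul hX.1
  have hfgX : Integrable (fun ω ↦ f ω * g ω * X ω) μ := by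
    refine (hfe.const_mul a).mono' hfgX_meas ?_
    filter_upwards [hgX] with ω hω
    have ht : t ω ≤ Real.exp (t ω) := by linarith [Real.add_one_le_exp (t ω)]
    rw [mul_assoc, norm_mul, Real.norm_of_nonneg (hf0 ω), Real.norm_eq_abs]
    calc f ω * |g ω * X ω| ≤ f ω * (a * Real.exp (t ω)) := by
          gcongr
          · exact hf0 ω
          · exact hω.trans (by gcongr)
      _ = a * (f ω * Real.exp (t ω)) := by ring
  have hzero : ∫ ω, f ω * g ω * X ω ∂μ = 0 :=
    integral_mul_eq_zero_of_condExp_eq_zero hm (hf.mul hg) hX hfgX hX0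
  have hbound : ∀ᵐ ω ∂μ, f ω * Real.exp (g ω * X ω) ≤
      f ω + f ω * g ω * X ω + c * (f ω * Real.exp (t ω)) := by
    filter_upwards [hgX] with ω hω
    have := Real.exp_sub_one_sub_le_of_abs_le (ht0 ω) ha0 ha1 hω
    have := mul_le_mul_of_nonneg_left this (hf0 ω)
    linarith
  have hf_add_fgX : Integrable (fun ω ↦ f ω + f ω * g ω * X ω) μ := hfi.add hfgX
  have hrhs : Integrable (fun ω ↦ f ω + f ω * g ω * X ω + c * (f ω * Real.exp (t ω))) μ :=
    hf_add_fgX.add (hfe.const_mul c)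
  have hlhs : Integrable (fun ω ↦ f ω * Real.exp (g ω * X ω)) μ := by
    refine hrhs.mono' (hfm.mul (Real.continuous_exp.comp_aestronglyMeasurable
      ((hg.mono hm).aestronglyMeasurable.mul hX.1))) ?_
    filter_upwards [hbound] with ω hω
    rwa [Real.norm_of_nonneg (mul_nonneg (hf0 ω) (Real.exp_pos _).le)]
  refine ⟨hlhs, ?_⟩
  calc ∫ ω, f ω * Real.exp (g ω * X ω) ∂μ
      ≤ ∫ ω, f ω + f ω * g ω * X ω + c * (f ω * Real.exp (t ω)) ∂μ :=
        integral_mono_ae hlhs hrhs hbound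
    _ = ∫ ω, f ω ∂μ + c * ∫ ω, f ω * Real.exp (t ω) ∂μ := by
        rw [integral_add hf_add_fgX (hfe.const_mul c), integral_add hfi hfgX, hzero,
          integral_const_mul, add_zero]
    _ ≤ ∫ ω, f ω ∂μ + c * (C * ∫ ω, f ω ∂μ) := by gcongr
    _ = (C * c + 1) * ∫ ω, f ω ∂μ := by ring
    _ ≤ Real.exp (C * c) * ∫ ω, f ω ∂μ := by
        gcongr
        · exact integral_nonneg hf0
        · exact Real.add_one_le_exp _

end CondExp

theorem integrable_and_integral_exp_sum_le {Ω : Type*} {m0 : MeasurableSpace Ω}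
    {μ : Measure Ω} [IsProbabilityMeasure μ] {ℱ : Filtration ℕ m0} {g X t : ℕ → Ω → ℝ}
    {a : ℕ → ℝ} {C : ℝ} (hC : 0 ≤ C) (hg : ∀ k, StronglyMeasurable[ℱ (k - 1)] (g k))
    (hX : ∀ k, StronglyMeasurable[ℱ k] (X k)) (hXi : ∀ k, Integrable (X k) μ)
    (hmds : ∀ k, 1 ≤ k → μ[X k|ℱ (k - 1)] =ᵐ[μ] 0) (ht0 : ∀ k, 0 ≤ t k)
    (hti : ∀ k, 1 ≤ k → Integrable (fun ω ↦ Real.exp (t k ω)) μ)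
    (htC : ∀ k, 1 ≤ k → ∀ᵐ ω ∂μ, μ[fun ω ↦ Real.exp (t k ω)|ℱ (k - 1)] ω ≤ C)
    (ha0 : ∀ k, 0 ≤ a k) (hgX : ∀ k, 1 ≤ k → ∀ᵐ ω ∂μ, |g k ω * X k ω| ≤ a k * t k ω)
    (n : ℕ) (ha1 : ∀ k ∈ Icc 1 n, a k < 1) :
    Integrable (fun ω ↦ Real.exp (∑ k ∈ Icc 1 n, g k ω * X k ω)) μ ∧
      ∫ ω, Real.exp (∑ k ∈ Icc 1 n, g k ω * X k ω) ∂μ ≤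
        Real.exp (C * ∑ k ∈ Icc 1 n, a k ^ 2 / (1 - a k)) := by
  induction n with
  | zero => simp
  | succ j ih =>
    have hj : 1 ≤ j + 1 := Nat.le_add_left 1 j
    obtain ⟨hint, hle⟩ := ih fun k hk ↦ ha1 k (Icc_subset_Icc_right j.le_succ hk)
    have hsum : StronglyMeasurable[ℱ j] fun ω ↦ ∑ k ∈ Icc 1 j, g k ω * X k ω := by
      refine Finset.stronglyMeasurable_fun_sum _ fun k hk ↦ ?_
      have hkj := (mem_Icc.1 hk).2
      exact ((hg k).mono (ℱ.mono (by omega))).mul ((hX k).mono (ℱ.mono hkj))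
    obtain ⟨hint_succ, hle_succ⟩ := integrable_and_integral_mul_exp_mul_le (ℱ.le j) hC (ha0 _)
      (ha1 _ (by simp)) (Real.continuous_exp.comp_stronglyMeasurable hsum)
      (fun ω ↦ (Real.exp_pos _).le) hint (hg (j + 1)) (hXi _) (hmds _ hj) (ht0 _)
      (hti _ hj) (htC _ hj) (hgX _ hj)
    simp only [sum_Icc_succ_top hj, Real.exp_add, mul_add]
    refine ⟨hint_succ, hle_succ.trans ?_⟩
    rw [mul_comm (Real.exp _)]
    gcongr

theorem stmt4_general {Ω : Type*} {m0 : MeasurableSpace Ω} (μ : Measure Ω)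
    [IsProbabilityMeasure μ]
    (ℱ : Filtration ℕ m0) (X : ℕ → Ω → ℝ)
    (δ C γ₁ γ₂ : ℝ) (hδ : 0 < δ) (hC : 0 < C)
    (α : ℕ → ℕ → Ω → ℝ) (A : ℕ → ℕ → ℝ) (β : ℕ → ℝ)
    (hadp : ∀ k, StronglyMeasurable[ℱ k] (X k))
    (hint : ∀ k, Integrable (X k) μ)
    (hmds : ∀ k : ℕ, 1 ≤ k → μ[X k|ℱ (k - 1)] =ᵐ[μ] 0)
    (hexpint : ∀ k : ℕ, 1 ≤ k → Integrable (fun ω => Real.exp (δ * |X k ω|)) μ)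
    (hcond : ∀ k : ℕ, 1 ≤ k → ∀ᵐ ω ∂μ,
      (μ[fun ω' => Real.exp (δ * |X k ω'|)|ℱ (k - 1)]) ω ≤ C)
    (hα : ∀ k n : ℕ, StronglyMeasurable[ℱ (k - 1)] (α k n))
    (hA : ∀ k n : ℕ, 0 < A k n)
    (hαA : ∀ k n : ℕ, ∀ᵐ ω ∂μ, |α k n ω| ≤ A k n)
    (hsum : ∀ n : ℕ, ∑ k ∈ Finset.Icc 1 n, A k n ≤ γ₁)
    (hmax : ∀ n k : ℕ, 1 ≤ k → k ≤ n → A k n ≤ γ₂ * β n) :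
    ∀ (n : ℕ) (w : ℝ), 0 < w → w < 1 / (γ₂ * β n) →
      ∫ ω, Real.exp (w * δ * ∑ k ∈ Finset.Icc 1 n, α k n ω * X k ω) ∂μ ≤
        Real.exp (C * γ₁ * γ₂ * w ^ 2 * β n / (1 - γ₂ * β n * w)) := by
  intro n w hw hwβ
  have hγβ : 0 < γ₂ * β n := one_div_pos.1 (hw.trans hwβ)
  set θ := γ₂ * β n * w
  have hθ : θ < 1 := by linarith [(lt_div_iff₀ hγβ).1 hwβ]
  have hwA (k : ℕ) (hk : k ∈ Icc 1 n) : w * A k n ≤ θ := by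
    obtain ⟨hk1, hkn⟩ := mem_Icc.1 hk
    calc w * A k n ≤ w * (γ₂ * β n) := by gcongr; exact hmax n k hk1 hkn
      _ = θ := by ring
  have hαX (k : ℕ) : ∀ᵐ ω ∂μ, |w * δ * α k n ω * X k ω| ≤ w * A k n * (δ * |X k ω|) := by
    filter_upwards [hαA k n] with ω hω
    rw [abs_mul, abs_mul, abs_of_pos (mul_pos hw hδ)]
    calc w * δ * |α k n ω| * |X k ω| ≤ w * δ * A k n * |X k ω| := by gcongr
      _ = w * A k n * (δ * |X k ω|) := by ring
  obtain ⟨-, hbound⟩ := integrable_and_integral_exp_sum_le (a := fun k ↦ w * A k n)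
    (g := fun k ω ↦ w * δ * α k n ω) (t := fun k ω ↦ δ * |X k ω|) hC.le
    (fun k ↦ (hα k n).const_mul _) hadp hint hmds (fun k ω ↦ by positivity) hexpint hcond
    (fun k ↦ (mul_pos hw (hA k n)).le) (fun k _ ↦ hαX k) n fun k hk ↦ (hwA k hk).trans_lt hθ
  calc ∫ ω, Real.exp (w * δ * ∑ k ∈ Icc 1 n, α k n ω * X k ω) ∂μ
      = ∫ ω, Real.exp (∑ k ∈ Icc 1 n, w * δ * α k n ω * X k ω) ∂μ := by
        simp only [mul_sum, mul_assoc]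
    _ ≤ Real.exp (C * ∑ k ∈ Icc 1 n, (w * A k n) ^ 2 / (1 - w * A k n)) := hbound
    _ ≤ Real.exp (C * (θ / (1 - θ) * ∑ k ∈ Icc 1 n, w * A k n)) := by
        gcongr
        exact sum_sq_div_one_sub_le _ (fun k _ ↦ (mul_pos hw (hA k n)).le) hwA hθ
    _ ≤ Real.exp (C * (θ / (1 - θ) * (w * γ₁))) := by
        rw [← mul_sum]
        gcongr
        exact hsum n
    _ = Real.exp (C * γ₁ * γ₂ * w ^ 2 * β n / (1 - γ₂ * β n * w)) := by
        congr 1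
        ring

/-- With {X_k} a real martingale-difference sequence satisfying
E[exp(δ|X_k|)|F_{k-1}] ≤ C a.s., and S_n = Σ_{k=1}^n α_{k,n} X_k with α_{k,n}
F_{k-1}-measurable, |α_{k,n}| ≤ A_{k,n} a.s., Σ_{k=1}^n A_{k,n} ≤ γ₁,
max_{1≤k≤n} A_{k,n} ≤ γ₂ β_n: for every n and 0 < ω < 1/(γ₂ β_n),
E[exp(ω δ S_n)] ≤ exp(C γ₁ γ₂ ω² β_n / (1 − γ₂ β_n ω)). -/
theorem stmt4 {Ω : Type*} {m0 : MeasurableSpace Ω} (μ : Measure Ω)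
    [IsProbabilityMeasure μ]
    (ℱ : Filtration ℕ m0) (X : ℕ → Ω → ℝ)
    (δ C γ₁ γ₂ : ℝ) (hδ : 0 < δ) (hC : 0 < C) (hγ₁ : 0 < γ₁) (hγ₂ : 0 < γ₂)
    (α : ℕ → ℕ → Ω → ℝ) (A : ℕ → ℕ → ℝ) (β : ℕ → ℝ)
    (hadp : ∀ k, StronglyMeasurable[ℱ k] (X k))
    (hint : ∀ k, Integrable (X k) μ)
    (hmds : ∀ k : ℕ, 1 ≤ k → μ[X k|ℱ (k - 1)] =ᵐ[μ] 0)
    (hexpint : ∀ k : ℕ, 1 ≤ k → Integrable (fun ω => Real.exp (δ * |X k ω|)) μ)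
    (hcond : ∀ k : ℕ, 1 ≤ k → ∀ᵐ ω ∂μ,
      (μ[fun ω' => Real.exp (δ * |X k ω'|)|ℱ (k - 1)]) ω ≤ C)
    (hα : ∀ k n : ℕ, StronglyMeasurable[ℱ (k - 1)] (α k n))
    (hA : ∀ k n : ℕ, 0 < A k n)
    (hαA : ∀ k n : ℕ, ∀ᵐ ω ∂μ, |α k n ω| ≤ A k n)
    (hsum : ∀ n : ℕ, ∑ k ∈ Finset.Icc 1 n, A k n ≤ γ₁)
    (hβ : ∀ n : ℕ, 0 < β n)
    (hmax : ∀ n k : ℕ, 1 ≤ k → k ≤ n → A k n ≤ γ₂ * β n) :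
    ∀ (n : ℕ) (w : ℝ), 0 < w → w < 1 / (γ₂ * β n) →
      ∫ ω, Real.exp (w * δ * ∑ k ∈ Finset.Icc 1 n, α k n ω * X k ω) ∂μ ≤
        Real.exp (C * γ₁ * γ₂ * w ^ 2 * β n / (1 - γ₂ * β n * w)) :=
  stmt4_general μ ℱ X δ C γ₁ γ₂ hδ hC α A β hadp hint hmds hexpint hcond hα hA hαA hsum hmax
end

section
/- Let {X_k}_{k≥1} be a real-valued martingale-difference sequence with respect to a filtration {F_k}_{k≥0} with E[exp(δ|X_k|) | F_{k-1}] ≤ C almost surely for all k, for constants δ, C > 0. Let S_n = Σ_{k=1}^{n} α_{k,n} X_k with α_{k,n} F_{k-1}-measurable and |α_{k,n}| ≤ A_{k,n} almost surely, where Σ_{k=1}^{n} A_{k,n} ≤ γ₁ and max_{1≤k≤n} A_{k,n} ≤ γ₂ β_n for constants γ₁, γ₂ > 0 and a positive sequence {β_n}. Then for every n and every ξ > 0: P(S_n > ξ) ≤ exp( −(δ/(γ₂ β_n)) ( √(ξ + Cγ₁/δ) − √(Cγ₁/δ) )² ). -/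
open MeasureTheory

lemma auxP {y z : ℝ} (h : |y| ≤ z) : Real.exp y - y ≤ Real.exp z - z := by
  rcases abs_le.1 h with ⟨h1, h2⟩
  rcases le_or_gt 0 y with hy | hy
  · have e1 : Real.exp z = Real.exp y * Real.exp (z - y) := by
      rw [← Real.exp_add]; congr 1; ring
    have e2 := Real.add_one_le_exp (z - y)
    have e3 := Real.one_le_exp hy
    nlinarith
  · have key : Real.exp y - y ≤ Real.exp (-z) - (-z) := by
      have e1 : Real.exp y = Real.exp (-z) * Real.exp (y + z) := by
        rw [← Real.exp_add]; congr 1; ring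
      have e2 := Real.add_one_le_exp (-(y + z))
      have e3 : Real.exp (-(y+z)) * Real.exp (y+z) = 1 := by
        rw [← Real.exp_add, neg_add_cancel, Real.exp_zero]
      have e4 : Real.exp y ≤ 1 := Real.exp_le_one_iff.2 hy.le
      have e5 := Real.exp_pos (y + z)
      nlinarith [Real.exp_pos (-z)]
    have hz : 0 ≤ z := (abs_nonneg y).trans h
    have sinh := Real.self_le_sinh_iff.2 hz
    rw [Real.sinh_eq] at sinh
    linarith

lemma auxPow {x : ℝ} (hx : 0 ≤ x) (k : ℕ) : x ^ k / k.factorial ≤ Real.exp x := by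
  have h := Real.sum_le_exp_of_nonneg hx (k + 1)
  refine le_trans ?_ h
  have : x ^ k / k.factorial = ∑ i ∈ {k}, x ^ i / i.factorial := by simp
  rw [this]
  exact Finset.sum_le_sum_of_subset_of_nonneg (by simp) (fun i _ _ => by positivity)

lemma auxExpTsum (x : ℝ) : Real.exp x = ∑' n : ℕ, x ^ n / n.factorial := by
  rw [Real.exp_eq_exp_ℝ, NormedSpace.exp_eq_tsum_div]

lemma auxQ {s d v : ℝ} (hs : 0 ≤ s) (hsd : s < d) (hv : 0 ≤ v) :
    Real.exp (s * v) - 1 - s * v ≤ s ^ 2 / (d * (d - s)) * Real.exp (d * v) := by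
  have hd : 0 < d := lt_of_le_of_lt hs hsd
  have hsum : Summable (fun n : ℕ => (s * v) ^ n / n.factorial) :=
    Real.summable_pow_div_factorial (s * v)
  have hsum2 : Summable (fun n : ℕ => (s * v) ^ (n + 2) / (n + 2).factorial) :=
    (summable_nat_add_iff 2).2 hsum
  have hsplit : Real.exp (s * v) - 1 - s * v
      = ∑' n : ℕ, (s * v) ^ (n + 2) / (n + 2).factorial := by
    rw [auxExpTsum (s * v), ← Summable.sum_add_tsum_nat_add 2 hsum]
    simp [Finset.sum_range_succ]
    ring
  rw [hsplit]
  have hr : s / d < 1 := (div_lt_one hd).2 hsd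
  have hr0 : 0 ≤ s / d := by positivity
  have hgeom : Summable (fun n : ℕ => (s / d) ^ (n + 2) * Real.exp (d * v)) := by
    exact ((summable_geometric_of_lt_one hr0 hr).mul_right _).comp_injective
      (add_left_injective 2)
  have hterm : ∀ n : ℕ, (s * v) ^ (n + 2) / (n + 2).factorial
      ≤ (s / d) ^ (n + 2) * Real.exp (d * v) := by
    intro n
    have h1 : (s * v) ^ (n + 2) = (s / d) ^ (n + 2) * (d * v) ^ (n + 2) := by
      rw [← mul_pow]; congr 1; field_simp
    rw [h1, mul_div_assoc]
    exact mul_le_mul_of_nonneg_left (auxPow (by positivity) (n + 2)) (by positivity)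
  calc ∑' n : ℕ, (s * v) ^ (n + 2) / (n + 2).factorial
      ≤ ∑' n : ℕ, (s / d) ^ (n + 2) * Real.exp (d * v) :=
        Summable.tsum_le_tsum hterm hsum2 hgeom
    _ = s ^ 2 / (d * (d - s)) * Real.exp (d * v) := by
        rw [tsum_mul_right]
        have : ∑' n : ℕ, (s / d) ^ (n + 2) = (s/d)^2 * ∑' n : ℕ, (s / d) ^ n := by
          rw [← tsum_mul_left]
          congr 1; ext n; rw [pow_add]; ring
        rw [this, tsum_geometric_of_lt_one hr0 hr]
        rw [div_pow]
        rw [show (1 - s/d)⁻¹ = d / (d - s) by field_simp]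
        have hd0 : d ≠ 0 := hd.ne'
        have hds : d - s ≠ 0 := sub_ne_zero.2 hsd.ne'
        field_simp

lemma auxOpt {T ξ r s : ℝ} (hT : 0 < T) (hr : 0 < r) (hrs : r < s)
    (hξ : s ^ 2 - r ^ 2 = ξ) :
    r ^ 2 * (T * (s - r) / s) ^ 2 / (T - T * (s - r) / s) - (T * (s - r) / s) * ξ
      = -(T * (s - r) ^ 2) := by
  have hs0 : (0:ℝ) < s := hr.trans hrs
  have hs0' : s ≠ 0 := hs0.ne'
  have h1 : T - T * (s - r) / s = T * r / s := by field_simp; ring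
  rw [h1, ← hξ]
  have hr0 : r ≠ 0 := hr.ne'
  have hT0 : T ≠ 0 := hT.ne'
  field_simp
  ring


lemma auxC {t T A δ C : ℝ} (ht : 0 < t) (htT : t < T) (hδ : 0 < δ) (hC : 0 < C)
    (hA : 0 < A) (hAT : A * T ≤ δ) :
    (t * A) ^ 2 / (δ * (δ - t * A)) * C ≤ C * t ^ 2 / (δ * (T - t)) * A := by
  have h1 : 0 < T - t := sub_pos.2 htT
  have h2 : t * A < δ := by nlinarith
  rw [div_mul_eq_mul_div, div_mul_eq_mul_div,
    div_le_div_iff₀ (by nlinarith) (by positivity)]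
  have h3 : A * (T - t) ≤ δ - t * A := by nlinarith
  nlinarith [mul_le_mul_of_nonneg_left h3
    (show (0:ℝ) ≤ C * t ^ 2 * δ * A by positivity)]

/-- With {X_k} a real martingale-difference sequence satisfying
E[exp(δ|X_k|)|F_{k-1}] ≤ C a.s., and S_n = Σ_{k=1}^n α_{k,n} X_k with α_{k,n}
F_{k-1}-measurable, |α_{k,n}| ≤ A_{k,n} a.s., Σ_{k=1}^n A_{k,n} ≤ γ₁,
max_{1≤k≤n} A_{k,n} ≤ γ₂ β_n: for every n and ξ > 0,
P(S_n > ξ) ≤ exp(−(δ/(γ₂ β_n)) (√(ξ + Cγ₁/δ) − √(Cγ₁/δ))²). -/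
theorem stmt5 {Ω : Type*} {m0 : MeasurableSpace Ω} (μ : Measure Ω)
    [IsProbabilityMeasure μ]
    (ℱ : Filtration ℕ m0) (X : ℕ → Ω → ℝ)
    (δ C γ₁ γ₂ : ℝ) (hδ : 0 < δ) (hC : 0 < C) (hγ₁ : 0 < γ₁) (hγ₂ : 0 < γ₂)
    (α : ℕ → ℕ → Ω → ℝ) (A : ℕ → ℕ → ℝ) (β : ℕ → ℝ)
    (hadp : ∀ k, StronglyMeasurable[ℱ k] (X k))
    (hint : ∀ k, Integrable (X k) μ)
    (hmds : ∀ k : ℕ, 1 ≤ k → μ[X k|ℱ (k - 1)] =ᵐ[μ] 0)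
    (hexpint : ∀ k : ℕ, 1 ≤ k → Integrable (fun ω => Real.exp (δ * |X k ω|)) μ)
    (hcond : ∀ k : ℕ, 1 ≤ k → ∀ᵐ ω ∂μ,
      (μ[fun ω' => Real.exp (δ * |X k ω'|)|ℱ (k - 1)]) ω ≤ C)
    (hα : ∀ k n : ℕ, StronglyMeasurable[ℱ (k - 1)] (α k n))
    (hA : ∀ k n : ℕ, 0 < A k n)
    (hαA : ∀ k n : ℕ, ∀ᵐ ω ∂μ, |α k n ω| ≤ A k n)
    (hsum : ∀ n : ℕ, ∑ k ∈ Finset.Icc 1 n, A k n ≤ γ₁)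
    (hβ : ∀ n : ℕ, 0 < β n)
    (hmax : ∀ n k : ℕ, 1 ≤ k → k ≤ n → A k n ≤ γ₂ * β n) :
    ∀ (n : ℕ) (ξ : ℝ), 0 < ξ →
      μ {ω | ξ < ∑ k ∈ Finset.Icc 1 n, α k n ω * X k ω} ≤
        ENNReal.ofReal
          (Real.exp (-(δ / (γ₂ * β n)) *
            (Real.sqrt (ξ + C * γ₁ / δ) - Real.sqrt (C * γ₁ / δ)) ^ 2)) := by
  intro n ξ hξ
  set a : ℝ := C * γ₁ / δ with ha_def
  have ha : 0 < a := by positivity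
  set T : ℝ := δ / (γ₂ * β n) with hT_def
  have hT : 0 < T := div_pos hδ (mul_pos hγ₂ (hβ n))
  set r : ℝ := Real.sqrt a with hr_def
  set s : ℝ := Real.sqrt (ξ + a) with hs_def
  have hr : 0 < r := Real.sqrt_pos.2 ha
  have hrs : r < s := Real.sqrt_lt_sqrt ha.le (by linarith)
  have hs : 0 < s := hr.trans hrs
  have hr2 : r ^ 2 = a := Real.sq_sqrt ha.le
  have hs2 : s ^ 2 = ξ + a := Real.sq_sqrt (by linarith)
  set t : ℝ := T * (s - r) / s with ht_def
  have ht : 0 < t := div_pos (mul_pos hT (sub_pos.2 hrs)) hs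
  have htT : t < T := by
    rw [ht_def, div_lt_iff₀ hs]; nlinarith
  have hTt : 0 < T - t := sub_pos.2 htT
  have hAT : ∀ k, 1 ≤ k → k ≤ n → A k n * T ≤ δ := by
    intro k h1 h2
    have h3 := hmax n k h1 h2
    calc A k n * T ≤ (γ₂ * β n) * T := by nlinarith
      _ = δ := by
        have hb : γ₂ * β n ≠ 0 := (mul_pos hγ₂ (hβ n)).ne'
        rw [hT_def]; field_simp; exact div_self (hβ n).ne'
  have htA : ∀ k, 1 ≤ k → k ≤ n → t * A k n < δ := by
    intro k h1 h2
    have h3 := hAT k h1 h2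
    have h4 := hA k n
    nlinarith
  set c : ℝ := C * t ^ 2 / (δ * (T - t)) with hc_def
  have hc : 0 < c := by positivity
  -- the main induction
  have IND : ∀ m, m ≤ n →
      ∫⁻ ω, ENNReal.ofReal (Real.exp (t * ∑ k ∈ Finset.Icc 1 m, α k n ω * X k ω)) ∂μ
        ≤ ENNReal.ofReal (Real.exp (c * ∑ k ∈ Finset.Icc 1 m, A k n)) := by
    intro m
    induction m with
    | zero =>
        intro _
        simp [lintegral_one]
    | succ m ih =>
        intro hmn
        have hmn' : m ≤ n := Nat.le_of_succ_le hmn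
        have IH := ih hmn'
        have h1k : 1 ≤ m + 1 := Nat.succ_le_succ (Nat.zero_le m)
        -- abbreviations
        set Sm : Ω → ℝ := fun ω => ∑ k ∈ Finset.Icc 1 m, α k n ω * X k ω with hSm_def
        set G : Ω → ℝ := fun ω => Real.exp (t * (α (m+1) n ω * X (m+1) ω)) with hG_def
        have hSm_meas : StronglyMeasurable[ℱ m] Sm := by
          apply Finset.stronglyMeasurable_fun_sum
          intro k hk
          rcases Finset.mem_Icc.1 hk with ⟨hk1, hk2⟩
          exact ((hα k n).mono (ℱ.mono (by omega))).mul ((hadp k).mono (ℱ.mono hk2))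
        have hαm : StronglyMeasurable[ℱ m] (α (m+1) n) := hα (m+1) n
        have hXm0 : StronglyMeasurable[m0] (X (m+1)) := (hadp (m+1)).mono (ℱ.le (m+1))
        have hαm0 : StronglyMeasurable[m0] (α (m+1) n) := hαm.mono (ℱ.le m)
        have hG_sm : StronglyMeasurable[m0] G :=
          Real.continuous_exp.comp_stronglyMeasurable ((hαm0.mul hXm0).const_mul t)
        have hαabs := hαA (m+1) n
        have htAd : t * A (m+1) n < δ := htA (m+1) h1k hmn
        have htA0 : 0 < t * A (m+1) n := mul_pos ht (hA (m+1) n)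
        have hyz : ∀ᵐ ω ∂μ, |t * (α (m+1) n ω * X (m+1) ω)| ≤ (t * A (m+1) n) * |X (m+1) ω| := by
          filter_upwards [hαabs] with ω hω
          rw [abs_mul, abs_mul, abs_of_pos ht, mul_assoc]
          have : |α (m+1) n ω| * |X (m+1) ω| ≤ A (m+1) n * |X (m+1) ω| :=
            mul_le_mul_of_nonneg_right hω (abs_nonneg _)
          nlinarith [abs_nonneg (X (m+1) ω), abs_nonneg (α (m+1) n ω)]
        have hG_int : Integrable G μ := by
          refine Integrable.mono (hexpint (m+1) h1k) hG_sm.aestronglyMeasurable ?_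
          filter_upwards [hyz] with ω hω
          rw [Real.norm_eq_abs, Real.norm_eq_abs, abs_of_pos (Real.exp_pos _),
            abs_of_pos (Real.exp_pos _)]
          apply Real.exp_le_exp.2
          have h1 : t * (α (m+1) n ω * X (m+1) ω) ≤ |t * (α (m+1) n ω * X (m+1) ω)| :=
            le_abs_self _
          have h2 : (t * A (m+1) n) * |X (m+1) ω| ≤ δ * |X (m+1) ω| :=
            mul_le_mul_of_nonneg_right htAd.le (abs_nonneg _)
          linarith
        have hαX_int : Integrable (fun ω => α (m+1) n ω * X (m+1) ω) μ := by
          refine Integrable.mono ((hint (m+1)).const_mul (A (m+1) n))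
            (hαm0.mul hXm0).aestronglyMeasurable ?_
          filter_upwards [hαabs] with ω hω
          rw [Real.norm_eq_abs, Real.norm_eq_abs, abs_mul]
          calc |α (m+1) n ω| * |X (m+1) ω| ≤ A (m+1) n * |X (m+1) ω| :=
                mul_le_mul_of_nonneg_right hω (abs_nonneg _)
            _ ≤ |A (m+1) n * X (m+1) ω| := by rw [abs_mul, abs_of_pos (hA (m+1) n)]
        set φ : Ω → ℝ := fun ω => G ω - 1 - t * (α (m+1) n ω * X (m+1) ω) with hφ_def
        have hφ_int : Integrable φ μ :=
          (hG_int.sub (integrable_const 1)).sub (hαX_int.const_mul t)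
        set c' : ℝ := (t * A (m+1) n) ^ 2 / (δ * (δ - t * A (m+1) n)) with hc'_def
        have hc' : 0 < c' := by
          apply div_pos (by positivity) (mul_pos hδ (by linarith))
        have hφ_le : ∀ᵐ ω ∂μ, φ ω ≤ c' * Real.exp (δ * |X (m+1) ω|) := by
          filter_upwards [hyz] with ω hω
          have hP := auxP hω
          have hQ := auxQ htA0.le htAd (abs_nonneg (X (m+1) ω))
          simp only [hφ_def, hG_def]
          have : Real.exp (t * (α (m+1) n ω * X (m+1) ω))
              - 1 - t * (α (m+1) n ω * X (m+1) ω)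
              ≤ Real.exp ((t * A (m+1) n) * |X (m+1) ω|) - 1
                - (t * A (m+1) n) * |X (m+1) ω| := by linarith
          calc Real.exp (t * (α (m+1) n ω * X (m+1) ω))
              - 1 - t * (α (m+1) n ω * X (m+1) ω)
              ≤ Real.exp ((t * A (m+1) n) * |X (m+1) ω|) - 1
                - (t * A (m+1) n) * |X (m+1) ω| := this
            _ ≤ c' * Real.exp (δ * |X (m+1) ω|) := hQ
        -- conditional expectation bounds
        have hmds' : μ[X (m+1)|ℱ m] =ᵐ[μ] 0 := hmds (m+1) h1k
        have hcond' := hcond (m+1) h1k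
        have hcond1 : μ[fun ω => α (m+1) n ω * X (m+1) ω|ℱ m] =ᵐ[μ] 0 := by
          have hmul := condExp_mul_of_stronglyMeasurable_left hαm hαX_int (hint (m+1))
          refine hmul.trans ?_
          filter_upwards [hmds'] with ω hω
          simp [hω]
        have hcondφ : ∀ᵐ ω ∂μ, (μ[φ|ℱ m]) ω ≤ c' * C := by
          have hmono := condExp_mono (μ := μ) (m := ℱ m) hφ_int
            (((hexpint (m+1) h1k)).const_mul c')
            (by filter_upwards [hφ_le] with ω hω; exact hω)
          have hsmul : μ[fun ω => c' * Real.exp (δ * |X (m+1) ω|)|ℱ m]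
              =ᵐ[μ] fun ω => c' * (μ[fun ω' => Real.exp (δ * |X (m+1) ω'|)|ℱ m]) ω := by
            have := condExp_smul (μ := μ) (m := ℱ m) c'
              (fun ω => Real.exp (δ * |X (m+1) ω|))
            exact this
          filter_upwards [hmono, hsmul, hcond'] with ω h1 h2 h3
          rw [h2] at h1
          calc (μ[φ|ℱ m]) ω ≤ c' * (μ[fun ω' => Real.exp (δ * |X (m+1) ω'|)|ℱ m]) ω := h1
            _ ≤ c' * C := mul_le_mul_of_nonneg_left h3 hc'.le
        set Kc : ℝ := Real.exp (c * A (m+1) n) with hKc_def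
        have hscalar : 1 + c' * C ≤ Kc := by
          have h1 : c' * C ≤ c * A (m+1) n :=
            auxC ht htT hδ hC (hA (m+1) n) (hAT (m+1) h1k hmn)
          have h2 := Real.add_one_le_exp (c * A (m+1) n)
          rw [hKc_def]
          linarith
        have hKc0 : (0:ℝ) < Kc := Real.exp_pos _
        -- conditional expectation bound on G
        have hcondG : ∀ᵐ ω ∂μ, (μ[G|ℱ m]) ω ≤ Kc := by
          have hdecomp : G = ((fun _ => (1:ℝ)) + fun ω => t * (α (m+1) n ω * X (m+1) ω)) + φ := by
            funext ω
            simp only [Pi.add_apply, hφ_def]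
            ring
          have hadd1 : μ[G|ℱ m] =ᵐ[μ]
              μ[(fun _ => (1:ℝ)) + fun ω => t * (α (m+1) n ω * X (m+1) ω)|ℱ m] + μ[φ|ℱ m] := by
            rw [hdecomp]
            exact condExp_add ((integrable_const 1).add (hαX_int.const_mul t)) hφ_int _
          have hadd2 : μ[(fun _ => (1:ℝ)) + fun ω => t * (α (m+1) n ω * X (m+1) ω)|ℱ m]
              =ᵐ[μ] μ[fun _ => (1:ℝ)|ℱ m] + μ[fun ω => t * (α (m+1) n ω * X (m+1) ω)|ℱ m] :=
            condExp_add (integrable_const 1) (hαX_int.const_mul t) _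
          have hconst : μ[fun _ => (1:ℝ)|ℱ m] = fun _ => (1:ℝ) := condExp_const (ℱ.le m) 1
          have hsm : μ[fun ω => t * (α (m+1) n ω * X (m+1) ω)|ℱ m]
              =ᵐ[μ] fun ω => t * (μ[fun ω' => α (m+1) n ω' * X (m+1) ω'|ℱ m]) ω := by
            have h := condExp_smul (μ := μ) (m := ℱ m) t
              (fun ω => α (m+1) n ω * X (m+1) ω)
            filter_upwards [h] with ω hω
            simpa [Pi.smul_def, smul_eq_mul] using hω
          filter_upwards [hadd1, hadd2, hsm, hcond1, hcondφ] with ω e1 e2 e3 e4 e5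
          simp only [Pi.add_apply] at e1 e2
          simp only [Pi.zero_apply] at e4
          rw [e1, e2]
          simp only [hconst, e3, e4, mul_zero]
          linarith
        -- truncation argument
        set FN : ℕ → Ω → ℝ := fun N ω => min (Real.exp (t * Sm ω)) N with hFN_def
        have hexpSm_sm : StronglyMeasurable[ℱ m] fun ω => Real.exp (t * Sm ω) :=
          Real.continuous_exp.comp_stronglyMeasurable (hSm_meas.const_mul t)
        have hFN_sm : ∀ N : ℕ, StronglyMeasurable[ℱ m] (FN N) := fun N =>
          (continuous_id.min continuous_const).comp_stronglyMeasurable hexpSm_sm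
        have hFN_nonneg : ∀ N (ω : Ω), 0 ≤ FN N ω := fun N ω =>
          le_min (Real.exp_pos _).le (Nat.cast_nonneg N)
        have hFN_le : ∀ N (ω : Ω), FN N ω ≤ Real.exp (t * Sm ω) := fun N ω => min_le_left _ _
        have hFN_bdd : ∀ N (ω : Ω), ‖FN N ω‖ ≤ (N : ℝ) := by
          intro N ω
          rw [Real.norm_eq_abs, abs_of_nonneg (hFN_nonneg N ω)]
          exact min_le_right _ _
        have hFN_int : ∀ N : ℕ, Integrable (FN N) μ := fun N =>
          Integrable.mono' (integrable_const (N:ℝ))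
            ((hFN_sm N).mono (ℱ.le m)).aestronglyMeasurable (ae_of_all _ (hFN_bdd N))
        have hFNG_int : ∀ N : ℕ, Integrable (FN N * G) μ := fun N =>
          hG_int.bdd_mul ((hFN_sm N).mono (ℱ.le m)).aestronglyMeasurable (ae_of_all _ (hFN_bdd N))
        have hstep : ∀ N : ℕ, ∫ ω, (FN N * G) ω ∂μ ≤ Kc * ∫ ω, FN N ω ∂μ := by
          intro N
          have hmul := condExp_mul_of_stronglyMeasurable_left (hFN_sm N) (hFNG_int N) hG_int
          rw [← integral_condExp (ℱ.le m) (f := FN N * G)]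
          have hint1 : Integrable (μ[FN N * G|ℱ m]) μ := integrable_condExp
          have hint2 : Integrable (FN N * μ[G|ℱ m]) μ := hint1.congr hmul
          calc ∫ ω, (μ[FN N * G|ℱ m]) ω ∂μ = ∫ ω, (FN N * μ[G|ℱ m]) ω ∂μ :=
                integral_congr_ae hmul
            _ ≤ ∫ ω, Kc * FN N ω ∂μ := by
                refine integral_mono_ae hint2 ((hFN_int N).const_mul Kc) ?_
                filter_upwards [hcondG] with ω hω
                simp only [Pi.mul_apply]
                rw [mul_comm Kc (FN N ω)]
                exact mul_le_mul_of_nonneg_left hω (hFN_nonneg N ω)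
            _ = Kc * ∫ ω, FN N ω ∂μ := integral_const_mul Kc _
        have hNbound : ∀ N : ℕ, ∫⁻ ω, ENNReal.ofReal ((FN N * G) ω) ∂μ ≤
            ENNReal.ofReal Kc * ENNReal.ofReal (Real.exp (c * ∑ k ∈ Finset.Icc 1 m, A k n)) := by
          intro N
          rw [← ofReal_integral_eq_lintegral_ofReal (hFNG_int N)
            (ae_of_all _ fun ω => mul_nonneg (hFN_nonneg N ω) (Real.exp_pos _).le)]
          calc ENNReal.ofReal (∫ ω, (FN N * G) ω ∂μ)
              ≤ ENNReal.ofReal (Kc * ∫ ω, FN N ω ∂μ) := ENNReal.ofReal_le_ofReal (hstep N)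
            _ = ENNReal.ofReal Kc * ENNReal.ofReal (∫ ω, FN N ω ∂μ) :=
                ENNReal.ofReal_mul hKc0.le
            _ ≤ ENNReal.ofReal Kc * ENNReal.ofReal (Real.exp (c * ∑ k ∈ Finset.Icc 1 m, A k n)) := by
                refine mul_le_mul_right ?_ _
                rw [ofReal_integral_eq_lintegral_ofReal (hFN_int N)
                  (ae_of_all _ (hFN_nonneg N))]
                refine le_trans ?_ IH
                exact lintegral_mono fun ω => ENNReal.ofReal_le_ofReal (hFN_le N ω)
        -- monotone convergence
        have hSsucc : ∀ ω : Ω, Real.exp (t * ∑ k ∈ Finset.Icc 1 (m+1), α k n ω * X k ω)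
            = Real.exp (t * Sm ω) * G ω := by
          intro ω
          rw [Finset.sum_Icc_succ_top h1k, hG_def, hSm_def]
          rw [← Real.exp_add]
          congr 1
          ring
        have hsup : ∀ ω : Ω, (⨆ N : ℕ, ENNReal.ofReal ((FN N * G) ω))
            = ENNReal.ofReal (Real.exp (t * ∑ k ∈ Finset.Icc 1 (m+1), α k n ω * X k ω)) := by
          intro ω
          rw [hSsucc ω]
          apply le_antisymm
          · refine iSup_le fun N => ENNReal.ofReal_le_ofReal ?_
            exact mul_le_mul_of_nonneg_right (hFN_le N ω) (Real.exp_pos _).le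
          · refine le_iSup_of_le ⌈Real.exp (t * Sm ω)⌉₊ (le_of_eq ?_)
            congr 1
            simp only [Pi.mul_apply, hFN_def]
            rw [min_eq_left (Nat.le_ceil _)]
        have hmeas : ∀ N : ℕ, Measurable fun ω => ENNReal.ofReal ((FN N * G) ω) := by
          intro N
          apply Measurable.ennreal_ofReal
          exact (((hFN_sm N).mono (ℱ.le m)).measurable).mul hG_sm.measurable
        have hmono : Monotone fun (N : ℕ) (ω : Ω) => ENNReal.ofReal ((FN N * G) ω) := by
          intro N M hNM
          refine fun ω => ENNReal.ofReal_le_ofReal ?_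
          simp only [Pi.mul_apply]
          refine mul_le_mul_of_nonneg_right ?_ (Real.exp_pos _).le
          exact min_le_min le_rfl (Nat.cast_le.2 hNM)
        calc ∫⁻ ω, ENNReal.ofReal (Real.exp (t * ∑ k ∈ Finset.Icc 1 (m+1), α k n ω * X k ω)) ∂μ
            = ∫⁻ ω, ⨆ N : ℕ, ENNReal.ofReal ((FN N * G) ω) ∂μ := by
              refine lintegral_congr fun ω => (hsup ω).symm
          _ = ⨆ N : ℕ, ∫⁻ ω, ENNReal.ofReal ((FN N * G) ω) ∂μ := lintegral_iSup hmeas hmono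
          _ ≤ ENNReal.ofReal Kc * ENNReal.ofReal (Real.exp (c * ∑ k ∈ Finset.Icc 1 m, A k n)) :=
              iSup_le hNbound
          _ = ENNReal.ofReal (Real.exp (c * ∑ k ∈ Finset.Icc 1 (m+1), A k n)) := by
              rw [← ENNReal.ofReal_mul hKc0.le, hKc_def, ← Real.exp_add,
                Finset.sum_Icc_succ_top h1k]
              congr 2
              ring
    -- Chernoff bound
  have hSn_meas : Measurable fun ω => ∑ k ∈ Finset.Icc 1 n, α k n ω * X k ω := by
    apply Finset.measurable_sum
    intro k hk
    exact (((hα k n).mono (ℱ.le _)).measurable).mul (((hadp k).mono (ℱ.le k)).measurable)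
  have hf_meas : Measurable fun ω =>
      ENNReal.ofReal (Real.exp (t * ∑ k ∈ Finset.Icc 1 n, α k n ω * X k ω)) :=
    Measurable.ennreal_ofReal (Real.measurable_exp.comp (hSn_meas.const_mul t))
  set ε : ENNReal := ENNReal.ofReal (Real.exp (t * ξ)) with hε_def
  have hch := mul_meas_ge_le_lintegral₀ (μ := μ) hf_meas.aemeasurable ε
  have hsub : {ω | ξ < ∑ k ∈ Finset.Icc 1 n, α k n ω * X k ω} ⊆
      {ω | ε ≤ ENNReal.ofReal (Real.exp (t * ∑ k ∈ Finset.Icc 1 n, α k n ω * X k ω))} := by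
    intro ω hω
    simp only [Set.mem_setOf_eq] at hω ⊢
    exact ENNReal.ofReal_le_ofReal (Real.exp_le_exp.2
      (mul_le_mul_of_nonneg_left hω.le ht.le))
  have h1 : ε * μ {ω | ξ < ∑ k ∈ Finset.Icc 1 n, α k n ω * X k ω} ≤
      ENNReal.ofReal (Real.exp (c * γ₁)) := by
    calc ε * μ {ω | ξ < ∑ k ∈ Finset.Icc 1 n, α k n ω * X k ω}
        ≤ ε * μ {ω | ε ≤ ENNReal.ofReal
            (Real.exp (t * ∑ k ∈ Finset.Icc 1 n, α k n ω * X k ω))} :=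
          mul_le_mul_right (measure_mono hsub) ε
      _ ≤ ∫⁻ ω, ENNReal.ofReal
            (Real.exp (t * ∑ k ∈ Finset.Icc 1 n, α k n ω * X k ω)) ∂μ := hch
      _ ≤ ENNReal.ofReal (Real.exp (c * ∑ k ∈ Finset.Icc 1 n, A k n)) := IND n le_rfl
      _ ≤ ENNReal.ofReal (Real.exp (c * γ₁)) :=
          ENNReal.ofReal_le_ofReal (Real.exp_le_exp.2
            (mul_le_mul_of_nonneg_left (hsum n) hc.le))
  have hε0 : ε ≠ 0 := (ENNReal.ofReal_pos.2 (Real.exp_pos _)).ne'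
  have hεtop : ε ≠ ⊤ := ENNReal.ofReal_ne_top
  have h2 : μ {ω | ξ < ∑ k ∈ Finset.Icc 1 n, α k n ω * X k ω} ≤
      ENNReal.ofReal (Real.exp (c * γ₁)) / ε := by
    rw [ENNReal.le_div_iff_mul_le (Or.inl hε0) (Or.inl hεtop)]
    rwa [mul_comm] at h1
  have h3 : ENNReal.ofReal (Real.exp (c * γ₁)) / ε
      = ENNReal.ofReal (Real.exp (c * γ₁ - t * ξ)) := by
    rw [Real.exp_sub, ENNReal.ofReal_div_of_pos (Real.exp_pos _)]
  have hCγ : C * γ₁ = r ^ 2 * δ := by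
    rw [hr2, ha_def]
    field_simp
  have hopt := auxOpt hT hr hrs (show s ^ 2 - r ^ 2 = ξ by rw [hr2, hs2]; ring)
  rw [← ht_def] at hopt
  have e : c * γ₁ = r ^ 2 * t ^ 2 / (T - t) := by
    have hδ0 : δ ≠ 0 := hδ.ne'
    have hTt0 : T - t ≠ 0 := hTt.ne'
    rw [hc_def, div_mul_eq_mul_div, div_eq_div_iff (mul_ne_zero hδ0 hTt0) hTt0]
    linear_combination (t ^ 2 * (T - t)) * hCγ
  have h4 : c * γ₁ - t * ξ = -(T * (s - r) ^ 2) := by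
    rw [e]
    linarith [hopt]
  calc μ {ω | ξ < ∑ k ∈ Finset.Icc 1 n, α k n ω * X k ω}
      ≤ ENNReal.ofReal (Real.exp (c * γ₁)) / ε := h2
    _ = ENNReal.ofReal (Real.exp (c * γ₁ - t * ξ)) := h3
    _ = ENNReal.ofReal (Real.exp (-T * (s - r) ^ 2)) := by rw [h4]; congr 1; ring_nf
end

section
/- Let C > 0 be a constant, μ ∈ (0,1], and a_n = 1/(n+1)^μ for n ≥ 0. Then, as n₀ → ∞, Σ_{n=n₀}^{∞} exp(−C/√(a_n)) = Σ_{n=n₀}^{∞} exp(−C (n+1)^{μ/2}) = O( n₀^{1−μ/2} exp(−C n₀^{μ/2}) ). -/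
open Filter Asymptotics

/-- Let C > 0, μ ∈ (0,1], and a_n = 1/(n+1)^μ. Then, as n₀ → ∞,
Σ_{n=n₀}^∞ exp(−C/√(a_n)) = O(n₀^{1−μ/2} exp(−C n₀^{μ/2})). -/
theorem stmt6 (C mu : ℝ) (hC : 0 < C) (hmu0 : 0 < mu) (hmu1 : mu ≤ 1)
    (a : ℕ → ℝ) (ha : ∀ n : ℕ, a n = 1 / ((n : ℝ) + 1) ^ mu) :
    (fun n₀ : ℕ => ∑' n : ℕ, Real.exp (-C / Real.sqrt (a (n₀ + n))))
      =O[atTop]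
    (fun n₀ : ℕ => (n₀ : ℝ) ^ (1 - mu / 2) * Real.exp (-C * (n₀ : ℝ) ^ (mu / 2))) := by
  set α : ℝ := mu / 2 with hαdef
  have hα0 : 0 < α := by positivity
  have hα1 : α ≤ 1/2 := by rw [hαdef]; linarith
  set g : ℝ → ℝ := fun x => x ^ (1 - α) * Real.exp (-(C * x ^ α)) with hgdef
  set D : ℝ → ℝ := fun x => Real.exp (-(C * x ^ α)) * ((1 - α) * x ^ (-α) - C * α) with hDdef
  set f : ℕ → ℝ := fun n => Real.exp (-(C * ((n : ℝ) + 1) ^ α)) with hfdef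
  -- rewrite the summand
  have hterm : ∀ n : ℕ, Real.exp (-C / Real.sqrt (a n)) = f n := by
    intro n
    have ht : (0:ℝ) < (n:ℝ) + 1 := by positivity
    have hs : Real.sqrt (a n) = ((n:ℝ)+1) ^ (-α) := by
      rw [ha n, one_div, ← Real.rpow_neg ht.le, Real.sqrt_eq_rpow,
        ← Real.rpow_mul ht.le]
      congr 1
      rw [hαdef]; ring
    rw [hs, hfdef]
    rw [Real.rpow_neg ht.le]
    simp [div_eq_mul_inv, inv_inv, neg_mul]
  -- derivative of g
  have hderiv : ∀ x : ℝ, 0 < x → HasDerivAt g (D x) x := by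
    intro x hx
    have h1 : HasDerivAt (fun x : ℝ => x ^ (1 - α)) ((1-α) * x ^ (1 - α - 1)) x :=
      Real.hasDerivAt_rpow_const (Or.inl hx.ne')
    have h2 : HasDerivAt (fun x : ℝ => x ^ α) (α * x ^ (α - 1)) x :=
      Real.hasDerivAt_rpow_const (Or.inl hx.ne')
    have h4 : HasDerivAt (fun x : ℝ => Real.exp (-(C * x ^ α)))
        (Real.exp (-(C * x ^ α)) * (-(C * (α * x ^ (α - 1))))) x :=
      ((h2.const_mul C).neg).exp
    have h5 := h1.mul h4
    have e1 : x ^ (1 - α - 1) = x ^ (-α) := by norm_num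
    have e2 : x ^ (1 - α) * x ^ (α - 1) = 1 := by
      rw [← Real.rpow_add hx]; norm_num
    refine HasDerivAt.congr_deriv h5 ?_
    symm
    rw [hDdef]
    calc Real.exp (-(C * x ^ α)) * ((1 - α) * x ^ (-α) - C * α)
        = (1-α) * x ^ (-α) * Real.exp (-(C * x ^ α))
          + (Real.exp (-(C * x ^ α)) * (-(C * α))) * 1 := by ring
      _ = (1-α) * x ^ (1-α-1) * Real.exp (-(C * x ^ α))
          + (Real.exp (-(C * x ^ α)) * (-(C * α))) * (x ^ (1-α) * x ^ (α-1)) := by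
            rw [e1, e2]
      _ = (1-α) * x ^ (1 - α - 1) * Real.exp (-(C * x ^ α))
          + x ^ (1 - α) * (Real.exp (-(C * x ^ α)) * (-(C * (α * x ^ (α - 1))))) := by
            ring
  have hgnonneg : ∀ x : ℝ, 0 ≤ x → 0 ≤ g x := by
    intro x hx
    rw [hgdef]
    exact mul_nonneg (Real.rpow_nonneg hx _) (Real.exp_pos _).le
  -- choose N
  have htend : Tendsto (fun n : ℕ => (1 - α) * (n : ℝ) ^ (-α)) atTop (nhds 0) := by
    have h0 := (tendsto_rpow_neg_atTop hα0).comp tendsto_natCast_atTop_atTop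
    have := h0.const_mul (1 - α)
    simpa using this
  have hev : ∀ᶠ n : ℕ in atTop, (1 - α) * (n : ℝ) ^ (-α) ≤ C * α / 2 :=
    htend.eventually (eventually_le_nhds (by positivity))
  obtain ⟨N0, hN0⟩ := eventually_atTop.1 hev
  set N : ℕ := max N0 1 with hNdef
  have hN1 : 1 ≤ N := le_max_right _ _
  have hNsmall : ∀ n : ℕ, N ≤ n → (1 - α) * (n : ℝ) ^ (-α) ≤ C * α / 2 :=
    fun n hn => hN0 n (le_trans (le_max_left _ _) hn)
  -- key telescoping estimate
  have key : ∀ n : ℕ, N ≤ n →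
      C * α / 2 * Real.exp (-(C * ((n:ℝ) + 1) ^ α)) ≤ g (n:ℝ) - g ((n:ℝ) + 1) := by
    intro n hn
    have hn1 : (1:ℝ) ≤ (n:ℝ) := by exact_mod_cast le_trans hN1 hn
    have hx : (0:ℝ) < (n:ℝ) := by linarith
    have hab : (n:ℝ) < (n:ℝ) + 1 := by linarith
    have hcont : ContinuousOn g (Set.Icc (n:ℝ) ((n:ℝ)+1)) := fun y hy =>
      (hderiv y (by have := hy.1; linarith)).continuousAt.continuousWithinAt
    obtain ⟨c, hc, hceq⟩ := exists_hasDerivAt_eq_slope g D hab hcont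
      (fun y hy => hderiv y (by have := hy.1.le; linarith))
    have hc0 : (0:ℝ) < c := lt_trans hx hc.1
    have hslope : D c = g ((n:ℝ)+1) - g (n:ℝ) := by
      rw [hceq]; field_simp; ring
    -- bound (1-α) c^{-α}
    have hmono : c ^ (-α) ≤ (n:ℝ) ^ (-α) :=
      Real.rpow_le_rpow_of_nonpos hx hc.1.le (by linarith)
    have h1a : (1 - α) * c ^ (-α) ≤ C * α / 2 := by
      have := hNsmall n hn
      have h1α : 0 ≤ 1 - α := by linarith
      nlinarith [Real.rpow_nonneg hc0.le (-α)]
    have hexp : Real.exp (-(C * ((n:ℝ)+1) ^ α)) ≤ Real.exp (-(C * c ^ α)) := by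
      apply Real.exp_le_exp.2
      have : c ^ α ≤ ((n:ℝ)+1) ^ α := Real.rpow_le_rpow hc0.le hc.2.le hα0.le
      nlinarith
    have hDc : C * α / 2 * Real.exp (-(C * ((n:ℝ)+1) ^ α)) ≤ -D c := by
      rw [hDdef]
      have hE : 0 < Real.exp (-(C * c ^ α)) := Real.exp_pos _
      have : -(Real.exp (-(C * c ^ α)) * ((1 - α) * c ^ (-α) - C * α))
          = Real.exp (-(C * c ^ α)) * (C * α - (1 - α) * c ^ (-α)) := by ring
      rw [this]
      calc C * α / 2 * Real.exp (-(C * ((n:ℝ)+1) ^ α))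
          ≤ C * α / 2 * Real.exp (-(C * c ^ α)) := by
            apply mul_le_mul_of_nonneg_left hexp (by positivity)
        _ ≤ Real.exp (-(C * c ^ α)) * (C * α - (1 - α) * c ^ (-α)) := by
            nlinarith
    linarith [hDc, hslope.ge, hslope.le]
  -- partial sum bound
  have sumbound : ∀ n₀ : ℕ, N ≤ n₀ → ∀ m : ℕ,
      ∑ k ∈ Finset.range m, f (n₀ + k) ≤ 2 / (C * α) * g (n₀ : ℝ) := by
    intro n₀ hn₀ m
    have hCα : 0 < C * α := by positivity
    have hstep : ∀ k ∈ Finset.range m,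
        f (n₀ + k) ≤ 2 / (C * α) * (g ((n₀ + k : ℕ) : ℝ) - g (((n₀ + (k + 1) : ℕ)) : ℝ)) := by
      intro k _
      have hk : N ≤ n₀ + k := le_trans hn₀ (Nat.le_add_right _ _)
      have := key (n₀ + k) hk
      have hcast : ((n₀ + (k + 1) : ℕ) : ℝ) = ((n₀ + k : ℕ) : ℝ) + 1 := by push_cast; ring
      rw [hcast]
      rw [hfdef]
      rw [div_mul_eq_mul_div, le_div_iff₀ hCα]
      calc Real.exp (-(C * (((n₀ + k : ℕ) : ℝ) + 1) ^ α)) * (C * α)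
          = 2 * (C * α / 2 * Real.exp (-(C * (((n₀ + k : ℕ) : ℝ) + 1) ^ α))) := by ring
        _ ≤ 2 * (g ((n₀ + k : ℕ) : ℝ) - g (((n₀ + k : ℕ) : ℝ) + 1)) := by linarith
    calc ∑ k ∈ Finset.range m, f (n₀ + k)
        ≤ ∑ k ∈ Finset.range m,
            2 / (C * α) * (g ((n₀ + k : ℕ) : ℝ) - g ((n₀ + (k + 1) : ℕ) : ℝ)) :=
          Finset.sum_le_sum hstep
      _ = 2 / (C * α) * ∑ k ∈ Finset.range m,
            (g ((n₀ + k : ℕ) : ℝ) - g ((n₀ + (k + 1) : ℕ) : ℝ)) := by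
          rw [Finset.mul_sum]
      _ = 2 / (C * α) * (g ((n₀ + 0 : ℕ) : ℝ) - g ((n₀ + m : ℕ) : ℝ)) := by
          rw [Finset.sum_range_sub' (fun i => g ((n₀ + i : ℕ) : ℝ))]
      _ ≤ 2 / (C * α) * g (n₀ : ℝ) := by
          have h1 : 0 ≤ g ((n₀ + m : ℕ) : ℝ) := hgnonneg _ (by positivity)
          have h2 : ((n₀ + 0 : ℕ) : ℝ) = (n₀ : ℝ) := by norm_num
          rw [h2]
          apply mul_le_mul_of_nonneg_left (by linarith) (by positivity)
  -- conclude
  rw [isBigO_iff]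
  refine ⟨2 / (C * α), ?_⟩
  filter_upwards [eventually_ge_atTop N] with n₀ hn₀
  have hL : (∑' n : ℕ, Real.exp (-C / Real.sqrt (a (n₀ + n)))) = ∑' n : ℕ, f (n₀ + n) := by
    exact tsum_congr fun n => hterm (n₀ + n)
  have hfnonneg : ∀ n : ℕ, 0 ≤ f (n₀ + n) := fun n => (Real.exp_pos _).le
  have htsum : ∑' n : ℕ, f (n₀ + n) ≤ 2 / (C * α) * g (n₀ : ℝ) :=
    Real.tsum_le_of_sum_range_le hfnonneg (sumbound n₀ hn₀)
  have habs : |∑' n : ℕ, f (n₀ + n)| = ∑' n : ℕ, f (n₀ + n) :=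
    abs_of_nonneg (tsum_nonneg hfnonneg)
  have hRHS : (n₀ : ℝ) ^ (1 - mu / 2) * Real.exp (-C * (n₀ : ℝ) ^ (mu / 2)) = g (n₀ : ℝ) := by
    rw [hgdef, hαdef, neg_mul]
  rw [Real.norm_eq_abs, Real.norm_eq_abs, hL, habs, hRHS,
    abs_of_nonneg (hgnonneg _ (Nat.cast_nonneg _))]
  exact htsum
end

section
/- Let C > 0 and λ > 0 be constants and let a_n = 1/(n+1) for n ≥ 0. For integers n > n₀ ≥ 0 define β_n = max_{n₀ ≤ k ≤ n−1} [ exp(−λ Σ_{i=k+1}^{n−1} a_i) · a_k ]. Then, as n₀ → ∞: Σ_{n=n₀+1}^{∞} exp(−C/β_n) = O(exp(−C n₀)) if λ > 1, and Σ_{n=n₀+1}^{∞} exp(−C/β_n) = O(exp(−(C/2) n₀)) if λ ≤ 1. -/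
open Filter Asymptotics


private lemma log_telescope (k p : ℕ) (hkp : k ≤ p) :
    Real.log ((p : ℝ) + 2) - Real.log ((k : ℝ) + 2) ≤
      ∑ i ∈ Finset.Icc (k + 1) p, 1 / ((i : ℝ) + 1) := by
  have h1 : Finset.Icc (k + 1) p = Finset.Ico (k + 1) (p + 1) := by
    rw [Finset.Ico_add_one_right_eq_Icc]
  set F : ℕ → ℝ := fun i => Real.log ((i : ℝ) + 1) with hF
  have key : ∑ i ∈ Finset.Ico (k + 1) (p + 1), (F (i + 1) - F i) = F (p + 1) - F (k + 1) := by
    rw [Finset.sum_Ico_eq_sub _ (by omega), Finset.sum_range_sub, Finset.sum_range_sub]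
    ring
  have hle : ∑ i ∈ Finset.Ico (k + 1) (p + 1), (F (i + 1) - F i) ≤
      ∑ i ∈ Finset.Ico (k + 1) (p + 1), 1 / ((i : ℝ) + 1) := by
    apply Finset.sum_le_sum
    intro i _
    have hi1 : (0 : ℝ) < (i : ℝ) + 1 := by positivity
    have heq : F (i + 1) - F i = Real.log (((i : ℝ) + 2) / ((i : ℝ) + 1)) := by
      rw [Real.log_div (by positivity) (by positivity)]
      simp only [hF]
      push_cast
      ring_nf
    rw [heq]
    have h2 := Real.log_le_sub_one_of_pos
      (show (0 : ℝ) < ((i : ℝ) + 2) / ((i : ℝ) + 1) by positivity)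
    have h3 : ((i : ℝ) + 2) / ((i : ℝ) + 1) - 1 = 1 / ((i : ℝ) + 1) := by
      field_simp
      norm_num
    linarith [h3 ▸ h2]
  have hcast : F (p + 1) - F (k + 1) = Real.log ((p : ℝ) + 2) - Real.log ((k : ℝ) + 2) := by
    simp only [hF]
    push_cast
    ring_nf
  rw [h1]
  linarith [key, hle, hcast ▸ key]


private lemma bernoulli_lower {lam y m : ℝ} (hlam : 0 < lam) (hlam1 : lam ≤ 1)
    (hy : 0 < y) (hm : 0 ≤ m) :
    y + lam * m * y / (y + m) ≤ (y + m) ^ lam * y ^ (1 - lam) := by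
  set s : ℝ := m / y with hs
  have hs0 : 0 ≤ s := by positivity
  have ht : y + m = y * (1 + s) := by rw [hs]; field_simp
  have h1s : (0:ℝ) < 1 + s := by linarith
  have hb : (1 + s) ^ (1 - lam) ≤ 1 + (1 - lam) * s :=
    rpow_one_add_le_one_add_mul_self (by linarith) (by linarith) (by linarith)
  have hbpos : (0:ℝ) < (1 + s) ^ (1 - lam) := Real.rpow_pos_of_pos h1s _
  set u : ℝ := lam * s / (1 + s) with hu
  have hu0 : 0 ≤ u := by positivity
  have huu : u * (1 + s) = lam * s := by rw [hu]; field_simp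
  have hkey : 1 + u ≤ (1 + s) ^ lam := by
    rw [show (1 + s) ^ lam = (1 + s) / (1 + s) ^ (1 - lam) by
      rw [eq_div_iff (ne_of_gt hbpos), ← Real.rpow_add h1s]; norm_num]
    rw [le_div_iff₀ hbpos]
    calc (1 + u) * (1 + s) ^ (1 - lam) ≤ (1 + u) * (1 + (1 - lam) * s) :=
          mul_le_mul_of_nonneg_left hb (by linarith)
      _ ≤ 1 + s := by nlinarith [mul_nonneg hu0 (mul_nonneg hlam.le hs0)]
  have hyy : y ^ lam * y ^ (1 - lam) = y := by
    rw [← Real.rpow_add hy]; norm_num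
  have hE : (y + m) ^ lam * y ^ (1 - lam) = y * (1 + s) ^ lam := by
    rw [ht, Real.mul_rpow hy.le h1s.le]
    calc y ^ lam * (1 + s) ^ lam * y ^ (1 - lam)
        = y ^ lam * y ^ (1 - lam) * (1 + s) ^ lam := by ring
      _ = y * (1 + s) ^ lam := by rw [hyy]
  rw [hE]
  have h2 : y + lam * m * y / (y + m) = y * (1 + u) := by
    rw [hu, hs, ht, hs]
    field_simp
  rw [h2]
  exact mul_le_mul_of_nonneg_left hkey hy.le

private lemma tail_lower {lam y m : ℝ} (hlam : 0 < lam) (hlam1 : lam ≤ 1)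
    (hy : 1 ≤ y) (hm : (2:ℝ) ^ (1/lam) * y ≤ m) :
    y + m ^ lam / 2 ≤ (y + m) ^ lam * y ^ (1 - lam) := by
  have hy0 : (0:ℝ) < y := by linarith
  have hK : (0:ℝ) < (2:ℝ) ^ (1/lam) := Real.rpow_pos_of_pos (by norm_num) _
  have hm0 : 0 ≤ m := le_trans (by positivity) hm
  have h1 : m ^ lam ≤ (y + m) ^ lam := Real.rpow_le_rpow hm0 (by linarith) hlam.le
  have hylam : (0:ℝ) < y ^ (1 - lam) := Real.rpow_pos_of_pos hy0 _
  have h2 : m ^ lam * y ^ (1 - lam) ≤ (y + m) ^ lam * y ^ (1 - lam) :=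
    mul_le_mul_of_nonneg_right h1 hylam.le
  have hKlam : ((2:ℝ) ^ (1/lam)) ^ lam = 2 := by
    rw [← Real.rpow_mul (by norm_num : (0:ℝ) ≤ 2), one_div, inv_mul_cancel₀ hlam.ne',
      Real.rpow_one]
  have h3 : 2 * y ^ lam ≤ m ^ lam := by
    have h := Real.rpow_le_rpow (by positivity) hm hlam.le
    rw [Real.mul_rpow hK.le hy0.le, hKlam] at h
    exact h
  have h4 : 1 ≤ y ^ (1 - lam) := by
    calc (1:ℝ) = 1 ^ (1 - lam) := (Real.one_rpow _).symm
    _ ≤ y ^ (1 - lam) := Real.rpow_le_rpow (by norm_num) hy (by linarith)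
  have hyy : y ^ lam * y ^ (1 - lam) = y := by
    rw [← Real.rpow_add hy0]; norm_num
  have h5 : y + m ^ lam / 2 ≤ m ^ lam * y ^ (1 - lam) := by
    have ha : y ≤ m ^ lam / 2 * y ^ (1 - lam) := by
      calc y = y ^ lam * y ^ (1 - lam) := hyy.symm
        _ ≤ m ^ lam / 2 * y ^ (1 - lam) :=
            mul_le_mul_of_nonneg_right (by linarith) hylam.le
    have hb : m ^ lam / 2 ≤ m ^ lam / 2 * y ^ (1 - lam) := by
      nlinarith [Real.rpow_nonneg hm0 lam]
    nlinarith
  linarith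


private lemma summable_exp_neg_rpow {c lam : ℝ} (hc : 0 < c) (hlam : 0 < lam) :
    Summable (fun m : ℕ => Real.exp (-(c * (m : ℝ) ^ lam))) := by
  apply summable_of_isBigO_nat (Real.summable_one_div_nat_rpow.2 (by norm_num : (1:ℝ) < 2))
  rw [isBigO_iff]
  refine ⟨1, ?_⟩
  have hR : ∀ᶠ x : ℝ in atTop, ‖Real.log x‖ ≤ c / 2 * ‖x ^ lam‖ :=
    (isLittleO_log_rpow_atTop hlam).def (by positivity)
  have hN : ∀ᶠ m : ℕ in atTop,
      ‖Real.log (m : ℝ)‖ ≤ c / 2 * ‖(m : ℝ) ^ lam‖ ∧ 1 ≤ (m : ℝ) :=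
    tendsto_natCast_atTop_atTop.eventually (hR.and (eventually_ge_atTop 1))
  filter_upwards [hN] with m hm
  obtain ⟨hlog, hm1⟩ := hm
  have hm0 : (0:ℝ) < m := by linarith
  have hlog0 : 0 ≤ Real.log (m : ℝ) := Real.log_nonneg hm1
  have hrp0 : (0:ℝ) ≤ (m:ℝ) ^ lam := Real.rpow_nonneg hm0.le _
  rw [Real.norm_eq_abs, abs_of_nonneg hlog0, Real.norm_eq_abs, abs_of_nonneg hrp0] at hlog
  have key : 2 * Real.log (m : ℝ) ≤ c * (m : ℝ) ^ lam := by linarith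
  have h1 : Real.exp (-(c * (m : ℝ) ^ lam)) ≤ Real.exp (-(2 * Real.log (m : ℝ))) :=
    Real.exp_le_exp.2 (by linarith)
  have h2 : Real.exp (-(2 * Real.log (m : ℝ))) = 1 / (m : ℝ) ^ (2:ℝ) := by
    rw [Real.rpow_def_of_pos hm0,
      show -(2 * Real.log (m:ℝ)) = -(Real.log (m:ℝ) * 2) by ring, Real.exp_neg, one_div]
  rw [Real.norm_eq_abs, abs_of_nonneg (Real.exp_pos _).le, Real.norm_eq_abs,
    abs_of_nonneg (by positivity : (0:ℝ) ≤ 1 / (m:ℝ) ^ (2:ℝ)), one_mul, ← h2]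
  exact h1

private lemma term_bound {lam : ℝ} (hlam : 0 < lam) {a : ℕ → ℝ}
    (ha : ∀ n : ℕ, a n = 1 / ((n : ℝ) + 1)) (k p : ℕ) (hkp : k ≤ p) :
    Real.exp (-lam * ∑ i ∈ Finset.Icc (k + 1) p, a i) * a k ≤
      (((k : ℝ) + 2) / ((p : ℝ) + 2)) ^ lam * ((k : ℝ) + 1)⁻¹ := by
  have hs : Real.log ((p : ℝ) + 2) - Real.log ((k : ℝ) + 2) ≤
      ∑ i ∈ Finset.Icc (k + 1) p, a i := by
    have he : (∑ i ∈ Finset.Icc (k + 1) p, a i) =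
        ∑ i ∈ Finset.Icc (k + 1) p, 1 / ((i : ℝ) + 1) :=
      Finset.sum_congr rfl fun i _ => ha i
    rw [he]; exact log_telescope k p hkp
  have hexp : Real.exp (-lam * ∑ i ∈ Finset.Icc (k + 1) p, a i) ≤
      (((k : ℝ) + 2) / ((p : ℝ) + 2)) ^ lam := by
    rw [Real.rpow_def_of_pos (by positivity)]
    apply Real.exp_le_exp.2
    rw [Real.log_div (by positivity : (0:ℝ) < (k:ℝ)+2).ne' (by positivity : (0:ℝ) < (p:ℝ)+2).ne']
    nlinarith [mul_le_mul_of_nonneg_left hs hlam.le]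
  have hak : a k = ((k : ℝ) + 1)⁻¹ := by rw [ha k, one_div]
  rw [hak]
  exact mul_le_mul_of_nonneg_right hexp (by positivity)
private lemma caseA_bound {C lam : ℝ} (hC : 0 < C) (hlam : 0 < lam) (hlam1 : 1 < lam)
    {a : ℕ → ℝ} (ha : ∀ n : ℕ, a n = 1 / ((n : ℝ) + 1))
    (n₀ m k : ℕ) (hk1 : n₀ ≤ k) (hk2 : k ≤ n₀ + m) {b : ℝ}
    (hbeq : b = Real.exp (-lam * ∑ i ∈ Finset.Icc (k + 1) (n₀ + m), a i) * a k) :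
    Real.exp (-C / b) ≤ Real.exp (-C * (n₀ : ℝ)) * Real.exp (-(C / 2)) ^ m := by
  have hpos : 0 < b := by rw [hbeq, ha k]; positivity
  set P : ℝ := (n₀ : ℝ) + (m : ℝ) + 2 with hP
  have hP0 : (0:ℝ) < P := by positivity
  have hkn : (n₀ : ℝ) ≤ (k : ℝ) := by exact_mod_cast hk1
  have hkP : (k : ℝ) + 2 ≤ P := by
    have : (k : ℝ) ≤ (n₀ : ℝ) + (m : ℝ) := by exact_mod_cast hk2
    linarith
  have hb : b ≤ ((n₀ : ℝ) + 2) / (((n₀ : ℝ) + 1) * P) := by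
    rw [hbeq]
    have h1 := term_bound hlam ha k (n₀ + m) hk2
    have hcast : ((n₀ + m : ℕ) : ℝ) + 2 = P := by push_cast; ring
    rw [hcast] at h1
    refine h1.trans ?_
    have hr0' : (0:ℝ) < ((k : ℝ) + 2) / P := by positivity
    have hr1' : ((k : ℝ) + 2) / P ≤ 1 := by rw [div_le_one hP0]; linarith
    have h2 : (((k : ℝ) + 2) / P) ^ lam ≤ ((k : ℝ) + 2) / P := by
      calc (((k : ℝ) + 2) / P) ^ lam ≤ (((k : ℝ) + 2) / P) ^ (1:ℝ) :=
            Real.rpow_le_rpow_of_exponent_ge hr0' hr1' hlam1.le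
        _ = ((k : ℝ) + 2) / P := Real.rpow_one _
    have h3 : (((k : ℝ) + 2) / P) ^ lam * ((k : ℝ) + 1)⁻¹ ≤
        ((k : ℝ) + 2) / P * ((k : ℝ) + 1)⁻¹ :=
      mul_le_mul_of_nonneg_right h2 (by positivity)
    refine h3.trans ?_
    rw [← div_eq_mul_inv, div_div, div_le_div_iff₀ (by positivity) (by positivity)]
    have hquad : ((k : ℝ) + 2) * ((n₀ : ℝ) + 1) ≤ ((n₀ : ℝ) + 2) * ((k : ℝ) + 1) := by
      nlinarith
    nlinarith [mul_le_mul_of_nonneg_left hquad hP0.le]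
  have hCB : C * (n₀ : ℝ) + C / 2 * (m : ℝ) ≤
      C / (((n₀ : ℝ) + 2) / (((n₀ : ℝ) + 1) * P)) := by
    rw [div_div_eq_mul_div, le_div_iff₀ (by positivity : (0:ℝ) < (n₀ : ℝ) + 2), hP]
    have hm0 : (0:ℝ) ≤ (m : ℝ) := Nat.cast_nonneg m
    have hn0 : (0:ℝ) ≤ (n₀ : ℝ) := Nat.cast_nonneg n₀
    nlinarith [mul_nonneg (mul_nonneg hC.le hm0) hn0]
  have hmono : C / (((n₀ : ℝ) + 2) / (((n₀ : ℝ) + 1) * P)) ≤ C / b :=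
    div_le_div_of_nonneg_left hC.le hpos hb
  calc Real.exp (-C / b)
      = Real.exp (-(C / b)) := by rw [neg_div]
    _ ≤ Real.exp (-(C * (n₀ : ℝ) + C / 2 * (m : ℝ))) :=
        Real.exp_le_exp.2 (by linarith [hCB.trans hmono])
    _ = Real.exp (-C * (n₀ : ℝ)) * Real.exp (-(C / 2)) ^ m := by
        rw [← Real.exp_nat_mul, ← Real.exp_add]
        congr 1
        ring

private lemma caseB_beta_le {lam : ℝ} (hlam : 0 < lam) (hlam1 : lam ≤ 1)
    {a : ℕ → ℝ} (ha : ∀ n : ℕ, a n = 1 / ((n : ℝ) + 1))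
    (n₀ m k : ℕ) (hk1 : n₀ ≤ k) (hk2 : k ≤ n₀ + m) {b : ℝ}
    (hbeq : b = Real.exp (-lam * ∑ i ∈ Finset.Icc (k + 1) (n₀ + m), a i) * a k) :
    b ≤ 2 / (((n₀ : ℝ) + 2) ^ (1 - lam) * (((n₀ : ℝ) + 2) + (m : ℝ)) ^ lam) := by
  obtain ⟨y, hy⟩ : ∃ y : ℝ, y = (n₀ : ℝ) + 2 := ⟨_, rfl⟩
  obtain ⟨P, hP⟩ : ∃ P : ℝ, P = y + (m : ℝ) := ⟨_, rfl⟩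
  have hn0 : (0:ℝ) ≤ (n₀ : ℝ) := Nat.cast_nonneg n₀
  have hm0 : (0:ℝ) ≤ (m : ℝ) := Nat.cast_nonneg m
  have hy0 : (0:ℝ) < y := by rw [hy]; linarith
  have hP0 : (0:ℝ) < P := by rw [hP]; linarith
  have hky : y ≤ (k : ℝ) + 2 := by
    have hkc : (n₀ : ℝ) ≤ (k : ℝ) := by exact_mod_cast hk1
    rw [hy]; linarith
  rw [← hy, ← hP, hbeq]
  have h1 := term_bound hlam ha k (n₀ + m) hk2
  have hcast : ((n₀ + m : ℕ) : ℝ) + 2 = P := by rw [hP, hy]; push_cast; ring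
  rw [hcast] at h1
  refine h1.trans ?_
  have hk20 : (0:ℝ) < (k : ℝ) + 2 := by positivity
  have e1 : (((k : ℝ) + 2) / P) ^ lam = ((k : ℝ) + 2) ^ lam * (P ^ lam)⁻¹ := by
    rw [Real.div_rpow hk20.le hP0.le, div_eq_mul_inv]
  have e2 : ((k : ℝ) + 2) ^ lam = ((k : ℝ) + 2) ^ (lam - 1) * ((k : ℝ) + 2) ^ (1:ℝ) := by
    rw [← Real.rpow_add hk20]
    congr 1
    ring
  rw [Real.rpow_one] at e2
  have e3 : ((k : ℝ) + 2) ^ (lam - 1) ≤ y ^ (lam - 1) :=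
    Real.rpow_le_rpow_of_nonpos hy0 hky (by linarith)
  have e4 : ((k : ℝ) + 2) * ((k : ℝ) + 1)⁻¹ ≤ 2 := by
    rw [← div_eq_mul_inv, div_le_iff₀ (by positivity : (0:ℝ) < (k : ℝ) + 1)]
    have : (0:ℝ) ≤ (k : ℝ) := Nat.cast_nonneg k
    linarith
  have e5 : y ^ (lam - 1) = (y ^ (1 - lam))⁻¹ := by
    rw [show lam - 1 = -(1 - lam) by ring, Real.rpow_neg hy0.le]
  calc (((k : ℝ) + 2) / P) ^ lam * ((k : ℝ) + 1)⁻¹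
      = ((k : ℝ) + 2) ^ (lam - 1) * (((k : ℝ) + 2) * ((k : ℝ) + 1)⁻¹) *
          (P ^ lam)⁻¹ := by rw [e1, e2]; ring
    _ ≤ y ^ (lam - 1) * 2 * (P ^ lam)⁻¹ := by
        apply mul_le_mul_of_nonneg_right _ (by positivity)
        apply mul_le_mul e3 e4 (by positivity)
        exact (Real.rpow_pos_of_pos hy0 _).le
    _ = 2 / (y ^ (1 - lam) * P ^ lam) := by
        rw [e5, div_eq_mul_inv, mul_inv]
        ring

private lemma caseB_bound {C lam : ℝ} (hC : 0 < C) (hlam : 0 < lam) (hlam1 : lam ≤ 1)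
    (n₀ m : ℕ) {b : ℝ} (hpos : 0 < b)
    (hb : b ≤ 2 / (((n₀ : ℝ) + 2) ^ (1 - lam) * (((n₀ : ℝ) + 2) + (m : ℝ)) ^ lam)) :
    Real.exp (-C / b) ≤ Real.exp (-(C / 2) * (n₀ : ℝ)) *
      (Real.exp (-(C / 2 * (lam / (1 + (2:ℝ) ^ (1 / lam))))) ^ m +
        Real.exp (-(C / 4 * (m : ℝ) ^ lam))) := by
  obtain ⟨K, hK0, hKdef⟩ : ∃ K : ℝ, 0 < K ∧ K = (2:ℝ) ^ (1 / lam) :=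
    ⟨_, Real.rpow_pos_of_pos (by norm_num) _, rfl⟩
  obtain ⟨y, hy⟩ : ∃ y : ℝ, y = (n₀ : ℝ) + 2 := ⟨_, rfl⟩
  have hn0 : (0:ℝ) ≤ (n₀ : ℝ) := Nat.cast_nonneg n₀
  have hm0 : (0:ℝ) ≤ (m : ℝ) := Nat.cast_nonneg m
  have hy0 : (0:ℝ) < y := by rw [hy]; linarith
  have hy1 : (1:ℝ) ≤ y := by rw [hy]; linarith
  obtain ⟨D, hD⟩ : ∃ D : ℝ, D = y ^ (1 - lam) * (y + (m : ℝ)) ^ lam := ⟨_, rfl⟩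
  have hD0 : (0:ℝ) < D := by
    rw [hD]
    exact mul_pos (Real.rpow_pos_of_pos hy0 _) (Real.rpow_pos_of_pos (by linarith) _)
  have hb' : b ≤ 2 / D := by rw [hD, hy]; exact hb
  have hmono : C / (2 / D) ≤ C / b := div_le_div_of_nonneg_left hC.le hpos hb'
  have hCD : C / (2 / D) = C * D / 2 := div_div_eq_mul_div C 2 D
  rw [hCD] at hmono
  have hEb := bernoulli_lower hlam hlam1 hy0 hm0
  have hDE : D = (y + (m : ℝ)) ^ lam * y ^ (1 - lam) := by rw [hD]; ring
  rw [← hKdef]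
  by_cases hcase : (m : ℝ) ≤ K * y
  · have hfrac : lam / (1 + K) * (m : ℝ) ≤ lam * (m : ℝ) * y / (y + (m : ℝ)) := by
      rw [div_mul_eq_mul_div,
        div_le_div_iff₀ (by linarith) (by linarith : (0:ℝ) < y + (m : ℝ))]
      nlinarith [mul_nonneg (mul_nonneg hlam.le hm0) (sub_nonneg.2 hcase)]
    have hDn : (n₀ : ℝ) + lam / (1 + K) * (m : ℝ) ≤ D := by
      rw [hDE]
      have hyeq : y = (n₀ : ℝ) + 2 := hy
      linarith [hEb, hfrac]
    have hmul := mul_le_mul_of_nonneg_left hDn (by positivity : (0:ℝ) ≤ C / 2)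
    calc Real.exp (-C / b)
        = Real.exp (-(C / b)) := by rw [neg_div]
      _ ≤ Real.exp (-(C / 2 * (n₀ : ℝ) + C / 2 * (lam / (1 + K)) * (m : ℝ))) :=
          Real.exp_le_exp.2 (by nlinarith [hmono, hmul])
      _ = Real.exp (-(C / 2) * (n₀ : ℝ)) * Real.exp (-(C / 2 * (lam / (1 + K)))) ^ m := by
          rw [← Real.exp_nat_mul, ← Real.exp_add]
          congr 1
          ring
      _ ≤ _ := by
          apply mul_le_mul_of_nonneg_left _ (Real.exp_pos _).le
          exact le_add_of_nonneg_right (Real.exp_pos _).le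
  · push_neg at hcase
    have hEt := tail_lower (m := (m:ℝ)) hlam hlam1 hy1 (by rw [← hKdef]; exact hcase.le)
    have hDn : (n₀ : ℝ) + (m : ℝ) ^ lam / 2 ≤ D := by
      rw [hDE]
      have hyeq : y = (n₀ : ℝ) + 2 := hy
      linarith [hEt]
    have hmul := mul_le_mul_of_nonneg_left hDn (by positivity : (0:ℝ) ≤ C / 2)
    calc Real.exp (-C / b)
        = Real.exp (-(C / b)) := by rw [neg_div]
      _ ≤ Real.exp (-(C / 2 * (n₀ : ℝ) + C / 4 * (m : ℝ) ^ lam)) :=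
          Real.exp_le_exp.2 (by nlinarith [hmono, hmul])
      _ = Real.exp (-(C / 2) * (n₀ : ℝ)) * Real.exp (-(C / 4 * (m : ℝ) ^ lam)) := by
          rw [← Real.exp_add]
          congr 1
          ring
      _ ≤ _ := by
          apply mul_le_mul_of_nonneg_left _ (Real.exp_pos _).le
          exact le_add_of_nonneg_left (pow_nonneg (Real.exp_pos _).le m)
/-- Let C > 0, λ > 0, a_n = 1/(n+1). For n > n₀ let
β_n = max_{n₀ ≤ k ≤ n−1} [exp(−λ Σ_{i=k+1}^{n−1} a_i) a_k]. Then, as n₀ → ∞,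
Σ_{n=n₀+1}^∞ exp(−C/β_n) = O(exp(−C n₀)) if λ > 1, and = O(exp(−(C/2) n₀)) if λ ≤ 1. -/
theorem stmt7 (C lam : ℝ) (hC : 0 < C) (hlam : 0 < lam)
    (a : ℕ → ℝ) (ha : ∀ n : ℕ, a n = 1 / ((n : ℝ) + 1))
    (β : ℕ → ℕ → ℝ)
    (hβ : ∀ n₀ n : ℕ, n₀ < n →
      IsGreatest
        ((fun k => Real.exp (-lam * ∑ i ∈ Finset.Icc (k + 1) (n - 1), a i) * a k) ''
          Set.Icc n₀ (n - 1)) (β n₀ n)) :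
    (1 < lam →
      (fun n₀ : ℕ => ∑' m : ℕ, Real.exp (-C / β n₀ (n₀ + 1 + m))) =O[atTop]
        (fun n₀ : ℕ => Real.exp (-C * (n₀ : ℝ)))) ∧
    (lam ≤ 1 →
      (fun n₀ : ℕ => ∑' m : ℕ, Real.exp (-C / β n₀ (n₀ + 1 + m))) =O[atTop]
        (fun n₀ : ℕ => Real.exp (-(C / 2) * (n₀ : ℝ)))) := by
  have key : ∀ n₀ m : ℕ, 0 < β n₀ (n₀ + 1 + m) ∧
      ∃ k : ℕ, n₀ ≤ k ∧ k ≤ n₀ + m ∧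
        β n₀ (n₀ + 1 + m) =
          Real.exp (-lam * ∑ i ∈ Finset.Icc (k + 1) (n₀ + m), a i) * a k := by
    intro n₀ m
    have h := (hβ n₀ (n₀ + 1 + m) (by omega)).1
    have hsub : n₀ + 1 + m - 1 = n₀ + m := by omega
    rw [hsub] at h
    obtain ⟨k, hk, hfk⟩ := h
    rw [Set.mem_Icc] at hk
    refine ⟨?_, k, hk.1, hk.2, hfk.symm⟩
    rw [← hfk]
    dsimp only
    rw [ha k]
    positivity
  constructor
  · -- case 1 < lam
    intro hlam1
    set r : ℝ := Real.exp (-(C / 2)) with hr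
    have hr0 : (0:ℝ) ≤ r := (Real.exp_pos _).le
    have hr1 : r < 1 := Real.exp_lt_one_iff.2 (by linarith)
    have hsumg : Summable (fun m : ℕ => r ^ m) := summable_geometric_of_lt_one hr0 hr1
    have bound : ∀ n₀ m : ℕ, Real.exp (-C / β n₀ (n₀ + 1 + m)) ≤
        Real.exp (-C * (n₀ : ℝ)) * r ^ m := by
      intro n₀ m
      obtain ⟨hpos, k, hk1, hk2, hbeq⟩ := key n₀ m
      exact caseA_bound hC hlam hlam1 ha n₀ m k hk1 hk2 hbeq
    rw [isBigO_iff]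
    refine ⟨∑' m : ℕ, r ^ m, Filter.Eventually.of_forall fun n₀ => ?_⟩
    have hsumf : Summable (fun m : ℕ => Real.exp (-C / β n₀ (n₀ + 1 + m))) :=
      Summable.of_nonneg_of_le (fun m => (Real.exp_pos _).le) (bound n₀) (hsumg.mul_left _)
    have htsum : (∑' m : ℕ, Real.exp (-C / β n₀ (n₀ + 1 + m))) ≤
        Real.exp (-C * (n₀ : ℝ)) * ∑' m : ℕ, r ^ m := by
      calc (∑' m : ℕ, Real.exp (-C / β n₀ (n₀ + 1 + m)))
          ≤ ∑' m : ℕ, Real.exp (-C * (n₀ : ℝ)) * r ^ m :=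
            Summable.tsum_le_tsum (bound n₀) hsumf (hsumg.mul_left _)
        _ = Real.exp (-C * (n₀ : ℝ)) * ∑' m : ℕ, r ^ m := tsum_mul_left
    rw [Real.norm_eq_abs, Real.norm_eq_abs,
      abs_of_nonneg (tsum_nonneg fun m => (Real.exp_pos _).le),
      abs_of_nonneg (Real.exp_pos _).le, mul_comm]
    exact htsum
  · -- case lam ≤ 1
    intro hlam1
    obtain ⟨r2, hr20, hr21, hr2⟩ : ∃ r2 : ℝ, 0 ≤ r2 ∧ r2 < 1 ∧
        r2 = Real.exp (-(C / 2 * (lam / (1 + (2:ℝ) ^ (1 / lam))))) := by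
      refine ⟨_, (Real.exp_pos _).le, Real.exp_lt_one_iff.2 ?_, rfl⟩
      have hK0 : (0:ℝ) < (2:ℝ) ^ (1 / lam) := Real.rpow_pos_of_pos (by norm_num) _
      have : 0 < lam / (1 + (2:ℝ) ^ (1 / lam)) := by positivity
      nlinarith
    obtain ⟨G, hG⟩ : ∃ G : ℕ → ℝ,
        G = fun m : ℕ => r2 ^ m + Real.exp (-(C / 4 * (m : ℝ) ^ lam)) := ⟨_, rfl⟩
    have hsumG : Summable G := by
      rw [hG]
      exact (summable_geometric_of_lt_one hr20 hr21).add
        (summable_exp_neg_rpow (by positivity : (0:ℝ) < C / 4) hlam)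
    have bound : ∀ n₀ m : ℕ, Real.exp (-C / β n₀ (n₀ + 1 + m)) ≤
        Real.exp (-(C / 2) * (n₀ : ℝ)) * G m := by
      intro n₀ m
      obtain ⟨hpos, k, hk1, hk2, hbeq⟩ := key n₀ m
      have hble := caseB_beta_le hlam hlam1 ha n₀ m k hk1 hk2 hbeq
      have h := caseB_bound (lam := lam) hC hlam hlam1 n₀ m hpos hble
      rw [hG, ← hr2] at *
      exact h
    rw [isBigO_iff]
    refine ⟨∑' m : ℕ, G m, Filter.Eventually.of_forall fun n₀ => ?_⟩
    have hsumf : Summable (fun m : ℕ => Real.exp (-C / β n₀ (n₀ + 1 + m))) :=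
      Summable.of_nonneg_of_le (fun m => (Real.exp_pos _).le) (bound n₀) (hsumG.mul_left _)
    have htsum : (∑' m : ℕ, Real.exp (-C / β n₀ (n₀ + 1 + m))) ≤
        Real.exp (-(C / 2) * (n₀ : ℝ)) * ∑' m : ℕ, G m := by
      calc (∑' m : ℕ, Real.exp (-C / β n₀ (n₀ + 1 + m)))
          ≤ ∑' m : ℕ, Real.exp (-(C / 2) * (n₀ : ℝ)) * G m :=
            Summable.tsum_le_tsum (bound n₀) hsumf (hsumG.mul_left _)
        _ = Real.exp (-(C / 2) * (n₀ : ℝ)) * ∑' m : ℕ, G m := tsum_mul_left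
    rw [Real.norm_eq_abs, Real.norm_eq_abs,
      abs_of_nonneg (tsum_nonneg fun m => (Real.exp_pos _).le),
      abs_of_nonneg (Real.exp_pos _).le, mul_comm]
    exact htsum
end

section
/- Let C > 0 and λ > 0 be constants, μ ∈ (0,1), and a_n = 1/(n+1)^μ for n ≥ 0. For integers n > n₀ ≥ 0 let β_n = max_{n₀ ≤ k ≤ n−1} [ exp(−λ Σ_{i=k+1}^{n−1} a_i) · a_k ]. Then, as n₀ → ∞, Σ_{n=n₀+1}^{∞} exp(−C/β_n) = O( n₀^{1−μ} exp(−C (n₀−1)^μ) ). -/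
/-!
Once `exp (-λ a (k+1)) * a k ≤ a (k+1)` holds for all `k ≥ K`, the weights
`exp (-λ ∑_{i=k+1}^{n-1} a i) * a k` increase in `k` on `[K, n-1]`, so for `n₀ ≥ K` the
maximum `β n₀ n` is the last weight `a (n-1) = n^(-μ)`, and the series becomes
`∑_{j ≥ 1} exp (-C (n₀+j)^μ)`. By concavity,
`(n₀+j)^μ - n₀^μ ≥ μ 2^(μ-1) max(n₀, j)^(μ-1) j`, so each term is at most `exp (-C n₀^μ)`
times `exp (-c n₀^(μ-1) j) + exp (-c j^μ)`: the first part is geometric with sum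
`O(n₀^(1-μ))`, the second is summable.
-/

open Filter Asymptotics Real

section RpowGap

variable {μ x y j : ℝ}

theorem mul_rpow_sub_one_mul_le_rpow_add_sub_rpow (hμ0 : 0 ≤ μ) (hμ1 : μ ≤ 1) (hx : 0 ≤ x)
    (hj : 0 < j) : μ * (x + j) ^ (μ - 1) * j ≤ (x + j) ^ μ - x ^ μ := by
  have hxj : 0 < x + j := by linarith
  have hbern := rpow_one_add_le_one_add_mul_self (s := x / (x + j) - 1)
    (by linarith [div_nonneg hx hxj.le]) hμ0 hμ1
  rw [add_sub_cancel, div_rpow hx hxj.le, div_le_iff₀ (rpow_pos_of_pos hxj μ)] at hbern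
  have hexpand : (1 + μ * (x / (x + j) - 1)) * (x + j) ^ μ
      = (x + j) ^ μ - μ * (x + j) ^ (μ - 1) * j := by
    rw [rpow_sub_one hxj.ne']
    field_simp
    ring
  linarith

theorem mul_two_rpow_mul_rpow_mul_le_rpow_add_sub_rpow (hμ0 : 0 ≤ μ) (hμ1 : μ ≤ 1)
    (hx : 0 ≤ x) (hj : 0 < j) (hxy : x ≤ y) (hjy : j ≤ y) :
    μ * 2 ^ (μ - 1) * y ^ (μ - 1) * j ≤ (x + j) ^ μ - x ^ μ := by
  have hy : 0 < y := hj.trans_le hjy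
  have hmono : (2 * y) ^ (μ - 1) ≤ (x + j) ^ (μ - 1) :=
    rpow_le_rpow_of_nonpos (by linarith) (by linarith) (by linarith)
  rw [mul_rpow zero_le_two hy.le] at hmono
  calc μ * 2 ^ (μ - 1) * y ^ (μ - 1) * j = μ * (2 ^ (μ - 1) * y ^ (μ - 1)) * j := by ring
    _ ≤ μ * (x + j) ^ (μ - 1) * j := by gcongr
    _ ≤ _ := mul_rpow_sub_one_mul_le_rpow_add_sub_rpow hμ0 hμ1 hx hj

theorem exp_neg_mul_add_rpow_le {C : ℝ} (hC : 0 ≤ C) (hμ0 : 0 ≤ μ) (hμ1 : μ ≤ 1) (hx : 0 < x)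
    (hj : 0 < j) :
    exp (-C * (x + j) ^ μ) ≤ exp (-C * x ^ μ) *
      (exp (-(C * μ * 2 ^ (μ - 1) * x ^ (μ - 1)) * j) +
        exp (-(C * μ * 2 ^ (μ - 1)) * j ^ μ)) := by
  have hsplit : ∀ s, -C * (x + j) ^ μ ≤ -C * x ^ μ + s →
      exp (-C * (x + j) ^ μ) ≤ exp (-C * x ^ μ) * exp s := fun s hs => by
    rw [← exp_add]; exact exp_le_exp.mpr hs
  rcases le_total j x with hjx | hxj
  · refine (hsplit _ ?_).trans
      (mul_le_mul_of_nonneg_left (le_add_of_nonneg_right (exp_nonneg _)) (exp_nonneg _))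
    have := mul_le_mul_of_nonneg_left
      (mul_two_rpow_mul_rpow_mul_le_rpow_add_sub_rpow hμ0 hμ1 hx.le hj le_rfl hjx) hC
    linarith
  · refine (hsplit _ ?_).trans
      (mul_le_mul_of_nonneg_left (le_add_of_nonneg_left (exp_nonneg _)) (exp_nonneg _))
    have hgap := mul_two_rpow_mul_rpow_mul_le_rpow_add_sub_rpow hμ0 hμ1 hx.le hj hxj le_rfl
    rw [mul_assoc (μ * 2 ^ (μ - 1)), ← rpow_add_one hj.ne', sub_add_cancel] at hgap
    have := mul_le_mul_of_nonneg_left hgap hC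
    linarith

end RpowGap

theorem hasSum_exp_neg_mul_succ {d : ℝ} (hd : 0 < d) :
    HasSum (fun m : ℕ => exp (-d * (m + 1))) (exp d - 1)⁻¹ := by
  have hr : exp (-d) < 1 := exp_lt_one_iff.mpr (by linarith)
  have hterm : (fun m : ℕ => exp (-d * (m + 1))) = fun m => exp (-d) * exp (-d) ^ m := by
    ext m
    rw [← exp_nat_mul, ← exp_add]
    ring_nf
  have hsum : exp (-d) * (1 - exp (-d))⁻¹ = (exp d - 1)⁻¹ := by
    have : 1 < exp d := one_lt_exp_iff.mpr hd
    rw [exp_neg]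
    field_simp
  rw [hterm, ← hsum]
  exact (hasSum_geometric_of_lt_one (exp_nonneg _) hr).mul_left _

theorem tsum_exp_neg_mul_succ_le {d : ℝ} (hd : 0 < d) :
    ∑' m : ℕ, exp (-d * (m + 1)) ≤ d⁻¹ := by
  rw [(hasSum_exp_neg_mul_succ hd).tsum_eq]
  exact inv_anti₀ hd (by linarith [add_one_le_exp d])

theorem summable_exp_neg_mul_rpow {c μ : ℝ} (hc : 0 < c) (hμ : 0 < μ) :
    Summable fun n : ℕ => exp (-c * (n : ℝ) ^ μ) := by
  have h := (isLittleO_exp_neg_mul_rpow_atTop hc (-2 / μ)).comp_tendsto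
    ((tendsto_rpow_atTop hμ).comp tendsto_natCast_atTop_atTop)
  refine summable_of_isBigO_nat (summable_nat_rpow.mpr (by norm_num : (-2 : ℝ) < -1))
    (h.isBigO.congr_right fun n => ?_)
  simp only [Function.comp]
  rw [← rpow_mul n.cast_nonneg]
  field_simp

theorem summable_exp_neg_mul_succ_rpow {c μ : ℝ} (hc : 0 < c) (hμ : 0 < μ) :
    Summable fun m : ℕ => exp (-c * ((m : ℝ) + 1) ^ μ) := by
  exact_mod_cast (summable_nat_add_iff 1).mpr (summable_exp_neg_mul_rpow hc hμ)

theorem tsum_exp_neg_mul_add_rpow_le {C μ x : ℝ} (hC : 0 < C) (hμ0 : 0 < μ) (hμ1 : μ ≤ 1)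
    (hx : 0 < x) :
    ∑' m : ℕ, exp (-C * (x + m + 1) ^ μ) ≤ exp (-C * x ^ μ) *
      ((C * μ * 2 ^ (μ - 1) * x ^ (μ - 1))⁻¹ +
        ∑' m : ℕ, exp (-(C * μ * 2 ^ (μ - 1)) * ((m : ℝ) + 1) ^ μ)) := by
  set c := C * μ * 2 ^ (μ - 1)
  have hd : 0 < c * x ^ (μ - 1) := by positivity
  have hgeom := hasSum_exp_neg_mul_succ hd
  have hslow := summable_exp_neg_mul_succ_rpow (c := c) (by positivity) hμ0
  have hterm : ∀ m : ℕ, exp (-C * (x + m + 1) ^ μ) ≤ exp (-C * x ^ μ) *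
      (exp (-(c * x ^ (μ - 1)) * (m + 1)) + exp (-c * ((m : ℝ) + 1) ^ μ)) := fun m => by
    rw [add_assoc]
    exact exp_neg_mul_add_rpow_le hC.le hμ0.le hμ1 hx (by positivity)
  have hmajorant := (hgeom.summable.add hslow).mul_left (exp (-C * x ^ μ))
  calc ∑' m : ℕ, exp (-C * (x + m + 1) ^ μ)
      ≤ ∑' m : ℕ, exp (-C * x ^ μ) *
          (exp (-(c * x ^ (μ - 1)) * (m + 1)) + exp (-c * ((m : ℝ) + 1) ^ μ)) :=
        (hmajorant.of_nonneg_of_le (fun _ => exp_nonneg _) hterm).tsum_le_tsum hterm hmajorant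
    _ = exp (-C * x ^ μ) * (∑' m : ℕ, exp (-(c * x ^ (μ - 1)) * (m + 1)) +
          ∑' m : ℕ, exp (-c * ((m : ℝ) + 1) ^ μ)) := by
        rw [tsum_mul_left, hgeom.summable.tsum_add hslow]
    _ ≤ _ := by gcongr; exact tsum_exp_neg_mul_succ_le hd

theorem isBigO_tsum_exp_neg_mul_add_rpow {C μ : ℝ} (hC : 0 < C) (hμ0 : 0 < μ) (hμ1 : μ ≤ 1) :
    (fun x : ℝ => ∑' m : ℕ, exp (-C * (x + m + 1) ^ μ)) =O[atTop]
      fun x => x ^ (1 - μ) * exp (-C * x ^ μ) := by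
  set c := C * μ * 2 ^ (μ - 1)
  set K := ∑' m : ℕ, exp (-c * ((m : ℝ) + 1) ^ μ)
  have hK : 0 ≤ K := tsum_nonneg fun _ => exp_nonneg _
  refine IsBigO.of_bound (c⁻¹ + K) ?_
  filter_upwards [eventually_ge_atTop 1] with x hx
  have hx0 : 0 < x := by linarith
  have hinv : (c * x ^ (μ - 1))⁻¹ = c⁻¹ * x ^ (1 - μ) := by
    rw [mul_inv, ← rpow_neg hx0.le, neg_sub]
  have hone : 1 ≤ x ^ (1 - μ) := one_le_rpow hx (by linarith)
  rw [norm_of_nonneg (tsum_nonneg fun _ => exp_nonneg _), norm_of_nonneg (by positivity)]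
  calc _ ≤ exp (-C * x ^ μ) * ((c * x ^ (μ - 1))⁻¹ + K) :=
        tsum_exp_neg_mul_add_rpow_le hC hμ0 hμ1 hx0
    _ ≤ exp (-C * x ^ μ) * ((c⁻¹ + K) * x ^ (1 - μ)) := by
        gcongr
        rw [hinv]
        nlinarith
    _ = _ := by ring

section Stepsize

variable {lam mu : ℝ} {a : ℕ → ℝ}

theorem exp_neg_mul_sum_Icc_mul_le {K k : ℕ}
    (hstep : ∀ n, K ≤ n → exp (-lam * a (n + 1)) * a n ≤ a (n + 1)) (hk : K ≤ k) :
    ∀ N, k ≤ N → exp (-lam * ∑ i ∈ Finset.Icc (k + 1) N, a i) * a k ≤ a N := by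
  intro N hN
  induction N, hN using Nat.le_induction with
  | base => simp
  | succ N hkN ih =>
    rw [Finset.sum_Icc_succ_top (by omega)]
    calc exp (-lam * (∑ i ∈ Finset.Icc (k + 1) N, a i + a (N + 1))) * a k
        = exp (-lam * a (N + 1)) * (exp (-lam * ∑ i ∈ Finset.Icc (k + 1) N, a i) * a k) := by
          rw [mul_add, exp_add]; ring
      _ ≤ exp (-lam * a (N + 1)) * a N := by gcongr
      _ ≤ a (N + 1) := hstep N (hk.trans hkN)

theorem eq_of_isGreatest_exp_neg_mul_sum_Icc_mul {K n₀ n : ℕ} {b : ℝ}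
    (hstep : ∀ n, K ≤ n → exp (-lam * a (n + 1)) * a n ≤ a (n + 1)) (hK : K ≤ n₀) (hn : n₀ < n)
    (hb : IsGreatest ((fun k => exp (-lam * ∑ i ∈ Finset.Icc (k + 1) (n - 1), a i) * a k) ''
      Set.Icc n₀ (n - 1)) b) : b = a (n - 1) := by
  refine hb.unique ⟨⟨n - 1, ⟨by omega, le_rfl⟩, by simp⟩, ?_⟩
  rintro _ ⟨k, ⟨hk₀, hk⟩, rfl⟩
  exact exp_neg_mul_sum_Icc_mul_le hstep (hK.trans hk₀) _ hk

theorem exp_neg_mul_one_div_rpow_mul_le (hmu : mu ≤ 1) {p : ℝ} (hp : 0 < p)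
    (hlam : (p + 1) ^ mu ≤ lam * p) :
    exp (-lam * (1 / (p + 1) ^ mu)) * (1 / p ^ mu) ≤ 1 / (p + 1) ^ mu := by
  have hp1 : 0 < (p + 1) ^ mu := by positivity
  have hpmu : 0 < p ^ mu := by positivity
  have hgrowth : (p + 1) ^ mu ≤ p ^ mu * exp (lam * (1 / (p + 1) ^ mu)) :=
    calc (p + 1) ^ mu = p ^ mu * (1 + 1 / p) ^ mu := by
          rw [← mul_rpow hp.le (by positivity)]; field_simp
      _ ≤ p ^ mu * (1 / p + 1) := by
          gcongr; rw [add_comm]; exact rpow_le_self_of_one_le (by simp [hp.le]) hmu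
      _ ≤ p ^ mu * exp (1 / p) := by gcongr; exact add_one_le_exp _
      _ ≤ p ^ mu * exp (lam * (1 / (p + 1) ^ mu)) := by
          gcongr
          rw [mul_one_div, div_le_div_iff₀ hp hp1]
          linarith
  rw [mul_one_div, div_le_div_iff₀ hpmu hp1, one_mul, neg_mul, exp_neg,
    inv_mul_le_iff₀ (exp_pos _)]
  linarith

theorem eventually_exp_neg_mul_mul_le (hlam : 0 < lam) (hmu : mu < 1)
    (ha : ∀ n : ℕ, a n = 1 / ((n : ℝ) + 1) ^ mu) :
    ∀ᶠ k in atTop, exp (-lam * a (k + 1)) * a k ≤ a (k + 1) := by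
  have hsmall : ∀ᶠ x : ℝ in atTop, x ^ (mu - 1) < lam / 2 := by
    have := tendsto_rpow_neg_atTop (y := 1 - mu) (by linarith)
    rw [neg_sub] at this
    exact this.eventually (gt_mem_nhds (half_pos hlam))
  have hshift : Tendsto (fun k : ℕ => (k : ℝ) + 1 + 1) atTop atTop :=
    tendsto_atTop_add_const_right _ _
      (tendsto_atTop_add_const_right _ _ tendsto_natCast_atTop_atTop)
  filter_upwards [hshift.eventually hsmall] with k hk
  have hk0 : 0 < (k : ℝ) + 1 + 1 := by positivity
  rw [ha, ha]
  push_cast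
  refine exp_neg_mul_one_div_rpow_mul_le hmu.le (by positivity) ?_
  have hsplit :
      ((k : ℝ) + 1 + 1) ^ mu = ((k : ℝ) + 1 + 1) ^ (mu - 1) * ((k : ℝ) + 1 + 1) := by
    rw [rpow_sub_one hk0.ne']; field_simp
  rw [hsplit]
  nlinarith [mul_lt_mul_of_pos_right hk hk0, (k.cast_nonneg : (0 : ℝ) ≤ k)]

end Stepsize

/-- Let C > 0, λ > 0, μ ∈ (0,1), and a_n = 1/(n+1)^μ. For n > n₀ let
β_n = max_{n₀ ≤ k ≤ n−1} [exp(−λ Σ_{i=k+1}^{n−1} a_i) a_k]. Then, as n₀ → ∞,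
Σ_{n=n₀+1}^∞ exp(−C/β_n) = O(n₀^{1−μ} exp(−C (n₀−1)^μ)). -/
theorem stmt8 (C lam mu : ℝ) (hC : 0 < C) (hlam : 0 < lam)
    (hmu0 : 0 < mu) (hmu1 : mu < 1)
    (a : ℕ → ℝ) (ha : ∀ n : ℕ, a n = 1 / ((n : ℝ) + 1) ^ mu)
    (β : ℕ → ℕ → ℝ)
    (hβ : ∀ n₀ n : ℕ, n₀ < n →
      IsGreatest
        ((fun k => Real.exp (-lam * ∑ i ∈ Finset.Icc (k + 1) (n - 1), a i) * a k) ''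
          Set.Icc n₀ (n - 1)) (β n₀ n)) :
    (fun n₀ : ℕ => ∑' m : ℕ, Real.exp (-C / β n₀ (n₀ + 1 + m))) =O[atTop]
      (fun n₀ : ℕ => (n₀ : ℝ) ^ (1 - mu) * Real.exp (-C * ((n₀ : ℝ) - 1) ^ mu)) := by
  obtain ⟨K, hstep⟩ := eventually_atTop.mp (eventually_exp_neg_mul_mul_le hlam hmu1 ha)
  have hβ_eq : ∀ n₀, K ≤ n₀ → ∀ m : ℕ, β n₀ (n₀ + 1 + m) = 1 / ((n₀ : ℝ) + m + 1) ^ mu := by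
    intro n₀ hn₀ m
    rw [eq_of_isGreatest_exp_neg_mul_sum_Icc_mul hstep hn₀ (by omega) (hβ n₀ _ (by omega)), ha,
      show n₀ + 1 + m - 1 = n₀ + m by omega]
    push_cast
    rfl
  have hsum : (fun n₀ : ℕ => ∑' m : ℕ, exp (-C / β n₀ (n₀ + 1 + m))) =ᶠ[atTop]
      fun n₀ : ℕ => ∑' m : ℕ, exp (-C * ((n₀ : ℝ) + m + 1) ^ mu) := by
    filter_upwards [eventually_ge_atTop K] with n₀ hn₀
    simp only [hβ_eq n₀ hn₀, div_div_eq_mul_div, div_one]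
  have hshift : (fun n : ℕ => (n : ℝ) ^ (1 - mu) * exp (-C * (n : ℝ) ^ mu)) =O[atTop]
      fun n : ℕ => (n : ℝ) ^ (1 - mu) * exp (-C * ((n : ℝ) - 1) ^ mu) := by
    refine (isBigO_refl _ _).mul (IsBigO.of_bound 1 ?_)
    filter_upwards [eventually_ge_atTop 1] with n hn
    have : ((n : ℝ) - 1) ^ mu ≤ (n : ℝ) ^ mu :=
      rpow_le_rpow (by simpa using hn) (by linarith) hmu0.le
    simp only [norm_of_nonneg (exp_nonneg _), one_mul]
    exact exp_le_exp.mpr (by nlinarith)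
  exact hsum.isBigO.trans (((isBigO_tsum_exp_neg_mul_add_rpow hC hmu0 hmu1.le).comp_tendsto
    tendsto_natCast_atTop_atTop).trans hshift)
end

section
/- Let h : ℝ^d → ℝ^d be continuously differentiable with Jacobian Dh, let P be a symmetric positive definite d×d real matrix, let N ⊆ ℝ^d be a convex set, and let κ ∈ (0,1) be such that ‖Dh(x)ᵀ P + P Dh(x) + I‖ ≤ κ for all x ∈ N, where I is the d×d identity and ‖·‖ is the operator norm. Let s ∈ ℝ and let x₀, x₁ : [s,∞) → ℝ^d be differentiable with x_i'(t) = h(x_i(t)) and x_i(t) ∈ N for all t ≥ s, i = 0,1. Then for all t ≥ s: ‖x₀(t) − x₁(t)‖ ≤ √(‖P‖ / λ_min(P)) · ‖x₀(s) − x₁(s)‖ · exp( −((1−κ)/(2‖P‖)) (t − s) ), where λ_min(P) is the smallest eigenvalue of P. -/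
open scoped RealInnerProductSpace

set_option maxHeartbeats 2000000
set_option synthInstance.maxHeartbeats 400000

/-- Let h : ℝ^d → ℝ^d be C¹ with Jacobian Dh, P a symmetric positive definite operator
with smallest eigenvalue λ_min, N a convex set, and κ ∈ (0,1) with
‖Dh(x)ᵀ P + P Dh(x) + I‖ ≤ κ for all x ∈ N. If x₀, x₁ solve ẋ = h(x) on [s,∞) and stay
in N, then ‖x₀(t) − x₁(t)‖ ≤ √(‖P‖/λ_min) ‖x₀(s) − x₁(s)‖ exp(−((1−κ)/(2‖P‖))(t − s)). -/
theorem stmt9 {d : ℕ}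
    (h : EuclideanSpace ℝ (Fin d) → EuclideanSpace ℝ (Fin d))
    (hh : ContDiff ℝ 1 h)
    (P : EuclideanSpace ℝ (Fin d) →L[ℝ] EuclideanSpace ℝ (Fin d))
    (hPsym : IsSelfAdjoint P)
    (hPpos : ∀ x : EuclideanSpace ℝ (Fin d), x ≠ 0 → 0 < ⟪P x, x⟫)
    (lmin : ℝ)
    (hlmin : IsLeast
      {t : ℝ | Module.End.HasEigenvalue
        (P : EuclideanSpace ℝ (Fin d) →ₗ[ℝ] EuclideanSpace ℝ (Fin d)) t} lmin)
    (N : Set (EuclideanSpace ℝ (Fin d))) (hN : Convex ℝ N)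
    (κ : ℝ) (hκ : κ ∈ Set.Ioo (0 : ℝ) 1)
    (hZ : ∀ x ∈ N,
      ‖ContinuousLinearMap.adjoint (fderiv ℝ h x) ∘L P + P ∘L fderiv ℝ h x +
        ContinuousLinearMap.id ℝ (EuclideanSpace ℝ (Fin d))‖ ≤ κ)
    (s : ℝ) (x₀ x₁ : ℝ → EuclideanSpace ℝ (Fin d))
    (hx₀d : ∀ t, s ≤ t → HasDerivAt x₀ (h (x₀ t)) t)
    (hx₀N : ∀ t, s ≤ t → x₀ t ∈ N)
    (hx₁d : ∀ t, s ≤ t → HasDerivAt x₁ (h (x₁ t)) t)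
    (hx₁N : ∀ t, s ≤ t → x₁ t ∈ N) :
    ∀ t, s ≤ t →
      ‖x₀ t - x₁ t‖ ≤
        Real.sqrt (‖P‖ / lmin) * ‖x₀ s - x₁ s‖ *
          Real.exp (-((1 - κ) / (2 * ‖P‖)) * (t - s)) := by
  classical
  -- eigenvector of the least eigenvalue
  obtain ⟨v, hvP, hv0⟩ := hlmin.1.exists_hasEigenvector
  have hPv : P v = lmin • v := by
    have := Module.End.HasEigenvector.apply_eq_smul ⟨hvP, hv0⟩
    simpa using this
  have hvnorm : 0 < ‖v‖ := norm_pos_iff.mpr hv0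
  have hlpos : 0 < lmin := by
    have h1 := hPpos v hv0
    rw [hPv, real_inner_smul_left, real_inner_self_eq_norm_sq] at h1
    nlinarith
  have hPnorm : 0 < ‖P‖ := by
    have h1 : ‖P v‖ ≤ ‖P‖ * ‖v‖ := P.le_opNorm v
    rw [hPv, norm_smul, Real.norm_eq_abs, abs_of_pos hlpos] at h1
    nlinarith
  -- quadratic form bounds
  have hupp : ∀ y : EuclideanSpace ℝ (Fin d), ⟪P y, y⟫ ≤ ‖P‖ * ‖y‖ ^ 2 := by
    intro y
    have h1 := real_inner_le_norm (P y) y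
    have h2 := P.le_opNorm y
    nlinarith [norm_nonneg y]
  have hlow : ∀ y : EuclideanSpace ℝ (Fin d), lmin * ‖y‖ ^ 2 ≤ ⟪P y, y⟫ := by
    intro y
    rcases eq_or_ne y 0 with rfl | hy0
    · simp
    · haveI : Nontrivial (EuclideanSpace ℝ (Fin d)) := nontrivial_of_ne v 0 hv0
      haveI : Nonempty { x : EuclideanSpace ℝ (Fin d) // x ≠ 0 } := ⟨⟨v, hv0⟩⟩
      have hbdd : BddBelow (Set.range fun x : { x : EuclideanSpace ℝ (Fin d) // x ≠ 0 } =>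
          ⟪P (x : EuclideanSpace ℝ (Fin d)), (x : EuclideanSpace ℝ (Fin d))⟫ /
            ‖(x : EuclideanSpace ℝ (Fin d))‖ ^ 2) := by
        refine ⟨0, ?_⟩
        rintro r ⟨x, rfl⟩
        exact div_nonneg (hPpos x x.2).le (sq_nonneg _)
      have heig : Module.End.HasEigenvalue
          (P : EuclideanSpace ℝ (Fin d) →ₗ[ℝ] EuclideanSpace ℝ (Fin d))
          (⨅ x : { x : EuclideanSpace ℝ (Fin d) // x ≠ 0 },
            ⟪P (x : EuclideanSpace ℝ (Fin d)), (x : EuclideanSpace ℝ (Fin d))⟫ /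
              ‖(x : EuclideanSpace ℝ (Fin d))‖ ^ 2) := by
        have := LinearMap.IsSymmetric.hasEigenvalue_iInf_of_finiteDimensional
          (T := (P : EuclideanSpace ℝ (Fin d) →ₗ[ℝ] EuclideanSpace ℝ (Fin d)))
          hPsym.isSymmetric
        simpa using this
      have hle : lmin ≤ ⟪P y, y⟫ / ‖y‖ ^ 2 :=
        le_trans (hlmin.2 heig) (ciInf_le hbdd ⟨y, hy0⟩)
      have hy2 : (0 : ℝ) < ‖y‖ ^ 2 := pow_pos (norm_pos_iff.mpr hy0) 2
      calc lmin * ‖y‖ ^ 2 ≤ (⟪P y, y⟫ / ‖y‖ ^ 2) * ‖y‖ ^ 2 := by nlinarith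
        _ = ⟪P y, y⟫ := by field_simp
  -- error and Lyapunov function
  set e : ℝ → EuclideanSpace ℝ (Fin d) := fun τ => x₀ τ - x₁ τ with he
  have hes : e s = x₀ s - x₁ s := rfl
  set V : ℝ → ℝ := fun τ => ⟪P (e τ), e τ⟫ with hV
  have hVnonneg : ∀ τ, 0 ≤ V τ := fun τ =>
    le_trans (by positivity) (hlow (e τ))
  have hsymm : ∀ x y : EuclideanSpace ℝ (Fin d), ⟪P x, y⟫ = ⟪x, P y⟫ :=
    fun x y => hPsym.isSymmetric x y
  -- derivative of V
  have hVd : ∀ τ, s ≤ τ → HasDerivAt V (2 * ⟪P (e τ), h (x₀ τ) - h (x₁ τ)⟫) τ := by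
    intro τ hτ
    have hed : HasDerivAt e (h (x₀ τ) - h (x₁ τ)) τ := (hx₀d τ hτ).sub (hx₁d τ hτ)
    have hPe : HasDerivAt (fun τ => P (e τ)) (P (h (x₀ τ) - h (x₁ τ))) τ :=
      P.hasFDerivAt.comp_hasDerivAt τ hed
    have := hPe.inner ℝ hed
    refine this.congr_deriv ?_
    rw [hsymm, real_inner_comm]
    ring
  -- key derivative bound
  have hkey : ∀ τ, s ≤ τ →
      2 * ⟪P (e τ), h (x₀ τ) - h (x₁ τ)⟫ ≤ (κ - 1) * ‖e τ‖ ^ 2 := by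
    intro τ hτ
    set u := x₁ τ with hu
    set w := e τ with hw
    have hdiff : Differentiable ℝ h := hh.differentiable one_ne_zero
    set f : ℝ → ℝ := fun θ => 2 * ⟪P w, h (u + θ • w)⟫ with hf
    have hfd : ∀ θ : ℝ, HasDerivAt f (2 * ⟪P w, fderiv ℝ h (u + θ • w) w⟫) θ := by
      intro θ
      have hcurve : HasDerivAt (fun θ : ℝ => u + θ • w) w θ := by
        simpa using ((hasDerivAt_id θ).smul_const w).const_add u
      have hhd : HasDerivAt (fun θ : ℝ => h (u + θ • w))
          (fderiv ℝ h (u + θ • w) w) θ :=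
        (hdiff (u + θ • w)).hasFDerivAt.comp_hasDerivAt θ hcurve
      have := ((hasDerivAt_const θ (P w)).inner ℝ hhd).const_mul (2 : ℝ)
      simpa using this
    have hderiv_bound : ∀ θ ∈ Set.Icc (0:ℝ) 1,
        2 * ⟪P w, fderiv ℝ h (u + θ • w) w⟫ ≤ (κ - 1) * ‖w‖ ^ 2 := by
      intro θ hθ
      have hyN : u + θ • w ∈ N := by
        have := hN.add_smul_sub_mem (hx₁N τ hτ) (hx₀N τ hτ) hθ
        simpa [hu, hw, he] using this
      set y := u + θ • w with hy
      set D := fderiv ℝ h y with hD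
      set Z := ContinuousLinearMap.adjoint D ∘L P + P ∘L D +
        ContinuousLinearMap.id ℝ (EuclideanSpace ℝ (Fin d)) with hZdef
      have hZb : ‖Z‖ ≤ κ := hZ y hyN
      have hexp : ⟪Z w, w⟫ = 2 * ⟪P w, D w⟫ + ‖w‖ ^ 2 := by
        simp only [hZdef, ContinuousLinearMap.add_apply, ContinuousLinearMap.comp_apply,
          ContinuousLinearMap.id_apply, inner_add_left]
        rw [ContinuousLinearMap.adjoint_inner_left, real_inner_self_eq_norm_sq]
        have h5 : ⟪P (D w), w⟫ = ⟪P w, D w⟫ := by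
          rw [hsymm, real_inner_comm]
        rw [h5]; ring
      have hZw : ⟪Z w, w⟫ ≤ κ * ‖w‖ ^ 2 := by
        have h1 := real_inner_le_norm (Z w) w
        have h2 := Z.le_opNorm w
        nlinarith [norm_nonneg w, norm_nonneg (Z w),
          mul_le_mul_of_nonneg_right h2 (norm_nonneg w),
          mul_le_mul_of_nonneg_right (mul_le_mul_of_nonneg_right hZb (norm_nonneg w))
            (norm_nonneg w)]
      rw [hexp] at hZw
      linarith
    -- mean value argument
    set C := (κ - 1) * ‖w‖ ^ 2 with hC
    have hfdiff : Differentiable ℝ f := fun θ => (hfd θ).differentiableAt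
    have hmono : MonotoneOn (fun θ => C * θ - f θ) (Set.Icc (0:ℝ) 1) := by
      apply monotoneOn_of_deriv_nonneg (convex_Icc 0 1)
      · exact ((continuous_const.mul continuous_id).sub hfdiff.continuous).continuousOn
      · intro θ _
        exact (((hasDerivAt_id θ).const_mul C).sub (hfd θ)).differentiableAt.differentiableWithinAt
      · intro θ hθ
        rw [interior_Icc] at hθ
        have hd' : HasDerivAt (fun θ => C * θ - f θ)
            (C - 2 * ⟪P w, fderiv ℝ h (u + θ • w) w⟫) θ := by
          exact (((hasDerivAt_id θ).const_mul C).sub (hfd θ)).congr_deriv (by simp)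
        rw [hd'.deriv]
        have := hderiv_bound θ (Set.mem_Icc.mpr ⟨hθ.1.le, hθ.2.le⟩)
        linarith
    have hmv := hmono (Set.mem_Icc.mpr ⟨le_refl 0, zero_le_one⟩)
      (Set.mem_Icc.mpr ⟨zero_le_one, le_refl 1⟩) zero_le_one
    simp only [mul_zero, mul_one] at hmv
    have hf0 : f 0 = 2 * ⟪P w, h u⟫ := by simp [hf]
    have hf1 : f 1 = 2 * ⟪P w, h (x₀ τ)⟫ := by
      have huw : u + (1:ℝ) • w = x₀ τ := by
        simp only [one_smul, hu, hw, he]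
        abel
      simp only [hf, huw]
    rw [inner_sub_right]
    have hfin : f 1 - f 0 ≤ C := by linarith
    rw [hf0, hf1] at hfin
    rw [hC] at hfin
    linarith
  -- differential inequality for W
  set c := (1 - κ) / ‖P‖ with hc
  have hcpos : 0 < c := div_pos (by linarith [hκ.2]) hPnorm
  set W : ℝ → ℝ := fun τ => V τ * Real.exp (c * (τ - s)) with hW
  have hWd : ∀ τ, s ≤ τ → HasDerivAt W
      ((2 * ⟪P (e τ), h (x₀ τ) - h (x₁ τ)⟫ + c * V τ) * Real.exp (c * (τ - s))) τ := by
    intro τ hτ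
    have hexp : HasDerivAt (fun τ : ℝ => Real.exp (c * (τ - s)))
        (c * Real.exp (c * (τ - s))) τ := by
      have h1 : HasDerivAt (fun τ : ℝ => c * (τ - s)) c τ := by
        simpa using ((hasDerivAt_id τ).sub_const s).const_mul c
      simpa [mul_comm] using h1.exp
    have := (hVd τ hτ).mul hexp
    refine this.congr_deriv ?_
    ring
  have hWderiv_nonpos : ∀ τ, s ≤ τ →
      (2 * ⟪P (e τ), h (x₀ τ) - h (x₁ τ)⟫ + c * V τ) * Real.exp (c * (τ - s)) ≤ 0 := by
    intro τ hτ
    have h1 := hkey τ hτ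
    have h2 : V τ ≤ ‖P‖ * ‖e τ‖ ^ 2 := hupp (e τ)
    have h3 : c * V τ ≤ (1 - κ) * ‖e τ‖ ^ 2 := by
      rw [hc, div_mul_eq_mul_div, div_le_iff₀ hPnorm]
      nlinarith [hκ.2]
    have h4 : 2 * ⟪P (e τ), h (x₀ τ) - h (x₁ τ)⟫ + c * V τ ≤ 0 := by linarith
    exact mul_nonpos_of_nonpos_of_nonneg h4 (Real.exp_pos _).le
  have hanti : AntitoneOn W (Set.Ici s) := by
    apply antitoneOn_of_deriv_nonpos (convex_Ici s)
    · intro τ hτ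
      exact ((hWd τ hτ).continuousAt).continuousWithinAt
    · intro τ hτ
      rw [interior_Ici] at hτ
      exact (hWd τ (le_of_lt hτ)).differentiableAt.differentiableWithinAt
    · intro τ hτ
      rw [interior_Ici] at hτ
      rw [(hWd τ (le_of_lt hτ)).deriv]
      exact hWderiv_nonpos τ (le_of_lt hτ)
  intro t ht
  have hWt : W t ≤ W s := hanti Set.self_mem_Ici ht ht
  have hVt : V t ≤ V s * Real.exp (-(c * (t - s))) := by
    have h5 : V t * Real.exp (c * (t - s)) ≤ V s := by
      have hWs : W s = V s := by simp [hW]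
      rw [← hWs]; exact hWt
    rw [Real.exp_neg, ← div_eq_mul_inv, le_div_iff₀ (Real.exp_pos _)]
    exact h5
  -- final algebra
  have hchain : lmin * ‖e t‖ ^ 2 ≤ ‖P‖ * ‖e s‖ ^ 2 * Real.exp (-(c * (t - s))) := by
    have h1 := hlow (e t)
    have h2 : V s ≤ ‖P‖ * ‖e s‖ ^ 2 := hupp (e s)
    have h3 : V s * Real.exp (-(c * (t - s))) ≤
        ‖P‖ * ‖e s‖ ^ 2 * Real.exp (-(c * (t - s))) :=
      mul_le_mul_of_nonneg_right h2 (Real.exp_pos _).le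
    linarith
  rw [← hes]
  set R := Real.sqrt (‖P‖ / lmin) * ‖e s‖ * Real.exp (-((1 - κ) / (2 * ‖P‖)) * (t - s))
    with hR
  have hRnonneg : 0 ≤ R := mul_nonneg (mul_nonneg (Real.sqrt_nonneg _) (norm_nonneg _))
    (Real.exp_pos _).le
  have hsq : ‖e t‖ ^ 2 ≤ R ^ 2 := by
    have hRsq : R ^ 2 = (‖P‖ / lmin) * ‖e s‖ ^ 2 * Real.exp (-(c * (t - s))) := by
      rw [hR]
      have h1 : Real.sqrt (‖P‖ / lmin) ^ 2 = ‖P‖ / lmin :=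
        Real.sq_sqrt (by positivity)
      have h2 : Real.exp (-((1 - κ) / (2 * ‖P‖)) * (t - s)) ^ 2
          = Real.exp (-(c * (t - s))) := by
        rw [← Real.exp_nat_mul]
        congr 1
        rw [hc]
        push_cast
        field_simp
      rw [mul_pow, mul_pow, h1, h2]
    rw [hRsq, div_mul_eq_mul_div, div_mul_eq_mul_div, le_div_iff₀ hlpos]
    nlinarith [hchain]
  calc ‖e t‖ = Real.sqrt (‖e t‖ ^ 2) := (Real.sqrt_sq (norm_nonneg _)).symm
    _ ≤ Real.sqrt (R ^ 2) := Real.sqrt_le_sqrt hsq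
    _ = R := Real.sqrt_sq hRnonneg
end

section
/- Let A be a d×d real matrix and suppose there exist constants K̃ ≥ 1 and λ' > 0 such that ‖exp(At)‖ ≤ K̃ exp(−λ' t) for all t ≥ 0, where ‖·‖ is the operator norm. Then the integral P := ∫₀^∞ exp(Aᵀ t) exp(A t) dt converges, P is a symmetric positive definite matrix satisfying the Liapunov equation Aᵀ P + P A = −I (with I the d×d identity), and ‖P‖ ≤ K̃² / (2λ'). -/
open scoped RealInnerProductSpace
open MeasureTheory Set Filter Topology

set_option maxHeartbeats 1000000 in
set_option synthInstance.maxHeartbeats 1000000 in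
/-- Let A be a d×d real matrix (linear operator on ℝ^d) with ‖exp(At)‖ ≤ K̃ exp(−λ't)
for all t ≥ 0, K̃ ≥ 1, λ' > 0. Then P := ∫₀^∞ exp(Aᵀt) exp(At) dt converges, P is
symmetric positive definite, satisfies Aᵀ P + P A = −I, and ‖P‖ ≤ K̃²/(2λ'). -/
theorem stmt10 {d : ℕ}
    (A : EuclideanSpace ℝ (Fin d) →L[ℝ] EuclideanSpace ℝ (Fin d))
    (Ktil lam' : ℝ) (hK : 1 ≤ Ktil) (hlam' : 0 < lam')
    (hbound : ∀ t : ℝ, 0 ≤ t →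
      ‖NormedSpace.exp (t • A)‖ ≤ Ktil * Real.exp (-lam' * t)) :
    MeasureTheory.IntegrableOn
      (fun t : ℝ =>
        NormedSpace.exp (t • ContinuousLinearMap.adjoint A) ∘L NormedSpace.exp (t • A))
      (Set.Ici 0) MeasureTheory.volume ∧
    IsSelfAdjoint
      (∫ t in Set.Ici (0 : ℝ),
        NormedSpace.exp (t • ContinuousLinearMap.adjoint A) ∘L NormedSpace.exp (t • A)) ∧
    (∀ x : EuclideanSpace ℝ (Fin d), x ≠ 0 →
      0 < ⟪(∫ t in Set.Ici (0 : ℝ),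
        NormedSpace.exp (t • ContinuousLinearMap.adjoint A) ∘L NormedSpace.exp (t • A)) x,
        x⟫) ∧
    ContinuousLinearMap.adjoint A ∘L
        (∫ t in Set.Ici (0 : ℝ),
          NormedSpace.exp (t • ContinuousLinearMap.adjoint A) ∘L NormedSpace.exp (t • A)) +
      (∫ t in Set.Ici (0 : ℝ),
          NormedSpace.exp (t • ContinuousLinearMap.adjoint A) ∘L NormedSpace.exp (t • A)) ∘L A =
      -ContinuousLinearMap.id ℝ (EuclideanSpace ℝ (Fin d)) ∧
    ‖∫ t in Set.Ici (0 : ℝ),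
        NormedSpace.exp (t • ContinuousLinearMap.adjoint A) ∘L NormedSpace.exp (t • A)‖ ≤
      Ktil ^ 2 / (2 * lam') := by
  have hlam2 : (0:ℝ) < 2 * lam' := by linarith
  set F : ℝ → (EuclideanSpace ℝ (Fin d) →L[ℝ] EuclideanSpace ℝ (Fin d)) :=
    fun t => NormedSpace.exp (t • ContinuousLinearMap.adjoint A) ∘L NormedSpace.exp (t • A)
    with hF
  have hstar : ∀ t : ℝ, NormedSpace.exp (t • ContinuousLinearMap.adjoint A)
      = star (NormedSpace.exp (t • A)) := by
    intro t
    rw [NormedSpace.star_exp, star_smul, star_trivial, ContinuousLinearMap.star_eq_adjoint]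
  have hadj : ∀ t : ℝ, NormedSpace.exp (t • ContinuousLinearMap.adjoint A)
      = ContinuousLinearMap.adjoint (NormedSpace.exp (t • A)) := by
    intro t
    rw [hstar t, ContinuousLinearMap.star_eq_adjoint]
  have hFmul : ∀ t : ℝ, F t
      = NormedSpace.exp (t • ContinuousLinearMap.adjoint A) * NormedSpace.exp (t • A) :=
    fun t => rfl
  have hFnorm : ∀ t : ℝ, 0 ≤ t → ‖F t‖ ≤ Ktil ^ 2 * Real.exp (-(2 * lam') * t) := by
    intro t ht
    have he : (0:ℝ) ≤ ‖NormedSpace.exp (t • A)‖ := norm_nonneg _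
    calc ‖F t‖ ≤ ‖NormedSpace.exp (t • ContinuousLinearMap.adjoint A)‖
        * ‖NormedSpace.exp (t • A)‖ := ContinuousLinearMap.opNorm_comp_le _ _
      _ = ‖NormedSpace.exp (t • A)‖ * ‖NormedSpace.exp (t • A)‖ := by
          rw [hadj t, LinearIsometryEquiv.norm_map]
      _ ≤ (Ktil * Real.exp (-lam' * t)) * (Ktil * Real.exp (-lam' * t)) := by
          have hb := hbound t ht
          exact mul_le_mul hb hb he (le_trans (by positivity) hb)
      _ = Ktil ^ 2 * (Real.exp (-lam' * t) * Real.exp (-lam' * t)) := by ring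
      _ = Ktil ^ 2 * Real.exp (-(2 * lam') * t) := by
          rw [← Real.exp_add]; ring_nf
  have hFderiv : ∀ t : ℝ, HasDerivAt F
      (ContinuousLinearMap.adjoint A * F t + F t * A) t := by
    intro t
    have h1 := hasDerivAt_exp_smul_const' (𝕂 := ℝ) (ContinuousLinearMap.adjoint A) t
    have h2 := hasDerivAt_exp_smul_const (𝕂 := ℝ) A t
    have h3 := h1.mul h2
    simp only [hFmul, mul_assoc] at h3 ⊢
    exact h3
  have hFcont : Continuous F :=
    continuous_iff_continuousAt.2 fun t => (hFderiv t).continuousAt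
  have hbound2 : IntegrableOn (fun t : ℝ => Ktil ^ 2 * Real.exp (-(2 * lam') * t))
      (Ici 0) volume := by
    rw [integrableOn_Ici_iff_integrableOn_Ioi]
    exact (exp_neg_integrableOn_Ioi 0 hlam2).const_mul _
  have hFint : IntegrableOn F (Ici 0) volume := by
    refine Integrable.mono' hbound2 hFcont.aestronglyMeasurable.restrict ?_
    filter_upwards [ae_restrict_mem measurableSet_Ici] with t ht using hFnorm t ht
  set P := ∫ t in Set.Ici (0:ℝ), F t with hP
  have hPstar : star P = P := by
    have h1 : ∀ t : ℝ, star (F t) = F t := by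
      intro t
      rw [hFmul t, star_mul, hstar t, star_star, ← hstar t, ← hFmul t]
    calc star P = (starL' ℝ : (EuclideanSpace ℝ (Fin d) →L[ℝ] EuclideanSpace ℝ (Fin d)) ≃L[ℝ] _) P := rfl
      _ = ∫ t in Set.Ici (0:ℝ), (starL' ℝ :
            (EuclideanSpace ℝ (Fin d) →L[ℝ] EuclideanSpace ℝ (Fin d)) ≃L[ℝ] _) (F t) :=
          (ContinuousLinearEquiv.integral_comp_comm _ _).symm
      _ = ∫ t in Set.Ici (0:ℝ), F t := by
          refine integral_congr_ae (Eventually.of_forall fun t => ?_)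
          exact h1 t
      _ = P := rfl
  refine ⟨hFint, hPstar, ?_, ?_, ?_⟩
  · -- positive definiteness
    intro x hx
    have hL : ∀ Q : EuclideanSpace ℝ (Fin d) →L[ℝ] EuclideanSpace ℝ (Fin d),
        ((innerSL ℝ x).comp (ContinuousLinearMap.apply ℝ (EuclideanSpace ℝ (Fin d)) x)) Q
          = ⟪x, Q x⟫ := fun Q => rfl
    have key : ⟪P x, x⟫ = ∫ t in Set.Ici (0:ℝ), ‖NormedSpace.exp (t • A) x‖ ^ 2 := by
      rw [real_inner_comm, ← hL P,
        ← ((innerSL ℝ x).comp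
            (ContinuousLinearMap.apply ℝ (EuclideanSpace ℝ (Fin d)) x)).integral_comp_comm hFint]
      refine integral_congr_ae (Eventually.of_forall fun t => ?_)
      show ⟪x, (NormedSpace.exp (t • ContinuousLinearMap.adjoint A))
          (NormedSpace.exp (t • A) x)⟫ = _
      rw [hstar t, ContinuousLinearMap.star_eq_adjoint,
        ContinuousLinearMap.adjoint_inner_right, real_inner_self_eq_norm_sq]
    rw [key]
    have hpos : ∀ t : ℝ, 0 < ‖NormedSpace.exp (t • A) x‖ ^ 2 := by
      intro t
      have hne : NormedSpace.exp (t • A) x ≠ 0 := by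
        intro h0
        obtain ⟨u, hu⟩ := NormedSpace.isUnit_exp_of_mem_ball (𝕂 := ℝ) (x := t • A)
          ((NormedSpace.expSeries_radius_eq_top ℝ
            (EuclideanSpace ℝ (Fin d) →L[ℝ] EuclideanSpace ℝ (Fin d))).symm ▸ edist_lt_top _ _)
        have : x = (↑u⁻¹ : EuclideanSpace ℝ (Fin d) →L[ℝ] EuclideanSpace ℝ (Fin d))
            ((↑u : EuclideanSpace ℝ (Fin d) →L[ℝ] EuclideanSpace ℝ (Fin d)) x) := by
          rw [show (↑u⁻¹ : EuclideanSpace ℝ (Fin d) →L[ℝ] EuclideanSpace ℝ (Fin d))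
              ((↑u : EuclideanSpace ℝ (Fin d) →L[ℝ] EuclideanSpace ℝ (Fin d)) x)
              = ((↑u⁻¹ * ↑u : EuclideanSpace ℝ (Fin d) →L[ℝ] EuclideanSpace ℝ (Fin d))) x from rfl,
            u.inv_mul]
          rfl
        rw [hu, h0, map_zero] at this
        exact hx this
      exact pow_pos (norm_pos_iff.2 hne) 2
    have hint2 : IntegrableOn (fun t : ℝ => ‖NormedSpace.exp (t • A) x‖ ^ 2) (Ici 0) volume := by
      have := ((innerSL ℝ x).comp
          (ContinuousLinearMap.apply ℝ (EuclideanSpace ℝ (Fin d)) x)).integrable_comp hFint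
      refine this.congr (Eventually.of_forall fun t => ?_)
      show ⟪x, (NormedSpace.exp (t • ContinuousLinearMap.adjoint A))
          (NormedSpace.exp (t • A) x)⟫ = _
      rw [hstar t, ContinuousLinearMap.star_eq_adjoint,
        ContinuousLinearMap.adjoint_inner_right, real_inner_self_eq_norm_sq]
    rw [setIntegral_pos_iff_support_of_nonneg_ae
      (Eventually.of_forall fun t => (hpos t).le) hint2]
    have hsupp : Function.support (fun t : ℝ => ‖NormedSpace.exp (t • A) x‖ ^ 2) = univ :=
      Set.eq_univ_of_forall fun t => (hpos t).ne'
    rw [hsupp, univ_inter, Real.volume_Ici]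
    exact ENNReal.zero_lt_top
  · -- Liapunov equation
    have hz1 : (0:ℝ) • A = 0 := zero_smul ℝ A
    have hz2 : (0:ℝ) • ContinuousLinearMap.adjoint A = 0 := zero_smul ℝ _
    have h01 : NormedSpace.exp ((0:ℝ) • A) = 1 := by
      rw [hz1, NormedSpace.exp_zero]
    have h02 : NormedSpace.exp ((0:ℝ) • ContinuousLinearMap.adjoint A) = 1 := by
      rw [hz2, NormedSpace.exp_zero]
    have hF0 : F 0 = 1 := by
      rw [hFmul 0, h01, h02, one_mul]
    have htend : Tendsto F atTop (𝓝 0) := by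
      refine squeeze_zero_norm' (a := fun t : ℝ => Ktil ^ 2 * Real.exp (-(2 * lam') * t)) ?_ ?_
      · filter_upwards [eventually_ge_atTop (0:ℝ)] with t ht using hFnorm t ht
      · have h1 : Tendsto (fun t : ℝ => Real.exp (-(2 * lam') * t)) atTop (𝓝 0) := by
          have h2 : Tendsto (fun t : ℝ => (2 * lam') * t) atTop atTop :=
            (tendsto_const_mul_atTop_of_pos hlam2).2 tendsto_id
          simpa using h2
        simpa using h1.const_mul (Ktil ^ 2)
    set cL := ContinuousLinearMap.compL ℝ (EuclideanSpace ℝ (Fin d)) (EuclideanSpace ℝ (Fin d))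
      (EuclideanSpace ℝ (Fin d)) with hcL
    have hint1 : Integrable (fun t : ℝ => ContinuousLinearMap.adjoint A * F t)
        (volume.restrict (Ioi 0)) :=
      (cL (ContinuousLinearMap.adjoint A)).integrable_comp (hFint.mono_set Ioi_subset_Ici_self)
    have hint2 : Integrable (fun t : ℝ => F t * A) (volume.restrict (Ioi 0)) :=
      (cL.flip A).integrable_comp (hFint.mono_set Ioi_subset_Ici_self)
    have hint1' : Integrable (fun t : ℝ => ContinuousLinearMap.adjoint A * F t)
        (volume.restrict (Ici 0)) :=
      (cL (ContinuousLinearMap.adjoint A)).integrable_comp hFint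
    have hint2' : Integrable (fun t : ℝ => F t * A) (volume.restrict (Ici 0)) :=
      (cL.flip A).integrable_comp hFint
    have key : (∫ t in Ioi (0:ℝ), (ContinuousLinearMap.adjoint A * F t + F t * A)) = 0 - F 0 :=
      integral_Ioi_of_hasDerivAt_of_tendsto' (fun t _ => hFderiv t) (hint1.add hint2) htend
    have hPA1 : ContinuousLinearMap.adjoint A ∘L P
        = ∫ t in Set.Ici (0:ℝ), ContinuousLinearMap.adjoint A * F t :=
      ((cL (ContinuousLinearMap.adjoint A)).integral_comp_comm hFint).symm
    have hPA2 : P ∘L A = ∫ t in Set.Ici (0:ℝ), F t * A :=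
      ((cL.flip A).integral_comp_comm hFint).symm
    rw [hPA1, hPA2, ← integral_add hint1' hint2', integral_Ici_eq_integral_Ioi, key, hF0]
    simp [ContinuousLinearMap.one_def]
  · -- norm bound
    calc ‖P‖ ≤ ∫ t in Set.Ici (0:ℝ), ‖F t‖ := norm_integral_le_integral_norm _
      _ ≤ ∫ t in Set.Ici (0:ℝ), Ktil ^ 2 * Real.exp (-(2 * lam') * t) :=
          setIntegral_mono_on hFint.norm hbound2 measurableSet_Ici fun t ht => hFnorm t ht
      _ = Ktil ^ 2 * ∫ t in Set.Ici (0:ℝ), Real.exp (-(2 * lam') * t) := integral_const_mul _ _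
      _ = Ktil ^ 2 / (2 * lam') := by
          rw [MeasureTheory.integral_Ici_eq_integral_Ioi]
          have : (∫ t in Ioi (0:ℝ), Real.exp (-(2 * lam') * t))
              = (2 * lam')⁻¹ • ∫ t in Ioi ((2 * lam') * 0), Real.exp (-t) := by
            rw [← integral_comp_mul_left_Ioi (fun u => Real.exp (-u)) 0 hlam2]
            simp [neg_mul]
          rw [this]
          simp only [mul_zero, integral_exp_neg_Ioi_zero, smul_eq_mul, mul_one]
          rw [div_eq_mul_inv]
end
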